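/- arXiv:1707.00520 — 8 statements merged into one kernel-verified Lean document; each statement's English description precedes it below -/
import Mathlib

section
/- High-temperature expansion of the Ising model (van der Waerden). Let G=(V,E) be a finite graph, β > 0 and A ⊆ V. Then ∑_{σ ∈ {−1,+1}^V} σ_A · exp(−β H_G(σ)) = 2^{|V|} · cosh(β)^{|E|} · ∑_{η ∈ {0,1}^E : ∂η = A} tanh(β)^{o(η)}, where the sum on the right runs over all edge subsets η whose odd-degree vertex set is exactly A. -/
/-!
For a bond `s = σ_x σ_y ∈ {±1}` one has `e^{βs} = cosh β (1 + s tanh β)`. Expanding the product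
of these factors over the edges turns the Boltzmann weight into a sum over edge sets `η` of
`tanh(β)^{o(η)} ∏_{xy ∈ η} σ_x σ_y`; multiplied by `σ_A` this is the monomial
`∏_x σ_x^{1_A(x) + deg_η(x)}`. Summing a monomial over all configurations gives `2^{|V|}` when
every exponent is even, i.e. when `∂η = A`, and `0` otherwise.
-/

open scoped BigOperators Classical

namespace Stmt0

variable {V E : Type} [Fintype V] [DecidableEq V] [Fintype E] [DecidableEq E]

/-- The real value of a Boolean spin: `true ↦ +1`, `false ↦ -1`. -/
noncomputable def sgn (b : Bool) : ℝ := if b then 1 else -1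

/-- `σ_A = ∏_{x ∈ A} σ_x`. -/
noncomputable def corr (A : Finset V) (σ : V → Bool) : ℝ := ∏ x ∈ A, sgn (σ x)

/-- Boltzmann weight `exp(-β H_G(σ)) = exp(β ∑_{xy ∈ E} σ_x σ_y)`, where the graph `G`
has edge `e` joining `gfst e` and `gsnd e`. -/
noncomputable def boltz (gfst gsnd : E → V) (β : ℝ) (σ : V → Bool) : ℝ :=
  Real.exp (β * ∑ e : E, sgn (σ (gfst e)) * sgn (σ (gsnd e)))

/-- `o(η)`: the number of open edges of `η`. -/
noncomputable def openCount (η : E → Bool) : ℕ :=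
  (Finset.univ.filter fun e : E => η e = true).card

/-- `∂η`: the set of vertices at which the subgraph `η` has odd degree. -/
noncomputable def sources (gfst gsnd : E → V) (η : E → Bool) : Finset V :=
  Finset.univ.filter fun x : V =>
    Odd (∑ e : E, if η e = true then
      ((if gfst e = x then 1 else 0) + (if gsnd e = x then (1 : ℕ) else 0)) else 0)

end Stmt0

namespace Stmt0

section Expansion

variable {V E : Type}

theorem sgn_eq_one_or_neg_one (b : Bool) : sgn b = 1 ∨ sgn b = -1 := by
  cases b <;> simp [sgn]

theorem sum_sgn_pow (n : ℕ) : ∑ b : Bool, sgn b ^ n = if Even n then 2 else 0 := by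
  rcases Nat.even_or_odd n with h | h
  · simp [sgn, h.neg_one_pow, h]
  · simp [sgn, h.neg_one_pow, Nat.not_even_iff_odd.mpr h]

theorem sum_prod_sgn_pow [Fintype V] [DecidableEq V] (n : V → ℕ) :
    ∑ σ : V → Bool, ∏ x, sgn (σ x) ^ n x =
      if ∀ x, Even (n x) then 2 ^ Fintype.card V else 0 := by
  rw [← Fintype.prod_sum (fun x b => sgn b ^ n x)]
  simp only [sum_sgn_pow]
  split_ifs with h
  · simp [h, Finset.card_univ]
  · obtain ⟨x, hx⟩ := not_forall.mp h
    exact Finset.prod_eq_zero (Finset.mem_univ x) (if_neg hx)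

theorem exp_mul_eq_cosh_mul_one_add_tanh_mul (β : ℝ) {s : ℝ} (hs : s = 1 ∨ s = -1) :
    Real.exp (β * s) = Real.cosh β * (1 + Real.tanh β * s) := by
  have hsinh : Real.cosh β * Real.tanh β = Real.sinh β := by
    rw [Real.tanh_eq_sinh_div_cosh, mul_div_cancel₀ _ (Real.cosh_pos β).ne']
  rcases hs with rfl | rfl
  · rw [mul_one, mul_one, mul_add, mul_one, hsinh, Real.cosh_add_sinh]
  · rw [mul_neg_one, mul_neg_one, ← sub_eq_add_neg, mul_sub, mul_one, hsinh,
      Real.cosh_sub_sinh]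

noncomputable def edgeSpin (gfst gsnd : E → V) (σ : V → Bool) (e : E) : ℝ :=
  sgn (σ (gfst e)) * sgn (σ (gsnd e))

theorem boltz_eq_cosh_pow_mul_prod [Fintype E] (gfst gsnd : E → V) (β : ℝ) (σ : V → Bool) :
    boltz gfst gsnd β σ =
      Real.cosh β ^ Fintype.card E * ∏ e, (1 + Real.tanh β * edgeSpin gfst gsnd σ e) := by
  have hspin (e : E) : edgeSpin gfst gsnd σ e = 1 ∨ edgeSpin gfst gsnd σ e = -1 := by
    rcases sgn_eq_one_or_neg_one (σ (gfst e)) with h₁ | h₁ <;>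
      rcases sgn_eq_one_or_neg_one (σ (gsnd e)) with h₂ | h₂ <;>
      simp [edgeSpin, h₁, h₂]
  rw [boltz, Finset.mul_sum, Real.exp_sum, ← Finset.card_univ, ← Finset.prod_const,
    ← Finset.prod_mul_distrib]
  exact Finset.prod_congr rfl fun e _ => exp_mul_eq_cosh_mul_one_add_tanh_mul β (hspin e)

theorem prod_one_add_mul_eq_sum {R : Type*} [CommSemiring R] [Fintype E] [DecidableEq E] (t : R)
    (w : E → R) :
    ∏ e, (1 + t * w e) =
      ∑ η : E → Bool, t ^ openCount η * ∏ e ∈ Finset.univ.filter (η · = true), w e := by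
  have hbool (e : E) : 1 + t * w e = ∑ b : Bool, if b then t * w e else 1 := by
    simp [add_comm]
  simp only [hbool, Fintype.prod_sum, ← Finset.prod_filter, Finset.prod_mul_distrib,
    Finset.prod_const, openCount]

def degree [Fintype E] [DecidableEq V] (gfst gsnd : E → V) (η : E → Bool) (x : V) : ℕ :=
  ∑ e : E, if η e = true then
    ((if gfst e = x then 1 else 0) + (if gsnd e = x then (1 : ℕ) else 0)) else 0

theorem corr_eq_prod_pow [Fintype V] [DecidableEq V] (A : Finset V) (σ : V → Bool) :
    corr A σ = ∏ x, sgn (σ x) ^ (if x ∈ A then 1 else 0) := by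
  simp only [pow_ite, pow_one, pow_zero, Finset.prod_ite_mem, Finset.univ_inter, corr]

theorem prod_edgeSpin_eq_prod_pow_degree [Fintype V] [DecidableEq V] [Fintype E]
    (gfst gsnd : E → V) (σ : V → Bool) (η : E → Bool) :
    ∏ e ∈ Finset.univ.filter (η · = true), edgeSpin gfst gsnd σ e =
      ∏ x, sgn (σ x) ^ degree gfst gsnd η x := by
  have hedge (e : E) : edgeSpin gfst gsnd σ e =
      ∏ x, sgn (σ x) ^ ((if gfst e = x then 1 else 0) + (if gsnd e = x then 1 else 0)) := by
    simp only [pow_add, pow_ite, pow_one, pow_zero, Finset.prod_mul_distrib,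
      Finset.prod_ite_eq, Finset.mem_univ, if_true, edgeSpin]
  rw [Finset.prod_congr rfl fun e _ => hedge e, Finset.prod_comm]
  refine Finset.prod_congr rfl fun x _ => ?_
  rw [Finset.prod_pow_eq_pow_sum, degree, Finset.sum_filter]

theorem mem_sources [Fintype V] [DecidableEq V] [Fintype E] (gfst gsnd : E → V)
    (η : E → Bool) (x : V) : x ∈ sources gfst gsnd η ↔ Odd (degree gfst gsnd η x) := by
  simp [sources, degree]

theorem sources_eq_iff [Fintype V] [DecidableEq V] [Fintype E] (gfst gsnd : E → V)
    (η : E → Bool) (A : Finset V) :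
    sources gfst gsnd η = A ↔ ∀ x, Even ((if x ∈ A then 1 else 0) + degree gfst gsnd η x) := by
  refine Finset.ext_iff.trans (forall_congr' fun x => ?_)
  rw [mem_sources]
  by_cases hx : x ∈ A
  · simp [hx, Nat.even_add_one, add_comm 1]
  · simp [hx]

theorem sum_corr_mul_prod_edgeSpin [Fintype V] [DecidableEq V] [Fintype E]
    (gfst gsnd : E → V) (A : Finset V) (η : E → Bool) :
    ∑ σ : V → Bool, corr A σ * ∏ e ∈ Finset.univ.filter (η · = true), edgeSpin gfst gsnd σ e =
      if sources gfst gsnd η = A then 2 ^ Fintype.card V else 0 := by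
  simp only [corr_eq_prod_pow, prod_edgeSpin_eq_prod_pow_degree, ← Finset.prod_mul_distrib,
    ← pow_add, sum_prod_sgn_pow]
  exact if_congr (sources_eq_iff gfst gsnd η A).symm rfl rfl

end Expansion

variable {V E : Type} [Fintype V] [DecidableEq V] [Fintype E] [DecidableEq E]

theorem high_temperature_expansion_general (gfst gsnd : E → V) (β : ℝ) (A : Finset V) :
    (∑ σ : V → Bool, corr A σ * boltz gfst gsnd β σ)
      = 2 ^ (Fintype.card V) * Real.cosh β ^ (Fintype.card E) *
        ∑ η ∈ Finset.univ.filter (fun η : E → Bool => sources gfst gsnd η = A),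
          Real.tanh β ^ openCount η := by
  calc (∑ σ : V → Bool, corr A σ * boltz gfst gsnd β σ)
      = ∑ σ : V → Bool, ∑ η : E → Bool,
          Real.cosh β ^ Fintype.card E * Real.tanh β ^ openCount η *
          (corr A σ * ∏ e ∈ Finset.univ.filter (η · = true), edgeSpin gfst gsnd σ e) := by
        simp only [boltz_eq_cosh_pow_mul_prod, prod_one_add_mul_eq_sum, Finset.mul_sum]
        exact Finset.sum_congr rfl fun σ _ => Finset.sum_congr rfl fun η _ => by ring
    _ = ∑ η : E → Bool, Real.cosh β ^ Fintype.card E * Real.tanh β ^ openCount η *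
          if sources gfst gsnd η = A then 2 ^ Fintype.card V else 0 := by
        rw [Finset.sum_comm]
        simp only [← Finset.mul_sum, sum_corr_mul_prod_edgeSpin]
    _ = _ := by
        rw [Finset.sum_filter, Finset.mul_sum]
        refine Finset.sum_congr rfl fun η _ => ?_
        split_ifs <;> ring

/-- High-temperature expansion of the Ising model (van der Waerden):
`∑_σ σ_A e^{-βH_G(σ)} = 2^{|V|} cosh(β)^{|E|} ∑_{∂η = A} tanh(β)^{o(η)}`. -/
theorem high_temperature_expansion (gfst gsnd : E → V) (β : ℝ) (hβ : 0 < β) (A : Finset V) :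
    (∑ σ : V → Bool, corr A σ * boltz gfst gsnd β σ)
      = 2 ^ (Fintype.card V) * Real.cosh β ^ (Fintype.card E) *
        ∑ η ∈ Finset.univ.filter (fun η : E → Bool => sources gfst gsnd η = A),
          Real.tanh β ^ openCount η :=
  high_temperature_expansion_general gfst gsnd β A

end Stmt0
end

section
/- Random-current expansion of the Ising partition function. Let G=(V,E) be a finite graph, β > 0 and A ⊆ V. Then ∑_{σ ∈ {−1,+1}^V} σ_A · exp(−β H_G(σ)) = 2^{|V|} · ∑_{n : ∂n = A} w_β(n), where the (absolutely convergent) sum on the right runs over all currents n : E → ℕ whose source set is exactly A. -/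
/-!
Expanding each edge factor `exp (β σ_x σ_y)` in its power series writes the Boltzmann weight as
`∑_n w_β(n) ∏_e (σ_x σ_y)^{n_e}`, a sum over currents that converges absolutely and may therefore
be exchanged with the finite sum over spins. Regrouped by vertices,
`σ_A ∏_e (σ_x σ_y)^{n_e} = ∏_x σ_x^{1_A(x) + deg_n(x)}`, and summing this over `σ` gives `2^{|V|}`
when every exponent is even, that is when `∂n = A`, and `0` otherwise.
-/

open scoped BigOperators Classical

namespace Stmt1

variable {V E : Type} [Fintype V] [DecidableEq V] [Fintype E] [DecidableEq E]

/-- The real value of a Boolean spin: `true ↦ +1`, `false ↦ -1`. -/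
noncomputable def sgn (b : Bool) : ℝ := if b then 1 else -1

/-- `σ_A = ∏_{x ∈ A} σ_x`. -/
noncomputable def corr (A : Finset V) (σ : V → Bool) : ℝ := ∏ x ∈ A, sgn (σ x)

/-- Boltzmann weight `exp(-β H_G(σ)) = exp(β ∑_{xy ∈ E} σ_x σ_y)`. -/
noncomputable def boltz (gfst gsnd : E → V) (β : ℝ) (σ : V → Bool) : ℝ :=
  Real.exp (β * ∑ e : E, sgn (σ (gfst e)) * sgn (σ (gsnd e)))

/-- `∂n`: the set of sources of a current `n : E → ℕ`, i.e. the vertices `x` at which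
`∑_{e ∋ x} n_e` is odd. -/
noncomputable def sourcesN (gfst gsnd : E → V) (n : E → ℕ) : Finset V :=
  Finset.univ.filter fun x : V =>
    Odd (∑ e : E, n e * ((if gfst e = x then 1 else 0) + (if gsnd e = x then (1 : ℕ) else 0)))

/-- `w_β(n) = ∏_{e ∈ E} β^{n_e} / n_e!`, the weight of a current. -/
noncomputable def w (β : ℝ) (n : E → ℕ) : ℝ :=
  ∏ e : E, β ^ (n e) / (Nat.factorial (n e))

section PiProduct

variable {κ R : Type*} [NormedCommRing R] [CompleteSpace R]

-- Norm-summability is carried through the induction: it is what licenses the Cauchy product.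
theorem Fin.summable_norm_prod_and_hasSum_prod (k : ℕ) (f : Fin k → κ → R)
    (hf : ∀ i, Summable fun m => ‖f i m‖) :
    (Summable fun n : Fin k → κ => ‖∏ i, f i (n i)‖) ∧
      HasSum (fun n : Fin k → κ => ∏ i, f i (n i)) (∏ i, ∑' m, f i m) := by
  induction k with
  | zero =>
    simp only [Finset.univ_eq_empty, Finset.prod_empty]
    exact ⟨.of_finite, by simp⟩
  | succ k ih =>
    obtain ⟨hnorm, hsum⟩ := ih (fun i => f i.succ) (fun i => hf i.succ)
    have hcons : ∀ p : κ × (Fin k → κ),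
        ∏ i, f i (Fin.consEquiv (fun _ => κ) p i) = f 0 p.1 * ∏ i, f i.succ (p.2 i) := by
      rintro ⟨m, n⟩
      simp [Fin.consEquiv, Fin.prod_univ_succ]
    refine ⟨?_, ?_⟩
    · rw [← (Fin.consEquiv fun _ => κ).summable_iff]
      simpa only [Function.comp_def, hcons] using (hf 0).mul_norm hnorm
    · rw [← (Fin.consEquiv fun _ => κ).hasSum_iff, Fin.prod_univ_succ, hsum.tsum_eq.symm]
      simp only [Function.comp_def, hcons, tsum_mul_tsum_of_summable_norm (hf 0) hnorm]
      exact (summable_mul_of_summable_norm (hf 0) hnorm).hasSum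

theorem hasSum_prod_of_summable_norm {ι : Type*} [Fintype ι] (f : ι → κ → R)
    (hf : ∀ i, Summable fun m => ‖f i m‖) :
    HasSum (fun n : ι → κ => ∏ i, f i (n i)) (∏ i, ∑' m, f i m) := by
  let e := Fintype.equivFin ι
  have h := (Fin.summable_norm_prod_and_hasSum_prod _ _ fun i => hf (e.symm i)).2
  rw [← (e.arrowCongr (.refl κ)).hasSum_iff, e.symm.prod_comp (fun i => ∑' m, f i m)] at h
  convert h using 2 with n
  exact (e.symm.prod_comp fun i => f i (n i)).symm

end PiProduct

noncomputable def currentDegree (gfst gsnd : E → V) (n : E → ℕ) (x : V) : ℕ :=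
  ∑ e : E, n e * ((if gfst e = x then 1 else 0) + (if gsnd e = x then 1 else 0))

omit [DecidableEq E] in
theorem mem_sourcesN {gfst gsnd : E → V} {n : E → ℕ} {x : V} :
    x ∈ sourcesN gfst gsnd n ↔ Odd (currentDegree gfst gsnd n x) := by
  simp [sourcesN, currentDegree]

omit [DecidableEq E] in
theorem prod_edge_pow_eq_prod_pow_currentDegree {M : Type*} [CommMonoid M]
    (gfst gsnd : E → V) (n : E → ℕ) (s : V → M) :
    ∏ e, (s (gfst e) * s (gsnd e)) ^ n e = ∏ x, s x ^ currentDegree gfst gsnd n x := by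
  simp only [currentDegree, ← Finset.prod_pow_eq_pow_sum]
  rw [Finset.prod_comm]
  refine Finset.prod_congr rfl fun e _ => ?_
  simp only [mul_add, pow_add]
  rw [Finset.prod_mul_distrib, mul_pow]
  congr 1 <;> simp [mul_ite, pow_ite]

theorem sum_bool_sgn_pow (k : ℕ) : ∑ b : Bool, sgn b ^ k = if Even k then 2 else 0 := by
  rcases Nat.even_or_odd k with hk | hk
  · simp [sgn, hk, hk.neg_one_pow, one_add_one_eq_two]
  · simp [sgn, hk.neg_one_pow, Nat.not_even_iff_odd.mpr hk]

theorem sum_prod_sgn_pow (k : V → ℕ) :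
    ∑ σ : V → Bool, ∏ x, sgn (σ x) ^ k x = if ∀ x, Even (k x) then 2 ^ Fintype.card V else 0 := by
  rw [← Fintype.prod_sum fun x b => sgn b ^ k x]
  simp only [sum_bool_sgn_pow, Finset.prod_ite_zero, Finset.mem_univ, true_imp_iff,
    Finset.prod_const, Finset.card_univ]

theorem corr_eq_prod_pow (A : Finset V) (σ : V → Bool) :
    corr A σ = ∏ x, sgn (σ x) ^ (if x ∈ A then 1 else 0) := by
  simp [corr, pow_ite, Finset.prod_ite_mem]

omit [DecidableEq E] in
theorem sum_corr_mul_prod_edge_pow (gfst gsnd : E → V) (A : Finset V) (n : E → ℕ) :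
    ∑ σ : V → Bool, corr A σ * ∏ e, (sgn (σ (gfst e)) * sgn (σ (gsnd e))) ^ n e
      = if sourcesN gfst gsnd n = A then 2 ^ Fintype.card V else 0 := by
  have hσ : ∀ σ : V → Bool, corr A σ * ∏ e, (sgn (σ (gfst e)) * sgn (σ (gsnd e))) ^ n e
      = ∏ x, sgn (σ x) ^ ((if x ∈ A then 1 else 0) + currentDegree gfst gsnd n x) := fun σ => by
    rw [corr_eq_prod_pow, prod_edge_pow_eq_prod_pow_currentDegree (s := fun x => sgn (σ x)),
      ← Finset.prod_mul_distrib]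
    simp only [pow_add]
  rw [Finset.sum_congr rfl fun σ _ => hσ σ, sum_prod_sgn_pow]
  refine if_congr ?_ rfl rfl
  rw [Finset.ext_iff]
  refine forall_congr' fun x => ?_
  rw [mem_sourcesN]
  split_ifs with hx <;> simp [hx, Nat.even_add_one, parity_simps]

omit [DecidableEq E] in
open Nat in
theorem prod_mul_pow_div_factorial (β : ℝ) (a : E → ℝ) (n : E → ℕ) :
    ∏ e, (β * a e) ^ n e / (n e)! = w β n * ∏ e, a e ^ n e := by
  rw [w, ← Finset.prod_mul_distrib]
  exact Finset.prod_congr rfl fun e _ => by ring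

omit [Fintype V] [DecidableEq V] [DecidableEq E] in
open Nat in
theorem hasSum_boltz (gfst gsnd : E → V) (β : ℝ) (σ : V → Bool) :
    HasSum (fun n : E → ℕ => ∏ e, (β * (sgn (σ (gfst e)) * sgn (σ (gsnd e)))) ^ n e / (n e)!)
      (boltz gfst gsnd β σ) := by
  have hexp : ∀ x : ℝ, Real.exp x = ∑' m, x ^ m / m ! := fun x => by
    rw [Real.exp_eq_exp_ℝ, NormedSpace.exp_eq_tsum_div]
  rw [boltz, Finset.mul_sum, Real.exp_sum]
  simp only [hexp]
  exact hasSum_prod_of_summable_norm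
    (fun e m => (β * (sgn (σ (gfst e)) * sgn (σ (gsnd e)))) ^ m / m !)
    fun e => NormedSpace.norm_expSeries_div_summable (𝔸 := ℝ) _

theorem random_current_expansion_general (gfst gsnd : E → V) (β : ℝ) (A : Finset V) :
    Summable (fun n : E → ℕ => if sourcesN gfst gsnd n = A then w β n else 0) ∧
    (∑ σ : V → Bool, corr A σ * boltz gfst gsnd β σ)
      = 2 ^ (Fintype.card V) *
        ∑' n : E → ℕ, if sourcesN gfst gsnd n = A then w β n else 0 := by
  set F := fun n : E → ℕ => if sourcesN gfst gsnd n = A then w β n else 0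
  have hZ : HasSum (fun n => 2 ^ Fintype.card V * F n)
      (∑ σ : V → Bool, corr A σ * boltz gfst gsnd β σ) := by
    refine (hasSum_sum fun σ _ => (hasSum_boltz gfst gsnd β σ).mul_left (corr A σ)).congr_fun
      fun n => ?_
    simp only [prod_mul_pow_div_factorial, mul_left_comm (corr A _), ← Finset.mul_sum,
      sum_corr_mul_prod_edge_pow, F]
    split_ifs <;> ring
  have hc : (2 : ℝ) ^ Fintype.card V ≠ 0 := by positivity
  have hF := (hZ.div_const _).congr_fun fun n => (mul_div_cancel_left₀ (F n) hc).symm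
  exact ⟨hF.summable, by rw [hF.tsum_eq, mul_div_cancel₀ _ hc]⟩

/-- Random-current expansion of the Ising partition function:
`∑_σ σ_A e^{-βH_G(σ)} = 2^{|V|} ∑_{∂n = A} w_β(n)`, the sum on the right being
(absolutely) summable. -/
theorem random_current_expansion (gfst gsnd : E → V) (β : ℝ) (hβ : 0 < β) (A : Finset V) :
    Summable (fun n : E → ℕ => if sourcesN gfst gsnd n = A then w β n else 0) ∧
    (∑ σ : V → Bool, corr A σ * boltz gfst gsnd β σ)
      = 2 ^ (Fintype.card V) *
        ∑' n : E → ℕ, if sourcesN gfst gsnd n = A then w β n else 0 :=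
  random_current_expansion_general gfst gsnd β A

end Stmt1
end

section
/- Switching lemma for random currents. Let G=(V,E) be a finite graph, β > 0, A, B ⊆ V, and let F : ℕ^E → ℝ be nonnegative (or bounded). Then ∑_{n₁,n₂ : ∂n₁=A, ∂n₂=B} F(n₁+n₂) w_β(n₁) w_β(n₂) = ∑_{n₁,n₂ : ∂n₁=AΔB, ∂n₂=∅} F(n₁+n₂) w_β(n₁) w_β(n₂) · 1[ trace(n₁+n₂) ∈ F_B ], where AΔB = (A∖B) ∪ (B∖A) is the symmetric difference. -/
open scoped BigOperators Classical ENNReal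

namespace Stmt2

variable {V E : Type} [Fintype V] [DecidableEq V] [Fintype E] [DecidableEq E]

/-- `∂n`: the set of sources of a current `n : E → ℕ`. -/
noncomputable def sourcesN (gfst gsnd : E → V) (n : E → ℕ) : Finset V :=
  Finset.univ.filter fun x : V =>
    Odd (∑ e : E, n e * ((if gfst e = x then 1 else 0) + (if gsnd e = x then (1 : ℕ) else 0)))

/-- `w_β(n) = ∏_{e ∈ E} β^{n_e} / n_e!` (as an extended nonnegative real). -/
noncomputable def wE (β : ℝ) (n : E → ℕ) : ℝ≥0∞ :=
  ∏ e : E, ENNReal.ofReal (β ^ (n e) / (Nat.factorial (n e)))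

/-- The trace `n̂` of a current: `n̂_e = 1` iff `n_e > 0`. -/
def traceC (n : E → ℕ) : E → Bool := fun e => decide (n e ≠ 0)

/-- Two vertices are adjacent in `ω` if some open edge joins them. -/
def adj (gfst gsnd : E → V) (ω : E → Bool) (x y : V) : Prop :=
  ∃ e : E, ω e = true ∧ ((gfst e = x ∧ gsnd e = y) ∨ (gfst e = y ∧ gsnd e = x))

/-- Connectivity by open paths in `ω`. -/
def conn (gfst gsnd : E → V) (ω : E → Bool) : V → V → Prop :=
  Relation.ReflTransGen (adj gfst gsnd ω)

/-- The event `F_B`: every connected component of `ω` contains an even number of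
vertices of `B`. -/
def evenEvent (gfst gsnd : E → V) (B : Finset V) (ω : E → Bool) : Prop :=
  ∀ x : V, Even ((B.filter fun y => conn gfst gsnd ω x y).card)

end Stmt2

/-!
Group the pairs `(n₁, n₂)` by `m = n₁ + n₂` and view `m` as a multigraph with `m e` parallel
copies of `e`. Since `w(n₁) w(n₂) = w(m) ∏ₑ (mₑ choose n₁ₑ)`, for fixed `m` both sides are
`F m w(m)` times a number of sub-multigraphs `S ⊆ m`: on the left those with `∂S = A` (then
`∂(m ∖ S) = B` forces `∂m = A Δ B`), on the right those with `∂S = A Δ B`, counted only if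
`m̂ ∈ F_B`. If `m̂ ∈ F_B`, pair up the vertices of `B` inside each cluster of `m̂` and join the
pairs by paths of `m̂`; the symmetric difference of these paths is a sub-multigraph `K` with
`∂K = B`, and `S ↦ S Δ K` matches the two families. If `m̂ ∉ F_B`, no `S` has `∂S = A`: its
complement would have sources `B`, while the sources of any sub-multigraph of `m` meet each
cluster of `m̂` in an even number of vertices.
-/

open Finset
open scoped symmDiff

theorem Finset.card_symmDiff_add_two_mul_card_inter {α : Type*} [DecidableEq α]
    (s t : Finset α) : #(s ∆ t) + 2 * #(s ∩ t) = #s + #t := by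
  have hs := card_sdiff_add_card_inter s t
  have ht := card_sdiff_add_card_inter t s
  rw [inter_comm t s] at ht
  rw [symmDiff_def, sup_eq_union, card_union_of_disjoint disjoint_sdiff_sdiff]
  omega

theorem ENNReal.tsum_tsum_eq_tsum_sum_antidiagonal {M : Type*} [AddMonoid M]
    [HasAntidiagonal M] (G : M → M → ℝ≥0∞) :
    ∑' a, ∑' b, G a b = ∑' n, ∑ p ∈ antidiagonal n, G p.1 p.2 := by
  rw [← ENNReal.tsum_prod, ← HasAntidiagonal.sigmaAntidiagonalEquivProd.tsum_eq,
    ENNReal.tsum_sigma']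
  exact tsum_congr fun n => tsum_subtype (antidiagonal n) fun p => G p.1 p.2

theorem Finset.sum_antidiagonal_ite_and_fst_add_snd {M R : Type*} [AddMonoid M] [HasAntidiagonal M]
    [AddCommMonoid R] (q : M × M → Prop) [DecidablePred q] (p : M → Prop) [DecidablePred p]
    (f : M × M → R) (n : M) :
    ∑ x ∈ antidiagonal n, (if q x ∧ p (x.1 + x.2) then f x else 0)
      = if p n then ∑ x ∈ antidiagonal n, (if q x then f x else 0) else 0 := by
  split_ifs with hn
  · exact sum_congr rfl fun x hx => by rw [mem_antidiagonal.mp hx]; simp only [hn, and_true]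
  · exact sum_eq_zero fun x hx => if_neg fun h => hn (mem_antidiagonal.mp hx ▸ h.2)

noncomputable instance Pi.instHasAntidiagonalNat {E : Type*} [Fintype E] [DecidableEq E] :
    HasAntidiagonal (E → ℕ) :=
  HasAntidiagonal.antidiagonalOfLocallyFinite

theorem pow_div_factorial_mul_pow_div_factorial {K : Type*} [Field K] [CharZero K]
    (β : K) (a b : ℕ) :
    β ^ a / a.factorial * (β ^ b / b.factorial)
      = β ^ (a + b) / (a + b).factorial * (a + b).choose a := by
  rw [Nat.cast_add_choose, pow_add]
  have ha : (a.factorial : K) ≠ 0 := Nat.cast_ne_zero.mpr a.factorial_ne_zero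
  have hb : (b.factorial : K) ≠ 0 := Nat.cast_ne_zero.mpr b.factorial_ne_zero
  have hab : ((a + b).factorial : K) ≠ 0 := Nat.cast_ne_zero.mpr (a + b).factorial_ne_zero
  field_simp

namespace Stmt2

theorem traceC_eq_true {E : Type} {n : E → ℕ} {e : E} : traceC n e = true ↔ n e ≠ 0 := by
  simp [traceC]

section Weight

variable {E : Type} [Fintype E]

theorem wE_mul_wE {β : ℝ} (hβ : 0 ≤ β) {n n' m : E → ℕ} (h : n + n' = m) :
    wE β n * wE β n' = wE β m * ∏ e, ((m e).choose (n e) : ℝ≥0∞) := by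
  subst h
  simp only [wE, ← prod_mul_distrib, Pi.add_apply]
  refine prod_congr rfl fun e _ => ?_
  rw [← ENNReal.ofReal_mul (by positivity), pow_div_factorial_mul_pow_div_factorial,
    ENNReal.ofReal_mul (by positivity), ENNReal.ofReal_natCast]

end Weight

section Sources

variable {V E : Type} [DecidableEq V] (gfst gsnd : E → V)

def incidence (e : E) (x : V) : ℕ :=
  (if gfst e = x then 1 else 0) + (if gsnd e = x then 1 else 0)

theorem sum_incidence (e : E) (s : Finset V) :
    ∑ x ∈ s, incidence gfst gsnd e x
      = (if gfst e ∈ s then 1 else 0) + (if gsnd e ∈ s then 1 else 0) := by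
  simp only [incidence, sum_add_distrib, sum_ite_eq]

variable [Fintype V] [Fintype E]

theorem mem_sourcesN_iff {n : E → ℕ} {x : V} :
    x ∈ sourcesN gfst gsnd n ↔ Odd (∑ e, n e * incidence gfst gsnd e x) := by
  simp [sourcesN, incidence]

theorem sourcesN_congr_of_mod_two {n n' : E → ℕ} (h : ∀ e, n e % 2 = n' e % 2) :
    sourcesN gfst gsnd n = sourcesN gfst gsnd n' := by
  ext x
  rw [mem_sourcesN_iff, mem_sourcesN_iff, Nat.odd_iff, Nat.odd_iff, sum_nat_mod,
    sum_congr rfl fun e _ => by rw [Nat.mul_mod, h e, ← Nat.mul_mod], ← sum_nat_mod]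

theorem sourcesN_zero : sourcesN gfst gsnd 0 = ∅ := by
  ext x
  simp [mem_sourcesN_iff]

theorem sourcesN_add (n n' : E → ℕ) :
    sourcesN gfst gsnd (n + n') = sourcesN gfst gsnd n ∆ sourcesN gfst gsnd n' := by
  ext x
  simp only [mem_symmDiff, mem_sourcesN_iff, Pi.add_apply, add_mul, sum_add_distrib,
    Nat.odd_add, ← Nat.not_odd_iff_even]
  tauto

theorem sourcesN_pi_single [DecidableEq E] (e : E) :
    sourcesN gfst gsnd (Pi.single e 1) = {gfst e} ∆ {gsnd e} := by
  ext x
  simp only [mem_sourcesN_iff, Pi.single_apply, ite_mul, one_mul, zero_mul, sum_ite_eq',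
    mem_univ, if_true, incidence, mem_symmDiff, mem_singleton]
  by_cases h₁ : gfst e = x <;> by_cases h₂ : gsnd e = x <;> simp_all [eq_comm]

end Sources

section Subcurrents

variable {E : Type} {m : E → ℕ}

-- `S e` selects which of the `m e` parallel copies of `e` are kept, so `S` is a
-- sub-multigraph of the multigraph `m` and `edgeCount S ≤ m` is the current it carries.
def edgeCount (S : ∀ e, Finset (Fin (m e))) : E → ℕ := fun e => #(S e)

theorem edgeCount_add_edgeCount_compl (S : ∀ e, Finset (Fin (m e))) :
    edgeCount S + edgeCount Sᶜ = m :=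
  funext fun e => by
    rw [Pi.add_apply, edgeCount, edgeCount, Pi.compl_apply, card_add_card_compl,
      Fintype.card_fin]

theorem edgeCount_le (S : ∀ e, Finset (Fin (m e))) : edgeCount S ≤ m := fun e =>
  (card_le_univ (S e)).trans_eq (Fintype.card_fin (m e))

theorem edgeCount_bot : edgeCount (⊥ : ∀ e, Finset (Fin (m e))) = 0 := rfl

variable [Fintype E] [DecidableEq E]

theorem card_filter_edgeCount_eq (n : E → ℕ) :
    #{S : ∀ e, Finset (Fin (m e)) | edgeCount S = n} = ∏ e, (m e).choose (n e) := by
  rw [← Fintype.card_subtype]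
  have eqv : {S : ∀ e, Finset (Fin (m e)) // edgeCount S = n}
      ≃ ∀ e, {s : Finset (Fin (m e)) // #s = n e} :=
    (Equiv.subtypeEquivRight fun S => funext_iff).trans
      (Equiv.subtypePiEquivPi (p := fun e (s : Finset (Fin (m e))) => #s = n e))
  simp only [Fintype.card_congr eqv, Fintype.card_pi, Fintype.card_finset_len, Fintype.card_fin]

theorem exists_edgeCount_eq_of_le {n : E → ℕ} (h : n ≤ m) :
    ∃ S : ∀ e, Finset (Fin (m e)), edgeCount S = n := by
  have hpos : 0 < #{S : ∀ e, Finset (Fin (m e)) | edgeCount S = n} := by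
    rw [card_filter_edgeCount_eq]
    exact prod_pos fun e _ => Nat.choose_pos (h e)
  obtain ⟨S, hS⟩ := card_pos.mp hpos
  exact ⟨S, (mem_filter.mp hS).2⟩

end Subcurrents

section SubcurrentSources

variable {V E : Type} [Fintype V] [DecidableEq V] [Fintype E] (gfst gsnd : E → V) {m : E → ℕ}

theorem sourcesN_edgeCount_symmDiff (S K : ∀ e, Finset (Fin (m e))) :
    sourcesN gfst gsnd (edgeCount (S ∆ K))
      = sourcesN gfst gsnd (edgeCount S) ∆ sourcesN gfst gsnd (edgeCount K) := by
  rw [← sourcesN_add]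
  refine sourcesN_congr_of_mod_two gfst gsnd fun e => ?_
  have := card_symmDiff_add_two_mul_card_inter (S e) (K e)
  simp only [edgeCount, Pi.add_apply, Pi.symmDiff_apply]
  omega

theorem sourcesN_edgeCount_compl (S : ∀ e, Finset (Fin (m e))) :
    sourcesN gfst gsnd (edgeCount Sᶜ)
      = sourcesN gfst gsnd (edgeCount S) ∆ sourcesN gfst gsnd m := by
  have h := congrArg (sourcesN gfst gsnd) (edgeCount_add_edgeCount_compl S)
  rw [sourcesN_add] at h
  rw [← h, symmDiff_symmDiff_cancel_left]

variable [DecidableEq E]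

variable (m) in
noncomputable def numSubcurrents (C : Finset V) : ℕ :=
  #{S : ∀ e, Finset (Fin (m e)) | sourcesN gfst gsnd (edgeCount S) = C}

theorem numSubcurrents_symmDiff {K : ∀ e, Finset (Fin (m e))} {D : Finset V}
    (hK : sourcesN gfst gsnd (edgeCount K) = D) (C : Finset V) :
    numSubcurrents gfst gsnd m (C ∆ D) = numSubcurrents gfst gsnd m C := by
  refine card_nbij' (· ∆ K) (· ∆ K) ?_ ?_ (fun S _ => symmDiff_symmDiff_cancel_right K S)
    (fun S _ => symmDiff_symmDiff_cancel_right K S)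
  · intro S hS
    simp only [coe_filter, mem_univ, true_and, Set.mem_ofPred_eq] at hS ⊢
    rw [sourcesN_edgeCount_symmDiff, hK, hS, symmDiff_symmDiff_cancel_right]
  · intro S hS
    simp only [coe_filter, mem_univ, true_and, Set.mem_ofPred_eq] at hS ⊢
    rw [sourcesN_edgeCount_symmDiff, hK, hS]

theorem numSubcurrents_eq_sum_antidiagonal (C : Finset V) :
    numSubcurrents gfst gsnd m C = ∑ p ∈ antidiagonal m,
      if sourcesN gfst gsnd p.1 = C then ∏ e, (m e).choose (p.1 e) else 0 := by
  rw [numSubcurrents, card_eq_sum_card_fiberwise (f := fun S => (edgeCount S, edgeCount Sᶜ))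
    fun S _ => mem_antidiagonal.mpr (edgeCount_add_edgeCount_compl S)]
  refine sum_congr rfl fun p hp => ?_
  have hfiber : ∀ S : ∀ e, Finset (Fin (m e)),
      (edgeCount S, edgeCount Sᶜ) = p ↔ edgeCount S = p.1 := fun S =>
    HasAntidiagonal.antidiagonal_congr (mem_antidiagonal.mpr (edgeCount_add_edgeCount_compl S)) hp
  simp only [filter_filter, hfiber]
  split_ifs with hC
  · rw [← card_filter_edgeCount_eq]
    congr 1
    exact filter_congr fun S _ => ⟨And.right, fun hS => ⟨hS ▸ hC, hS⟩⟩
  · refine card_eq_zero.mpr (filter_eq_empty_iff.mpr fun S _ hS => hC ?_)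
    rw [← hS.2, hS.1]

end SubcurrentSources

section Connectivity

variable {V E : Type} (gfst gsnd : E → V) (ω : E → Bool)

theorem conn_symm {x y : V} (h : conn gfst gsnd ω x y) : conn gfst gsnd ω y x :=
  have : Std.Symm (adj gfst gsnd ω) := ⟨fun _ _ ⟨e, he, h⟩ => ⟨e, he, h.symm⟩⟩
  Relation.ReflTransGen.stdSymm.symm _ _ h

theorem conn_fst_iff_conn_snd {e : E} (he : ω e = true) {x : V} :
    conn gfst gsnd ω x (gfst e) ↔ conn gfst gsnd ω x (gsnd e) :=
  ⟨fun h => h.tail ⟨e, he, Or.inl ⟨rfl, rfl⟩⟩, fun h => h.tail ⟨e, he, Or.inr ⟨rfl, rfl⟩⟩⟩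

variable {B : Finset V}

theorem exists_ne_conn_of_evenEvent (hB : evenEvent gfst gsnd B ω) {x : V} (hx : x ∈ B) :
    ∃ y ∈ B, y ≠ x ∧ conn gfst gsnd ω x y := by
  have hx' : x ∈ {y ∈ B | conn gfst gsnd ω x y} := mem_filter.mpr ⟨hx, .refl⟩
  have hcard : 1 < #{y ∈ B | conn gfst gsnd ω x y} := by
    have := card_pos.mpr ⟨x, hx'⟩
    obtain ⟨k, hk⟩ := hB x
    omega
  obtain ⟨y, hy, hyx⟩ := exists_mem_ne hcard x
  exact ⟨y, (mem_filter.mp hy).1, hyx, (mem_filter.mp hy).2⟩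

variable [DecidableEq V]

theorem evenEvent_sdiff_pair (hB : evenEvent gfst gsnd B ω) {x y : V} (hx : x ∈ B)
    (hy : y ∈ B) (hxy : x ≠ y) (hconn : conn gfst gsnd ω x y) :
    evenEvent gfst gsnd (B \ {x, y}) ω := by
  intro z
  have hfilter : {w ∈ B \ {x, y} | conn gfst gsnd ω z w}
      = {w ∈ B | conn gfst gsnd ω z w} \ {x, y} := by
    ext w
    simp only [mem_filter, mem_sdiff]
    tauto
  rw [hfilter]
  by_cases hzx : conn gfst gsnd ω z x
  · have hsub : {x, y} ⊆ {w ∈ B | conn gfst gsnd ω z w} := by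
      simp only [insert_subset_iff, singleton_subset_iff, mem_filter]
      exact ⟨⟨hx, hzx⟩, hy, hzx.trans hconn⟩
    rw [card_sdiff_of_subset hsub, card_pair hxy]
    exact (hB z).tsub even_two
  · have hzy : ¬ conn gfst gsnd ω z y := fun h => hzx (h.trans (conn_symm gfst gsnd ω hconn))
    rw [sdiff_eq_self_of_disjoint (by simp [hzx, hzy])]
    exact hB z

theorem even_card_sourcesN_filter_conn [Fintype V] [Fintype E] {n : E → ℕ}
    (hn : ∀ e, n e ≠ 0 → ω e = true) (x : V) :
    Even #{y ∈ sourcesN gfst gsnd n | conn gfst gsnd ω x y} := by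
  set C : Finset V := {y | conn gfst gsnd ω x y}
  have hfilter : {y ∈ sourcesN gfst gsnd n | conn gfst gsnd ω x y}
      = {y ∈ C | Odd (∑ e, n e * incidence gfst gsnd e y)} := by
    ext y
    simp only [C, mem_filter, mem_sourcesN_iff, mem_univ, true_and]
    tauto
  rw [hfilter, ← even_sum_iff_even_card_odd, sum_comm]
  refine even_sum _ fun e _ => ?_
  rw [← mul_sum, sum_incidence]
  by_cases hne : n e = 0
  · simp [hne]
  · have hends : gfst e ∈ C ↔ gsnd e ∈ C := by
      simpa [C] using conn_fst_iff_conn_snd gfst gsnd ω (hn e hne)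
    refine Even.mul_left ?_ _
    by_cases h : gfst e ∈ C <;> simp [h, ← hends]

end Connectivity

section Switching

variable {V E : Type} [Fintype V] [DecidableEq V] [Fintype E] (gfst gsnd : E → V) {m : E → ℕ}

theorem evenEvent_of_sourcesN_edgeCount_eq {B : Finset V} {S : ∀ e, Finset (Fin (m e))}
    (hS : sourcesN gfst gsnd (edgeCount S) = B) : evenEvent gfst gsnd B (traceC m) := by
  intro x
  rw [← hS]
  refine even_card_sourcesN_filter_conn gfst gsnd _ (fun e he => ?_) x
  exact traceC_eq_true.mpr (Nat.pos_of_ne_zero he |>.trans_le (edgeCount_le S e)).ne'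

variable [DecidableEq E]

theorem exists_sourcesN_edgeCount_eq_pair {x y : V} (h : conn gfst gsnd (traceC m) x y) :
    ∃ S : ∀ e, Finset (Fin (m e)), sourcesN gfst gsnd (edgeCount S) = {x} ∆ {y} := by
  induction h with
  | refl => exact ⟨⊥, by rw [edgeCount_bot, sourcesN_zero, symmDiff_self, bot_eq_empty]⟩
  | tail _ hbc ih =>
    obtain ⟨S, hS⟩ := ih
    obtain ⟨e, he, hends⟩ := hbc
    have hle : Pi.single e 1 ≤ m := fun e' => by
      by_cases h : e' = e
      · subst h
        simpa [Nat.one_le_iff_ne_zero] using traceC_eq_true.mp he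
      · simp [h]
    obtain ⟨T, hT⟩ := exists_edgeCount_eq_of_le hle
    refine ⟨S ∆ T, ?_⟩
    rw [sourcesN_edgeCount_symmDiff, hS, hT, sourcesN_pi_single]
    rcases hends with ⟨rfl, rfl⟩ | ⟨rfl, rfl⟩
    · rw [symmDiff_assoc, symmDiff_symmDiff_cancel_left]
    · rw [symmDiff_comm {gfst e}, symmDiff_assoc, symmDiff_symmDiff_cancel_left]

theorem exists_sourcesN_edgeCount_eq_of_evenEvent {B : Finset V}
    (hB : evenEvent gfst gsnd B (traceC m)) :
    ∃ S : ∀ e, Finset (Fin (m e)), sourcesN gfst gsnd (edgeCount S) = B := by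
  induction B using Finset.strongInduction with
  | H B ih =>
  obtain rfl | ⟨x, hx⟩ := B.eq_empty_or_nonempty
  · exact ⟨⊥, by rw [edgeCount_bot, sourcesN_zero]⟩
  obtain ⟨y, hy, hyx, hxy⟩ := exists_ne_conn_of_evenEvent gfst gsnd _ hB hx
  have hpair : {x, y} ⊆ B := insert_subset hx (singleton_subset_iff.mpr hy)
  obtain ⟨S, hS⟩ := ih _ (sdiff_ssubset hpair (insert_nonempty x {y}))
    (evenEvent_sdiff_pair gfst gsnd _ hB hx hy hyx.symm hxy)
  obtain ⟨T, hT⟩ := exists_sourcesN_edgeCount_eq_pair gfst gsnd hxy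
  refine ⟨S ∆ T, ?_⟩
  have hxy' : {x} ∆ {y} = ({x, y} : Finset V) := by
    rw [(disjoint_singleton.mpr hyx.symm).symmDiff_eq_sup, sup_eq_union, insert_eq]
  rw [sourcesN_edgeCount_symmDiff, hS, hT, hxy', sdiff_symmDiff_eq_sup, sup_eq_left.mpr hpair]

theorem numSubcurrents_switch {A B : Finset V} (hm : sourcesN gfst gsnd m = A ∆ B) :
    numSubcurrents gfst gsnd m A
      = if evenEvent gfst gsnd B (traceC m) then numSubcurrents gfst gsnd m (A ∆ B) else 0 := by
  split_ifs with hB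
  · obtain ⟨K, hK⟩ := exists_sourcesN_edgeCount_eq_of_evenEvent gfst gsnd hB
    exact (numSubcurrents_symmDiff gfst gsnd hK A).symm
  · refine card_eq_zero.mpr (filter_eq_empty_iff.mpr fun S _ hS => hB ?_)
    refine evenEvent_of_sourcesN_edgeCount_eq gfst gsnd (S := Sᶜ) ?_
    rw [sourcesN_edgeCount_compl, hS, hm, symmDiff_symmDiff_cancel_left]

theorem sum_antidiagonal_ite_sourcesN {β : ℝ} (hβ : 0 ≤ β) (F : (E → ℕ) → ℝ≥0∞)
    (C D : Finset V) :
    ∑ p ∈ antidiagonal m,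
        (if sourcesN gfst gsnd p.1 = C ∧ sourcesN gfst gsnd p.2 = D then
          F (p.1 + p.2) * wE β p.1 * wE β p.2 else 0)
      = if sourcesN gfst gsnd m = C ∆ D then
          F m * wE β m * numSubcurrents gfst gsnd m C else 0 := by
  have hsplit : ∀ p ∈ antidiagonal m,
      sourcesN gfst gsnd m = sourcesN gfst gsnd p.1 ∆ sourcesN gfst gsnd p.2 :=
    fun p hp => by rw [← sourcesN_add, mem_antidiagonal.mp hp]
  split_ifs with hm
  · rw [numSubcurrents_eq_sum_antidiagonal, Nat.cast_sum, mul_sum]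
    refine sum_congr rfl fun p hp => ?_
    by_cases hC : sourcesN gfst gsnd p.1 = C
    · have hD : sourcesN gfst gsnd p.2 = D := by
        rw [← symmDiff_symmDiff_cancel_left (sourcesN gfst gsnd p.1) (sourcesN gfst gsnd p.2),
          ← hsplit p hp, hm, hC, symmDiff_symmDiff_cancel_left]
      rw [if_pos ⟨hC, hD⟩, if_pos hC, mem_antidiagonal.mp hp, mul_assoc,
        wE_mul_wE hβ (mem_antidiagonal.mp hp)]
      push_cast
      ring
    · simp [hC]
  · refine sum_eq_zero fun p hp => if_neg fun ⟨h₁, h₂⟩ => hm ?_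
    rw [hsplit p hp, h₁, h₂]

end Switching

variable {V E : Type} [Fintype V] [DecidableEq V] [Fintype E] [DecidableEq E]

/-- The switching lemma for random currents. -/
theorem switching_lemma (gfst gsnd : E → V) (β : ℝ) (hβ : 0 < β)
    (A B : Finset V) (F : (E → ℕ) → ℝ≥0∞) :
    (∑' n₁ : E → ℕ, ∑' n₂ : E → ℕ,
        if sourcesN gfst gsnd n₁ = A ∧ sourcesN gfst gsnd n₂ = B then
          F (n₁ + n₂) * wE β n₁ * wE β n₂ else 0)
      = ∑' n₁ : E → ℕ, ∑' n₂ : E → ℕ,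
          if sourcesN gfst gsnd n₁ = (A \ B) ∪ (B \ A) ∧
              sourcesN gfst gsnd n₂ = (∅ : Finset V) ∧
              evenEvent gfst gsnd B (traceC (n₁ + n₂)) then
            F (n₁ + n₂) * wE β n₁ * wE β n₂ else 0 := by
  rw [← Finset.symmDiff_def, ENNReal.tsum_tsum_eq_tsum_sum_antidiagonal,
    ENNReal.tsum_tsum_eq_tsum_sum_antidiagonal]
  refine tsum_congr fun m => ?_
  simp_rw [← and_assoc]
  rw [sum_antidiagonal_ite_and_fst_add_snd _ (fun n => evenEvent gfst gsnd B (traceC n)),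
    sum_antidiagonal_ite_sourcesN gfst gsnd hβ.le, sum_antidiagonal_ite_sourcesN gfst gsnd hβ.le,
    ← bot_eq_empty, symmDiff_bot]
  by_cases hm : sourcesN gfst gsnd m = A ∆ B
  · rw [numSubcurrents_switch gfst gsnd hm]
    split_ifs <;> simp
  · simp [hm]

end Stmt2
end

section
/- Edwards–Sokal correlation identities. Fix an integer q ≥ 2, a finite graph G=(V,E) with a distinguished boundary set ∂G ⊆ V, p ∈ (0,1), and let β = −((q−1)/q)·ln(1−p). Then: (i) for all x, y ∈ V, μ^f_{G,β,q}[σ_x·σ_y] = φ^0_{G,p,q}[x ↔ y], where {x ↔ y} is the event that x and y lie in the same connected component of (V, {e : ω_e = 1}); and (ii) for every b ∈ {1,…,q} and every x ∈ V, μ^b_{G,β,q}[σ_x·b] = φ^1_{G,p,q}[x ↔ ∂G], where {x ↔ ∂G} is the event that the open cluster of x intersects ∂G. -/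
open scoped BigOperators Classical

namespace Stmt3

variable {V E : Type} [Fintype V] [DecidableEq V] [Fintype E] [DecidableEq E]

/-- The dot product of the simplex embedding of `q`-state Potts spins:
`a · b = 1` if `a = b` and `-1/(q-1)` otherwise. -/
noncomputable def dotq (q : ℕ) (a b : Fin q) : ℝ := if a = b then 1 else -1 / ((q : ℝ) - 1)

/-- Potts Boltzmann weight `exp(-β H^f_G(σ)) = exp(β ∑_{xy∈E} σ_x·σ_y)`. -/
noncomputable def pottsBoltz (gfst gsnd : E → V) (q : ℕ) (β : ℝ) (σ : V → Fin q) : ℝ :=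
  Real.exp (β * ∑ e : E, dotq q (σ (gfst e)) (σ (gsnd e)))

/-- Two vertices are adjacent in `ω` if some open edge joins them. -/
def adj (gfst gsnd : E → V) (ω : E → Bool) (x y : V) : Prop :=
  ∃ e : E, ω e = true ∧ ((gfst e = x ∧ gsnd e = y) ∨ (gfst e = y ∧ gsnd e = x))

/-- Connectivity by open paths in `ω`. -/
def conn (gfst gsnd : E → V) (ω : E → Bool) : V → V → Prop :=
  Relation.ReflTransGen (adj gfst gsnd ω)

/-- Number of open edges. -/
noncomputable def openCount (ω : E → Bool) : ℕ :=
  (Finset.univ.filter fun e : E => ω e = true).card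

/-- Number of closed edges. -/
noncomputable def closedCount (ω : E → Bool) : ℕ :=
  (Finset.univ.filter fun e : E => ω e = false).card

/-- `k(ω)`: the number of connected components of `(V, {e : ω_e = 1})`
(isolated vertices included). -/
noncomputable def numComp (gfst gsnd : E → V) (ω : E → Bool) : ℕ :=
  (Finset.univ.image fun x : V => Finset.univ.filter fun y : V => conn gfst gsnd ω x y).card

/-- Wired connectivity: open paths, with all boundary vertices identified. -/
def connW (gfst gsnd : E → V) (bdry : Finset V) (ω : E → Bool) : V → V → Prop :=
  Relation.ReflTransGen fun x y => adj gfst gsnd ω x y ∨ (x ∈ bdry ∧ y ∈ bdry)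

/-- `k(ω^1)`: the number of connected components after wiring the boundary. -/
noncomputable def numCompW (gfst gsnd : E → V) (bdry : Finset V) (ω : E → Bool) : ℕ :=
  (Finset.univ.image fun x : V =>
    Finset.univ.filter fun y : V => connW gfst gsnd bdry ω x y).card

/-- Random-cluster weight with free boundary conditions. -/
noncomputable def rcW0 (gfst gsnd : E → V) (p : ℝ) (q : ℕ) (ω : E → Bool) : ℝ :=
  p ^ openCount ω * (1 - p) ^ closedCount ω * (q : ℝ) ^ numComp gfst gsnd ω

/-- Random-cluster weight with wired boundary conditions. -/
noncomputable def rcW1 (gfst gsnd : E → V) (bdry : Finset V) (p : ℝ) (q : ℕ) (ω : E → Bool) : ℝ :=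
  p ^ openCount ω * (1 - p) ^ closedCount ω * (q : ℝ) ^ numCompW gfst gsnd bdry ω

end Stmt3

/-!
Expanding every edge factor `exp (β σ_x·σ_y) = exp β * ((1 - p) + p * [σ_x = σ_y])` over
`ω ∈ {0,1}^E` writes the Potts weight of `σ` as a sum of the random-cluster edge weights of those
`ω` whose open clusters `σ` is constant on. Summing over `σ` first, such `σ` are the functions on
the set of clusters: there are `q ^ k(ω)` of them, and since `∑ b, a·b = 0` the sum of `σ_x·σ_y`
over them is `q ^ k(ω)` if `x` and `y` share a cluster and `0` otherwise. For the boundary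
condition `b`, permuting colours shows that the constrained sum does not depend on `b`, so `q`
times it is the sum over all `σ` constant on `∂G`; these are the functions constant on the wired
clusters, and the same computation applies.
-/

section Quotient
variable {α β : Type*} [Fintype α]

theorem Setoid.card_quotient_eq_card_image [DecidableEq α] (s : Setoid α) :
    Fintype.card (Quotient s)
      = (Finset.univ.image fun x : α => Finset.univ.filter fun y => s x y).card := by
  set f := fun x : α => Finset.univ.filter fun y => s x y
  have hker : Setoid.ker f = s := by
    ext x y
    simp only [Setoid.ker_def, f, Finset.ext_iff, Finset.mem_filter, Finset.mem_univ, true_and]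
    exact ⟨fun h => (h y).2 (s.refl y), fun h z => ⟨s.trans (s.symm h), s.trans h⟩⟩
  rw [← Set.toFinset_range, Set.toFinset_card,
    ← Fintype.card_congr ((Quotient.congrRight fun x y => by rw [hker]).trans
      (Setoid.quotientKerEquivRange f))]

theorem Setoid.sum_ite_le_ker [DecidableEq α] [Fintype β] [DecidableEq β] {M : Type*}
    [AddCommMonoid M] (s : Setoid α) (F : (α → β) → M) :
    ∑ σ : α → β, (if s ≤ Setoid.ker σ then F σ else 0)
      = ∑ g : Quotient s → β, F (g ∘ Quotient.mk s) := by
  rw [← Finset.sum_filter, Finset.sum_subtype _ (p := fun σ => s ≤ Setoid.ker σ) (by simp)]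
  exact Fintype.sum_equiv (Setoid.liftEquiv s) _ _ fun σ => rfl

end Quotient

def Relation.ReflTransGen.setoid {α : Type*} (r : α → α → Prop) (hr : ∀ x y, r x y → r y x) :
    Setoid α where
  r := Relation.ReflTransGen r
  iseqv := ⟨fun _ => .refl,
    fun h => Relation.ReflTransGen.mono (fun x y => hr y x) _ _ (Relation.ReflTransGen.swap _ _ h),
    .trans⟩

theorem Relation.ReflTransGen.setoid_le_ker_iff {α β : Type*} (r : α → α → Prop)
    (hr : ∀ x y, r x y → r y x) (σ : α → β) :
    Relation.ReflTransGen.setoid r hr ≤ Setoid.ker σ ↔ ∀ x y, r x y → σ x = σ y := by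
  refine ⟨fun h x y hxy => h (Relation.ReflTransGen.single hxy), fun h x y hxy => ?_⟩
  change Relation.ReflTransGen r x y at hxy
  induction hxy with
  | refl => rfl
  | tail _ hyz ih => exact ih.trans (h _ _ hyz)

section ColourSymmetry
variable {V α M : Type*} [Fintype V] [DecidableEq V] [Fintype α] [DecidableEq α] [AddCommMonoid M]

theorem sum_eq_of_perm_invariant (F : (V → α) → α → M)
    (hF : ∀ (π : Equiv.Perm α) σ b, F (π ∘ σ) (π b) = F σ b) (b b' : α) :
    ∑ σ, F σ b = ∑ σ, F σ b' := by
  let π := Equiv.swap b b'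
  calc ∑ σ, F σ b = ∑ σ, F (π ∘ σ) (π b) := by simp only [hF]
    _ = ∑ σ, F (π ∘ σ) b' := by rw [Equiv.swap_apply_left]
    _ = ∑ σ, F σ b' := Equiv.sum_comp (Equiv.arrowCongr (Equiv.refl V) π) (F · b')

theorem card_nsmul_sum_of_perm_invariant (F : (V → α) → α → M)
    (hF : ∀ (π : Equiv.Perm α) σ b, F (π ∘ σ) (π b) = F σ b) (b : α) :
    Fintype.card α • ∑ σ, F σ b = ∑ b', ∑ σ, F σ b' := by
  rw [← Finset.card_univ, ← Finset.sum_const]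
  exact Finset.sum_congr rfl fun b' _ => sum_eq_of_perm_invariant F hF b b'

end ColourSymmetry

namespace Stmt3

section Dot
variable {q : ℕ}

theorem dotq_self (a : Fin q) : dotq q a a = 1 := if_pos rfl

theorem dotq_perm (π : Equiv.Perm (Fin q)) (a b : Fin q) : dotq q (π a) (π b) = dotq q a b := by
  simp only [dotq, π.injective.eq_iff]

theorem sum_dotq_right (hq : 2 ≤ q) (a : Fin q) : ∑ b, dotq q a b = 0 := by
  have hq1 : (q : ℝ) - 1 ≠ 0 := by
    have : (2 : ℝ) ≤ q := by exact_mod_cast hq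
    linarith
  have hoff : ∀ b ∈ ({a}ᶜ : Finset (Fin q)), dotq q a b = -1 / ((q : ℝ) - 1) := fun b hb =>
    if_neg (Ne.symm (by simpa using hb))
  rw [Fintype.sum_eq_add_sum_compl a, dotq_self, Finset.sum_congr rfl hoff, Finset.sum_const,
    Finset.card_compl, Finset.card_singleton, Fintype.card_fin, nsmul_eq_mul,
    Nat.cast_sub (by omega), Nat.cast_one]
  field_simp
  ring

theorem sum_dotq_apply_apply (hq : 2 ≤ q) {Q : Type*} [Fintype Q] [DecidableEq Q] (a c : Q) :
    ∑ g : Q → Fin q, dotq q (g a) (g c) = if a = c then (q : ℝ) ^ Fintype.card Q else 0 := by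
  split_ifs with hac
  · simp [hac, dotq_self]
  · rw [← (Equiv.funSplitAt c (Fin q)).symm.sum_comp, Fintype.sum_prod_type, Finset.sum_comm]
    refine Finset.sum_eq_zero fun g _ => ?_
    simpa [Equiv.funSplitAt, Equiv.piSplitAt, hac] using sum_dotq_right hq (g ⟨a, hac⟩)

theorem sum_ite_le_ker_one {α : Type*} [Fintype α] [DecidableEq α] (s : Setoid α) :
    ∑ σ : α → Fin q, (if s ≤ Setoid.ker σ then (1 : ℝ) else 0)
      = (q : ℝ) ^ Fintype.card (Quotient s) := by
  rw [Setoid.sum_ite_le_ker]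
  simp

theorem sum_ite_le_ker_dotq (hq : 2 ≤ q) {α : Type*} [Fintype α] [DecidableEq α] (s : Setoid α)
    (x y : α) :
    ∑ σ : α → Fin q, (if s ≤ Setoid.ker σ then dotq q (σ x) (σ y) else 0)
      = if s x y then (q : ℝ) ^ Fintype.card (Quotient s) else 0 := by
  simp only [Setoid.sum_ite_le_ker, Function.comp_apply, sum_dotq_apply_apply hq, Quotient.eq]

end Dot

section Graph
variable {V E : Type} (gfst gsnd : E → V) (ω : E → Bool)

theorem adj_comm {x y : V} : adj gfst gsnd ω x y ↔ adj gfst gsnd ω y x := by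
  simp only [adj, or_comm]

def connSetoid : Setoid V :=
  Relation.ReflTransGen.setoid (adj gfst gsnd ω) fun _ _ => (adj_comm gfst gsnd ω).1

def connWSetoid (bdry : Finset V) : Setoid V :=
  Relation.ReflTransGen.setoid (fun x y => adj gfst gsnd ω x y ∨ (x ∈ bdry ∧ y ∈ bdry))
    fun _ _ => Or.imp (adj_comm gfst gsnd ω).1 And.symm

theorem connSetoid_apply {x y : V} : connSetoid gfst gsnd ω x y ↔ conn gfst gsnd ω x y := Iff.rfl

theorem connWSetoid_apply {bdry : Finset V} {x y : V} :
    connWSetoid gfst gsnd ω bdry x y ↔ connW gfst gsnd bdry ω x y := Iff.rfl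

theorem numComp_eq_card_quotient [Fintype V] [DecidableEq V] :
    numComp gfst gsnd ω = Fintype.card (Quotient (connSetoid gfst gsnd ω)) :=
  (Setoid.card_quotient_eq_card_image (connSetoid gfst gsnd ω)).symm

theorem numCompW_eq_card_quotient [Fintype V] [DecidableEq V] (bdry : Finset V) :
    numCompW gfst gsnd bdry ω = Fintype.card (Quotient (connWSetoid gfst gsnd ω bdry)) :=
  (Setoid.card_quotient_eq_card_image (connWSetoid gfst gsnd ω bdry)).symm

theorem forall_adj_iff {β : Type*} (σ : V → β) :
    (∀ x y, adj gfst gsnd ω x y → σ x = σ y) ↔ ∀ e, ω e = true → σ (gfst e) = σ (gsnd e) := by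
  refine ⟨fun h e he => h _ _ ⟨e, he, .inl ⟨rfl, rfl⟩⟩, ?_⟩
  rintro h x y ⟨e, he, ⟨rfl, rfl⟩ | ⟨rfl, rfl⟩⟩
  exacts [h e he, (h e he).symm]

theorem connSetoid_le_ker_iff {β : Type*} (σ : V → β) :
    connSetoid gfst gsnd ω ≤ Setoid.ker σ ↔ ∀ e, ω e = true → σ (gfst e) = σ (gsnd e) :=
  (Relation.ReflTransGen.setoid_le_ker_iff _ _ σ).trans (forall_adj_iff gfst gsnd ω σ)

theorem connWSetoid_le_ker_iff {β : Type*} {bdry : Finset V} {v₀ : V} (hv₀ : v₀ ∈ bdry)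
    (σ : V → β) :
    connWSetoid gfst gsnd ω bdry ≤ Setoid.ker σ ↔
      (∀ e, ω e = true → σ (gfst e) = σ (gsnd e)) ∧ ∀ v ∈ bdry, σ v = σ v₀ := by
  rw [connWSetoid, Relation.ReflTransGen.setoid_le_ker_iff, ← forall_adj_iff]
  refine ⟨fun h => ⟨fun x y hxy => h x y (.inl hxy), fun v hv => h v v₀ (.inr ⟨hv, hv₀⟩)⟩, ?_⟩
  rintro ⟨hadj, hbdry⟩ x y (hxy | ⟨hx, hy⟩)
  exacts [hadj x y hxy, (hbdry x hx).trans (hbdry y hy).symm]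

theorem connW_iff_exists_conn {bdry : Finset V} {v₀ : V} (hv₀ : v₀ ∈ bdry) (x : V) :
    connW gfst gsnd bdry ω x v₀ ↔ ∃ y ∈ bdry, conn gfst gsnd ω x y := by
  refine ⟨fun h => ?_, fun ⟨y, hy, hxy⟩ =>
    (Relation.ReflTransGen.mono (fun _ _ => .inl) _ _ hxy).tail (.inr ⟨hy, hv₀⟩)⟩
  induction h using Relation.ReflTransGen.head_induction_on with
  | refl => exact ⟨v₀, hv₀, .refl⟩
  | head hxz _ ih =>
    rcases hxz with hxz | ⟨hx, -⟩
    · obtain ⟨y, hy, hzy⟩ := ih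
      exact ⟨y, hy, hzy.head hxz⟩
    · exact ⟨_, hx, .refl⟩

end Graph

section FortuinKasteleyn
variable {V E : Type} [Fintype E] (gfst gsnd : E → V) {q : ℕ} {p β : ℝ}

noncomputable def fkWeight (p : ℝ) (ω : E → Bool) : ℝ := p ^ openCount ω * (1 - p) ^ closedCount ω

theorem rcW0_eq [Fintype V] [DecidableEq V] (p : ℝ) (q : ℕ) (ω : E → Bool) :
    rcW0 gfst gsnd p q ω = fkWeight p ω * (q : ℝ) ^ numComp gfst gsnd ω := rfl

theorem rcW1_eq [Fintype V] [DecidableEq V] (bdry : Finset V) (p : ℝ) (q : ℕ) (ω : E → Bool) :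
    rcW1 gfst gsnd bdry p q ω = fkWeight p ω * (q : ℝ) ^ numCompW gfst gsnd bdry ω := rfl

theorem exp_mul_dotq (hq : 2 ≤ q) (hp : p < 1)
    (hβ : β = -(((q : ℝ) - 1) / (q : ℝ)) * Real.log (1 - p)) (a b : Fin q) :
    Real.exp (β * dotq q a b) = Real.exp β * (1 - p + p * if a = b then 1 else 0) := by
  have hq2 : (2 : ℝ) ≤ q := by exact_mod_cast hq
  have hq1 : (q : ℝ) - 1 ≠ 0 := by linarith
  have hq0 : (q : ℝ) ≠ 0 := by linarith
  by_cases hab : a = b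
  · simp [dotq, hab]
  · have hexp : β * (-1 / ((q : ℝ) - 1)) = β + Real.log (1 - p) := by
      rw [hβ]; field_simp; ring
    simp only [dotq, hab, if_false, mul_zero, add_zero, hexp, Real.exp_add,
      Real.exp_log (sub_pos.2 hp)]

theorem pottsBoltz_perm (π : Equiv.Perm (Fin q)) (σ : V → Fin q) :
    pottsBoltz gfst gsnd q β (π ∘ σ) = pottsBoltz gfst gsnd q β σ := by
  simp only [pottsBoltz, Function.comp_apply, dotq_perm]

theorem prod_ite_eq_fkWeight_mul {β : Type*} [DecidableEq β] (σ : V → β) (p : ℝ) (ω : E → Bool) :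
    ∏ e, (if ω e then p * (if σ (gfst e) = σ (gsnd e) then 1 else 0) else 1 - p)
      = fkWeight p ω * if connSetoid gfst gsnd ω ≤ Setoid.ker σ then 1 else 0 := by
  rw [Finset.prod_ite, Finset.prod_mul_distrib, Finset.prod_const, Finset.prod_const,
    Finset.prod_boole, fkWeight, openCount, closedCount]
  simp only [connSetoid_le_ker_iff, Finset.mem_filter, Finset.mem_univ, true_and,
    Bool.not_eq_true]
  ring

variable [DecidableEq E]

theorem pottsBoltz_eq_sum_fkWeight (hq : 2 ≤ q) (hp : p < 1)
    (hβ : β = -(((q : ℝ) - 1) / (q : ℝ)) * Real.log (1 - p)) (σ : V → Fin q) :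
    pottsBoltz gfst gsnd q β σ = Real.exp β ^ Fintype.card E *
      ∑ ω, fkWeight p ω * if connSetoid gfst gsnd ω ≤ Setoid.ker σ then 1 else 0 := by
  have hedge : ∀ e, Real.exp (β * dotq q (σ (gfst e)) (σ (gsnd e))) = Real.exp β *
      ∑ c : Bool, if c then p * (if σ (gfst e) = σ (gsnd e) then 1 else 0) else 1 - p := by
    intro e
    rw [exp_mul_dotq hq hp hβ, Fintype.sum_bool, if_pos rfl, if_neg Bool.false_ne_true]
    ring
  rw [pottsBoltz, Finset.mul_sum, Real.exp_sum, Finset.prod_congr rfl fun e _ => hedge e,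
    Finset.prod_mul_distrib, Finset.prod_const, Finset.card_univ, Fintype.prod_sum]
  simp only [prod_ite_eq_fkWeight_mul]

variable [Fintype V] [DecidableEq V]

theorem sum_mul_pottsBoltz (hq : 2 ≤ q) (hp : p < 1)
    (hβ : β = -(((q : ℝ) - 1) / (q : ℝ)) * Real.log (1 - p)) (F : (V → Fin q) → ℝ) :
    ∑ σ, F σ * pottsBoltz gfst gsnd q β σ = Real.exp β ^ Fintype.card E *
      ∑ ω, fkWeight p ω * ∑ σ, if connSetoid gfst gsnd ω ≤ Setoid.ker σ then F σ else 0 := by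
  simp_rw [pottsBoltz_eq_sum_fkWeight gfst gsnd hq hp hβ, Finset.mul_sum]
  rw [Finset.sum_comm]
  refine Finset.sum_congr rfl fun ω _ => Finset.sum_congr rfl fun σ _ => ?_
  split_ifs <;> ring

end FortuinKasteleyn

section PottsSymmetry
variable {V E : Type} [Fintype V] [DecidableEq V] [Fintype E] (gfst gsnd : E → V) {q : ℕ} {β : ℝ}

theorem sum_dotq_const_mul_pottsBoltz (hq : 2 ≤ q) (x : V) (b : Fin q) :
    ∑ σ, dotq q (σ x) b * pottsBoltz gfst gsnd q β σ = 0 := by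
  have hsymm := card_nsmul_sum_of_perm_invariant
    (fun σ b => dotq q (σ x) b * pottsBoltz gfst gsnd q β σ)
    (fun π σ b => by simp only [Function.comp_apply, dotq_perm, pottsBoltz_perm]) b
  simp only [Finset.sum_comm (γ := Fin q), ← Finset.sum_mul, sum_dotq_right hq, zero_mul,
    Finset.sum_const_zero, Fintype.card_fin, smul_eq_zero] at hsymm
  exact hsymm.resolve_left (by omega)

/-- Colour symmetry makes the sum with boundary colour `b` independent of `b`, so `q` times it is
the sum over all boundary colours, i.e. over all `σ` constant on `bdry`. -/
theorem mul_sum_pinned_mul_pottsBoltz {bdry : Finset V} {v₀ : V} (hv₀ : v₀ ∈ bdry)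
    (G : Fin q → Fin q → ℝ) (hG : ∀ (π : Equiv.Perm (Fin q)) a b, G (π a) (π b) = G a b)
    (x : V) (b : Fin q) :
    q * ∑ σ, (if ∀ v ∈ bdry, σ v = b then G (σ x) b * pottsBoltz gfst gsnd q β σ else 0)
      = ∑ σ, (if ∀ v ∈ bdry, σ v = σ v₀ then G (σ x) (σ v₀) else 0) *
          pottsBoltz gfst gsnd q β σ := by
  have hsymm := card_nsmul_sum_of_perm_invariant
    (fun σ b => if ∀ v ∈ bdry, σ v = b then G (σ x) b * pottsBoltz gfst gsnd q β σ else 0)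
    (fun π σ b => by simp only [Function.comp_apply, π.injective.eq_iff, hG, pottsBoltz_perm]) b
  rw [Fintype.card_fin, nsmul_eq_mul] at hsymm
  rw [hsymm, Finset.sum_comm]
  refine Finset.sum_congr rfl fun σ _ => ?_
  rw [Fintype.sum_eq_single (σ v₀) fun b' hb' => if_neg fun h => hb' (h v₀ hv₀).symm, ite_mul,
    zero_mul]

end PottsSymmetry

section EdwardsSokal
variable {V E : Type} [Fintype V] [DecidableEq V] [Fintype E] [DecidableEq E] (gfst gsnd : E → V)
  {q : ℕ} {p β : ℝ}

theorem sum_pottsBoltz (hq : 2 ≤ q) (hp : p < 1)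
    (hβ : β = -(((q : ℝ) - 1) / (q : ℝ)) * Real.log (1 - p)) :
    ∑ σ, pottsBoltz gfst gsnd q β σ = Real.exp β ^ Fintype.card E * ∑ ω, rcW0 gfst gsnd p q ω := by
  simpa only [one_mul, sum_ite_le_ker_one, ← numComp_eq_card_quotient, rcW0_eq]
    using sum_mul_pottsBoltz gfst gsnd hq hp hβ fun _ => 1

theorem sum_dotq_mul_pottsBoltz (hq : 2 ≤ q) (hp : p < 1)
    (hβ : β = -(((q : ℝ) - 1) / (q : ℝ)) * Real.log (1 - p)) (x y : V) :
    ∑ σ, dotq q (σ x) (σ y) * pottsBoltz gfst gsnd q β σ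
      = Real.exp β ^ Fintype.card E *
          ∑ ω, if conn gfst gsnd ω x y then rcW0 gfst gsnd p q ω else 0 := by
  rw [sum_mul_pottsBoltz gfst gsnd hq hp hβ]
  simp only [sum_ite_le_ker_dotq hq, connSetoid_apply, ← numComp_eq_card_quotient, mul_ite,
    mul_zero, rcW0_eq]

theorem sum_pinned_mul_pottsBoltz (hq : 2 ≤ q) (hp : p < 1)
    (hβ : β = -(((q : ℝ) - 1) / (q : ℝ)) * Real.log (1 - p)) {bdry : Finset V} {v₀ : V}
    (hv₀ : v₀ ∈ bdry) (F : (V → Fin q) → ℝ) :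
    ∑ σ, (if ∀ v ∈ bdry, σ v = σ v₀ then F σ else 0) * pottsBoltz gfst gsnd q β σ
      = Real.exp β ^ Fintype.card E * ∑ ω, fkWeight p ω *
          ∑ σ, if connWSetoid gfst gsnd ω bdry ≤ Setoid.ker σ then F σ else 0 := by
  rw [sum_mul_pottsBoltz gfst gsnd hq hp hβ]
  simp only [connWSetoid_le_ker_iff gfst gsnd _ hv₀, connSetoid_le_ker_iff, ite_and]

theorem mul_sum_pinned_dotq_mul_pottsBoltz (hq : 2 ≤ q) (hp : p < 1)
    (hβ : β = -(((q : ℝ) - 1) / (q : ℝ)) * Real.log (1 - p)) {bdry : Finset V} {v₀ : V}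
    (hv₀ : v₀ ∈ bdry) (x : V) (b : Fin q) :
    q * ∑ σ, (if ∀ v ∈ bdry, σ v = b then dotq q (σ x) b * pottsBoltz gfst gsnd q β σ else 0)
      = Real.exp β ^ Fintype.card E *
          ∑ ω, if ∃ y ∈ bdry, conn gfst gsnd ω x y then rcW1 gfst gsnd bdry p q ω else 0 := by
  rw [mul_sum_pinned_mul_pottsBoltz gfst gsnd hv₀ (dotq q) dotq_perm,
    sum_pinned_mul_pottsBoltz gfst gsnd hq hp hβ hv₀]
  simp only [sum_ite_le_ker_dotq hq, connWSetoid_apply, connW_iff_exists_conn _ _ _ hv₀,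
    ← numCompW_eq_card_quotient, mul_ite, mul_zero, rcW1_eq]

theorem mul_sum_pinned_pottsBoltz (hq : 2 ≤ q) (hp : p < 1)
    (hβ : β = -(((q : ℝ) - 1) / (q : ℝ)) * Real.log (1 - p)) {bdry : Finset V} {v₀ : V}
    (hv₀ : v₀ ∈ bdry) (b : Fin q) :
    q * ∑ σ, (if ∀ v ∈ bdry, σ v = b then pottsBoltz gfst gsnd q β σ else 0)
      = Real.exp β ^ Fintype.card E * ∑ ω, rcW1 gfst gsnd bdry p q ω := by
  simpa only [one_mul, sum_pinned_mul_pottsBoltz gfst gsnd hq hp hβ hv₀ fun _ => 1,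
    sum_ite_le_ker_one, ← numCompW_eq_card_quotient, rcW1_eq]
    using mul_sum_pinned_mul_pottsBoltz gfst gsnd (β := β) hv₀ (fun _ _ => 1)
      (fun _ _ _ => rfl) v₀ b

end EdwardsSokal

variable {V E : Type} [Fintype V] [DecidableEq V] [Fintype E] [DecidableEq E]

/-- Edwards–Sokal correlation identities: (i) the free-boundary Potts two-point function
equals the free random-cluster connection probability, and (ii) the magnetization with
monochromatic boundary conditions equals the wired random-cluster probability of being
connected to the boundary, where `β = -((q-1)/q) log(1-p)`. -/
theorem edwards_sokal (gfst gsnd : E → V) (bdry : Finset V) (q : ℕ) (hq : 2 ≤ q)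
    (p β : ℝ) (hp : p ∈ Set.Ioo (0 : ℝ) 1)
    (hβ : β = -(((q : ℝ) - 1) / (q : ℝ)) * Real.log (1 - p)) :
    (∀ x y : V,
      (∑ σ : V → Fin q, dotq q (σ x) (σ y) * pottsBoltz gfst gsnd q β σ) /
          (∑ σ : V → Fin q, pottsBoltz gfst gsnd q β σ)
        = (∑ ω : E → Bool, if conn gfst gsnd ω x y then rcW0 gfst gsnd p q ω else 0) /
            (∑ ω : E → Bool, rcW0 gfst gsnd p q ω)) ∧
    (∀ b : Fin q, ∀ x : V,
      (∑ σ : V → Fin q,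
          if ∀ v ∈ bdry, σ v = b then dotq q (σ x) b * pottsBoltz gfst gsnd q β σ else 0) /
          (∑ σ : V → Fin q,
            if ∀ v ∈ bdry, σ v = b then pottsBoltz gfst gsnd q β σ else 0)
        = (∑ ω : E → Bool,
            if ∃ y ∈ bdry, conn gfst gsnd ω x y then rcW1 gfst gsnd bdry p q ω else 0) /
            (∑ ω : E → Bool, rcW1 gfst gsnd bdry p q ω)) := by
  have hC : Real.exp β ^ Fintype.card E ≠ 0 := by positivity
  refine ⟨fun x y => ?_, fun b x => ?_⟩
  · rw [sum_dotq_mul_pottsBoltz gfst gsnd hq hp.2 hβ, sum_pottsBoltz gfst gsnd hq hp.2 hβ,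
      mul_div_mul_left _ _ hC]
  rcases bdry.eq_empty_or_nonempty with rfl | ⟨v₀, hv₀⟩
  · simp [sum_dotq_const_mul_pottsBoltz gfst gsnd hq]
  have hq0 : (q : ℝ) ≠ 0 := by positivity
  rw [← mul_div_mul_left _ _ hq0, mul_sum_pinned_dotq_mul_pottsBoltz gfst gsnd hq hp.2 hβ hv₀,
    mul_sum_pinned_pottsBoltz gfst gsnd hq hp.2 hβ hv₀, mul_div_mul_left _ _ hC]

end Stmt3
end

section
/- Second Griffiths inequality. Let G=(V,E) be a finite graph and β ≥ 0. For all A, B ⊆ V, the Ising model with free boundary conditions satisfies μ_{G,β}[σ_A σ_B] ≥ μ_{G,β}[σ_A] · μ_{G,β}[σ_B]. -/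
open scoped BigOperators Classical

namespace Stmt5

variable {V E : Type} [Fintype V] [DecidableEq V] [Fintype E]

/-- The real value of a Boolean spin: `true ↦ +1`, `false ↦ -1`. -/
noncomputable def sgn (b : Bool) : ℝ := if b then 1 else -1

/-- `σ_A = ∏_{x ∈ A} σ_x`. -/
noncomputable def corr (A : Finset V) (σ : V → Bool) : ℝ := ∏ x ∈ A, sgn (σ x)

/-- Boltzmann weight `exp(-β H_G(σ)) = exp(β ∑_{xy∈E} σ_x σ_y)`. -/
noncomputable def boltz (gfst gsnd : E → V) (β : ℝ) (σ : V → Bool) : ℝ :=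
  Real.exp (β * ∑ e : E, sgn (σ (gfst e)) * sgn (σ (gsnd e)))

/-!
Ginibre's duplicate-variable argument. Write `Z² (⟨σ_A σ_B⟩ - ⟨σ_A⟩⟨σ_B⟩)` as a sum over pairs of
configurations `(σ, σ')` and substitute `σ' = σ τ` (site-wise product). Since
`σ_x σ_y + σ_x σ_y τ_x τ_y = (1 + τ_x τ_y) σ_x σ_y`, for fixed `τ` the sum over `σ` is the
numerator of `⟨σ_A σ_B⟩` in an Ising model with the nonnegative couplings `β (1 + τ_x τ_y)`,
weighted by `1 - τ_B ≥ 0`. That numerator is nonnegative by the first Griffiths inequality, which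
follows from the high-temperature expansion `exp (K s) = cosh K + s sinh K` for `s = ±1`:
it reduces everything to sums `∑_σ ∏ σ_{x_i}`, which vanish or equal `2^|V|`.
-/

set_option linter.unusedSectionVars false

noncomputable def boltzCoupling (gfst gsnd : E → V) (K : E → ℝ) (σ : V → Bool) : ℝ :=
  Real.exp (∑ e : E, K e * (sgn (σ (gfst e)) * sgn (σ (gsnd e))))

lemma sgn_beq (a b : Bool) : sgn (a == b) = sgn a * sgn b := by
  cases a <;> cases b <;> simp [sgn]

lemma abs_sgn (b : Bool) : |sgn b| = 1 := by
  cases b <;> simp [sgn]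

lemma corr_le_one (A : Finset V) (σ : V → Bool) : corr A σ ≤ 1 := by
  refine (le_abs_self _).trans_eq ?_
  simp [corr, Finset.abs_prod, abs_sgn]

lemma corr_beq (A : Finset V) (σ τ : V → Bool) :
    corr A (fun x => σ x == τ x) = corr A σ * corr A τ := by
  simp [corr, sgn_beq, Finset.prod_mul_distrib]

lemma corr_mul_corr (A B : Finset V) (σ : V → Bool) :
    corr A σ * corr B σ = ∏ i ∈ A.disjSum B, sgn (σ (Sum.elim id id i)) := by
  simp [corr, Finset.prod_disjSum]

lemma sum_sgn_pow_nonneg (n : ℕ) : 0 ≤ ∑ b : Bool, sgn b ^ n := by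
  rcases neg_one_pow_eq_or ℝ n with h | h <;> simp [sgn, h]

lemma sum_prod_sgn_nonneg {ι : Type} (s : Finset ι) (v : ι → V) :
    0 ≤ ∑ σ : V → Bool, ∏ i ∈ s, sgn (σ (v i)) := by
  have hfiber : ∀ σ : V → Bool,
      ∏ i ∈ s, sgn (σ (v i)) = ∏ x, sgn (σ x) ^ (s.filter fun i => v i = x).card := fun σ => by
    rw [← Finset.prod_fiberwise' s v (fun x => sgn (σ x))]
    simp
  simp only [hfiber, ← Fintype.prod_sum (fun x b => sgn b ^ (s.filter fun i => v i = x).card)]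
  exact Finset.prod_nonneg fun x _ => sum_sgn_pow_nonneg _

lemma exp_mul_sgn_mul_sgn (K : ℝ) (a b : Bool) :
    Real.exp (K * (sgn a * sgn b)) = Real.sinh K * (sgn a * sgn b) + Real.cosh K := by
  cases a <;> cases b <;> simp [sgn, ← Real.cosh_sub_sinh, Real.sinh_add_cosh] <;> ring

lemma boltzCoupling_eq_sum (gfst gsnd : E → V) (K : E → ℝ) (σ : V → Bool) :
    boltzCoupling gfst gsnd K σ =
      ∑ F : Finset E, ((∏ e ∈ F, Real.sinh (K e)) * ∏ e ∈ Fᶜ, Real.cosh (K e)) *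
        ∏ e ∈ F, sgn (σ (gfst e)) * sgn (σ (gsnd e)) := by
  simp only [boltzCoupling, Real.exp_sum, exp_mul_sgn_mul_sgn, Fintype.prod_add,
    Finset.prod_mul_distrib]
  exact Finset.sum_congr rfl fun F _ => by ring

theorem sum_prod_sgn_mul_boltzCoupling_nonneg (gfst gsnd : E → V) {K : E → ℝ}
    (hK : ∀ e, 0 ≤ K e) {ι : Type} (s : Finset ι) (v : ι → V) :
    0 ≤ ∑ σ : V → Bool, (∏ i ∈ s, sgn (σ (v i))) * boltzCoupling gfst gsnd K σ := by
  simp only [boltzCoupling_eq_sum, Finset.mul_sum]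
  rw [Finset.sum_comm]
  refine Finset.sum_nonneg fun F _ => ?_
  have hweight : 0 ≤ (∏ e ∈ F, Real.sinh (K e)) * ∏ e ∈ Fᶜ, Real.cosh (K e) :=
    mul_nonneg (Finset.prod_nonneg fun e _ => Real.sinh_nonneg_iff.mpr (hK e))
      (Finset.prod_nonneg fun e _ => (Real.cosh_pos _).le)
  have hmoment := sum_prod_sgn_nonneg (s.disjSum (F.disjSum F))
    (Sum.elim v (Sum.elim gfst gsnd))
  simp only [Finset.prod_disjSum, Sum.elim_inl, Sum.elim_inr] at hmoment
  calc (0 : ℝ) ≤ ((∏ e ∈ F, Real.sinh (K e)) * ∏ e ∈ Fᶜ, Real.cosh (K e)) *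
        ∑ σ : V → Bool, (∏ i ∈ s, sgn (σ (v i))) *
          ((∏ e ∈ F, sgn (σ (gfst e))) * ∏ e ∈ F, sgn (σ (gsnd e))) :=
        mul_nonneg hweight hmoment
    _ = _ := by
        rw [Finset.mul_sum]
        exact Finset.sum_congr rfl fun σ _ => by rw [Finset.prod_mul_distrib]; ring

lemma boltz_mul_boltz_beq (gfst gsnd : E → V) (β : ℝ) (σ τ : V → Bool) :
    boltz gfst gsnd β σ * boltz gfst gsnd β (fun x => σ x == τ x) =
      boltzCoupling gfst gsnd
        (fun e => β * (1 + sgn (τ (gfst e)) * sgn (τ (gsnd e)))) σ := by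
  rw [boltz, boltz, boltzCoupling, ← Real.exp_add, Finset.mul_sum, Finset.mul_sum,
    ← Finset.sum_add_distrib]
  simp only [sgn_beq]
  exact congrArg Real.exp (Finset.sum_congr rfl fun e _ => by ring)

/-- Duplicate-variable identity: the second sum is reindexed by `σ' = σ τ`. -/
lemma sum_mul_sum_boltz (gfst gsnd : E → V) (β : ℝ) (f g : (V → Bool) → ℝ) :
    (∑ σ, f σ * boltz gfst gsnd β σ) * (∑ σ', g σ' * boltz gfst gsnd β σ') =
      ∑ τ : V → Bool, ∑ σ, f σ * g (fun x => σ x == τ x) * boltzCoupling gfst gsnd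
        (fun e => β * (1 + sgn (τ (gfst e)) * sgn (τ (gsnd e)))) σ := by
  have hinv : ∀ σ : V → Bool, Function.Involutive fun τ : V → Bool => fun x => σ x == τ x :=
    fun σ τ => funext fun x => by
      show (σ x == (σ x == τ x)) = τ x
      cases σ x <;> cases τ x <;> rfl
  rw [Finset.sum_mul_sum]
  conv_rhs => rw [Finset.sum_comm]
  refine Finset.sum_congr rfl fun σ _ => ?_
  rw [← Equiv.sum_comp (hinv σ).toPerm]
  refine Finset.sum_congr rfl fun τ _ => ?_
  rw [Function.Involutive.coe_toPerm, ← boltz_mul_boltz_beq]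
  ring

lemma sum_corr_mul_sum_corr_le (gfst gsnd : E → V) {β : ℝ} (hβ : 0 ≤ β) (A B : Finset V) :
    (∑ σ, corr A σ * boltz gfst gsnd β σ) * (∑ σ, corr B σ * boltz gfst gsnd β σ) ≤
      (∑ σ, corr A σ * corr B σ * boltz gfst gsnd β σ) * ∑ σ, 1 * boltz gfst gsnd β σ := by
  rw [sum_mul_sum_boltz, sum_mul_sum_boltz]
  refine Finset.sum_le_sum fun τ _ => ?_
  have hK : ∀ e, 0 ≤ β * (1 + sgn (τ (gfst e)) * sgn (τ (gsnd e))) := fun e => by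
    refine mul_nonneg hβ ?_
    cases τ (gfst e) <;> cases τ (gsnd e) <;> norm_num [sgn]
  have hpos := sum_prod_sgn_mul_boltzCoupling_nonneg gfst gsnd hK (A.disjSum B) (Sum.elim id id)
  simp only [← corr_mul_corr] at hpos
  simp only [corr_beq, mul_one]
  calc _ = corr B τ * ∑ σ, corr A σ * corr B σ * boltzCoupling gfst gsnd
          (fun e => β * (1 + sgn (τ (gfst e)) * sgn (τ (gsnd e)))) σ := by
        rw [Finset.mul_sum]
        exact Finset.sum_congr rfl fun σ _ => by ring
    _ ≤ _ := mul_le_of_le_one_left hpos (corr_le_one B τ)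

/-- Second Griffiths inequality: `μ_{G,β}[σ_A σ_B] ≥ μ_{G,β}[σ_A] μ_{G,β}[σ_B]`
for the Ising model with free boundary conditions. -/
theorem griffiths_second (gfst gsnd : E → V) (β : ℝ) (hβ : 0 ≤ β) (A B : Finset V) :
    ((∑ σ : V → Bool, corr A σ * boltz gfst gsnd β σ) /
        (∑ σ : V → Bool, boltz gfst gsnd β σ)) *
      ((∑ σ : V → Bool, corr B σ * boltz gfst gsnd β σ) /
        (∑ σ : V → Bool, boltz gfst gsnd β σ))
      ≤ (∑ σ : V → Bool, corr A σ * corr B σ * boltz gfst gsnd β σ) /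
          (∑ σ : V → Bool, boltz gfst gsnd β σ) := by
  have hZ : 0 < ∑ σ : V → Bool, boltz gfst gsnd β σ :=
    Finset.sum_pos (fun σ _ => Real.exp_pos _) Finset.univ_nonempty
  have key := sum_corr_mul_sum_corr_le gfst gsnd hβ A B
  simp only [one_mul] at key
  rw [div_mul_div_comm, div_le_div_iff₀ (mul_pos hZ hZ) hZ]
  nlinarith

end Stmt5
end

section
/- Monotone-coupling criterion for stochastic domination (Holley-type lemma). Let E be a finite set and let μ, ν be strictly positive probability measures on {0,1}^E such that for every e ∈ E and all ψ, ψ' ∈ {0,1}^{E∖{e}} with ψ ≤ ψ' coordinatewise, one has μ[ω_e = 1 | ω|_{E∖{e}} = ψ] ≤ ν[ω_e = 1 | ω|_{E∖{e}} = ψ']. Then there exists a probability measure P on {0,1}^E × {0,1}^E whose first marginal is μ, whose second marginal is ν, and such that P[{(ω, ω̃) : ω ≤ ω̃ coordinatewise}] = 1. In particular, μ[A] ≤ ν[A] for every increasing event A. -/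
/-!
Coupled heat-bath dynamics. At a site `e`, resample the two spins at `e` jointly from the monotone
coupling of the two conditional Bernoulli laws given the rest of each configuration. This step
preserves both marginals, since each heat-bath step leaves its own measure invariant. By the
hypothesis, it also keeps every ordered pair ordered. Let `ε > 0` be a lower bound for all the
single-site conditional probabilities of `true`. If a sweep runs over all sites, then with
probability at least `ε ^ |E|` it sets both configurations to all-`true`. So a sweep shrinks the
mass of the non-ordered pairs by the factor `1 - ε ^ |E|`. A coupling that minimises this mass over
the compact set of couplings therefore gives it zero mass. Such a coupling is supported on
`ω ≤ τ`, and this gives the inequality `μ A ≤ ν A` for increasing events `A`.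
-/

open scoped BigOperators Classical

open Function Finset Matrix

namespace Stmt6

theorem exists_mem_eq_zero_of_le_mul {α : Type*} [TopologicalSpace α] {s : Set α}
    (hs : IsCompact s) (hne : s.Nonempty) {f : α → ℝ} (hf : ContinuousOn f s)
    (hf0 : ∀ x ∈ s, 0 ≤ f x) {U : α → α} (hU : Set.MapsTo U s s) {c : ℝ} (hc : c < 1)
    (hfU : ∀ x ∈ s, f (U x) ≤ c * f x) : ∃ x ∈ s, f x = 0 := by
  obtain ⟨x, hx, hmin⟩ := hs.exists_isMinOn hne hf
  have hle : f x ≤ c * f x := (hmin (hU hx)).trans (hfU x hx)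
  exact ⟨x, hx, le_antisymm (by nlinarith [hf0 x hx]) (hf0 x hx)⟩

theorem exists_pos_le_one_forall_le {ι : Type*} [Finite ι] {f : ι → ℝ} (hf : ∀ i, 0 < f i) :
    ∃ ε, 0 < ε ∧ ε ≤ 1 ∧ ∀ i, ε ≤ f i := by
  rcases isEmpty_or_nonempty ι with hι | hι
  · exact ⟨1, one_pos, le_rfl, isEmptyElim⟩
  · obtain ⟨i₀, hi₀⟩ := Finite.exists_min f
    exact ⟨min (f i₀) 1, lt_min (hf i₀) one_pos, min_le_right _ _,
      fun i => (min_le_left _ _).trans (hi₀ i)⟩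

theorem sum_sum_update_comm {ι α M : Type*} [Fintype ι] [DecidableEq ι] [Fintype α]
    [AddCommMonoid M] (i : ι) (F : (ι → α) → (ι → α) → M) :
    ∑ x, ∑ a, F x (update x i a) = ∑ x, ∑ a, F (update x i a) x := by
  simp only [← Fintype.sum_prod_type']
  have hσ : Involutive fun p : (ι → α) × α => (update p.1 i p.2, p.1 i) := fun p => by simp
  exact Fintype.sum_bijective _ hσ.bijective _ _ fun p => by simp

section Kernel

variable {X : Type*} [Fintype X]

theorem sum_mul_ite_mem [DecidableEq X] (P : X → ℝ) (S : Finset X) :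
    ∑ x, P x * (if x ∈ S then 1 else 0) = ∑ x ∈ S, P x := by
  simp only [mul_ite, mul_one, mul_zero, sum_ite_mem, univ_inter]

theorem sum_mul_le_sum_vecMul {P : X → ℝ} (hP : ∀ x, 0 ≤ P x) {K : Matrix X X ℝ} {w : X → ℝ}
    {S : Finset X} (hw : ∀ x, w x ≤ ∑ y ∈ S, K x y) :
    ∑ x, P x * w x ≤ ∑ y ∈ S, (P ᵥ* K) y := by
  simp only [Matrix.vecMul, dotProduct]
  rw [sum_comm]
  simp only [← mul_sum]
  exact sum_le_sum fun x _ => mul_le_mul_of_nonneg_left (hw x) (hP x)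

end Kernel

section Coupling

variable {X Y : Type*} [Fintype X] [Fintype Y]

structure IsCoupling (μ : X → ℝ) (ν : Y → ℝ) (P : X × Y → ℝ) : Prop where
  nonneg : ∀ z, 0 ≤ P z
  sum_snd : ∀ x, ∑ y, P (x, y) = μ x
  sum_fst : ∀ y, ∑ x, P (x, y) = ν y

variable {μ : X → ℝ} {ν : Y → ℝ} {P : X × Y → ℝ}

theorem isCoupling_mul (hμ : ∀ x, 0 ≤ μ x) (hν : ∀ y, 0 ≤ ν y) (hμ1 : ∑ x, μ x = 1)
    (hν1 : ∑ y, ν y = 1) : IsCoupling μ ν (fun z => μ z.1 * ν z.2) where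
  nonneg z := mul_nonneg (hμ z.1) (hν z.2)
  sum_snd x := by simp only [← mul_sum, hν1, mul_one]
  sum_fst y := by simp only [← sum_mul, hμ1, one_mul]

theorem IsCoupling.sum_eq (hP : IsCoupling μ ν P) : ∑ z, P z = ∑ x, μ x := by
  rw [Fintype.sum_prod_type]
  exact sum_congr rfl fun x _ => hP.sum_snd x

theorem isCompact_setOf_isCoupling (μ : X → ℝ) (ν : Y → ℝ) :
    IsCompact {P | IsCoupling μ ν P} := by
  have hbox : IsCompact (Set.univ.pi fun z : X × Y => Set.Icc 0 (μ z.1)) :=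
    isCompact_univ_pi fun _ => isCompact_Icc
  refine hbox.of_isClosed_subset ?_ fun P hP => Set.mem_univ_pi.2 fun z =>
    ⟨hP.nonneg z, hP.sum_snd z.1 ▸ single_le_sum (fun y _ => hP.nonneg (z.1, y)) (mem_univ z.2)⟩
  have hset : {P | IsCoupling μ ν P} = (⋂ z, {P : X × Y → ℝ | 0 ≤ P z}) ∩
      (⋂ x, {P | ∑ y, P (x, y) = μ x}) ∩ ⋂ y, {P | ∑ x, P (x, y) = ν y} := by
    ext P
    simp only [Set.mem_ofPred_eq, Set.mem_inter_iff, Set.mem_iInter]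
    exact ⟨fun h => ⟨⟨h.nonneg, h.sum_snd⟩, h.sum_fst⟩, fun h => ⟨h.1.1, h.1.2, h.2⟩⟩
  rw [hset]
  refine ((isClosed_iInter fun z => isClosed_le continuous_const (continuous_apply z)).inter
    (isClosed_iInter fun x => isClosed_eq ?_ continuous_const)).inter
    (isClosed_iInter fun y => isClosed_eq ?_ continuous_const) <;>
  exact continuous_finsetSum _ fun _ _ => continuous_apply _

theorem IsCoupling.vecMul (hP : IsCoupling μ ν P) {K : Matrix (X × Y) (X × Y) ℝ}
    {G : Matrix X X ℝ} {H : Matrix Y Y ℝ} (hK : ∀ z z', 0 ≤ K z z')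
    (hKG : ∀ z x', ∑ y', K z (x', y') = G z.1 x') (hKH : ∀ z y', ∑ x', K z (x', y') = H z.2 y')
    (hG : μ ᵥ* G = μ) (hH : ν ᵥ* H = ν) : IsCoupling μ ν (P ᵥ* K) where
  nonneg z' := sum_nonneg fun z _ => mul_nonneg (hP.nonneg z) (hK z z')
  sum_snd x' := by
    simp only [Matrix.vecMul, dotProduct]
    rw [sum_comm]
    simp only [← mul_sum, hKG, Fintype.sum_prod_type, ← sum_mul, hP.sum_snd]
    exact congrFun hG x'
  sum_fst y' := by
    simp only [Matrix.vecMul, dotProduct]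
    rw [sum_comm]
    simp only [← mul_sum, hKH]
    rw [Fintype.sum_prod_type, sum_comm]
    simp only [← sum_mul, hP.sum_fst]
    exact congrFun hH y'

theorem IsCoupling.sum_le_sum_of_isUpperSet [LE X] {μ ν : X → ℝ} {P : X × X → ℝ}
    (hP : IsCoupling μ ν P) (hle : ∀ z, P z ≠ 0 → z.1 ≤ z.2) {A : Set X} (hA : IsUpperSet A) :
    ∑ x ∈ univ.filter (· ∈ A), μ x ≤ ∑ x ∈ univ.filter (· ∈ A), ν x := by
  simp only [sum_filter, ← hP.sum_snd, ← hP.sum_fst]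
  calc ∑ x, (if x ∈ A then ∑ y, P (x, y) else 0)
      = ∑ z, if z.1 ∈ A then P z else 0 := by
        rw [Fintype.sum_prod_type]
        exact sum_congr rfl fun x _ => by split_ifs <;> simp
    _ ≤ ∑ z, if z.2 ∈ A then P z else 0 := by
        refine sum_le_sum fun z _ => ?_
        by_cases hz : P z = 0
        · simp [hz]
        · split_ifs with h1 h2
          exacts [le_rfl, absurd (hA (hle z hz) h1) h2, hP.nonneg z, le_rfl]
    _ = ∑ y, (if y ∈ A then ∑ x, P (x, y) else 0) := by
        rw [Fintype.sum_prod_type, sum_comm]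
        exact sum_congr rfl fun y _ => by split_ifs <;> simp

end Coupling

section BernoulliCoupling

/-- The monotone coupling of the Bernoulli laws with parameters `p` and `q`. -/
noncomputable def bernoulliCoupling (p q : ℝ) : Bool → Bool → ℝ
  | true, true => min p q
  | true, false => p - min p q
  | false, true => q - min p q
  | false, false => 1 - max p q

variable {p q : ℝ}

theorem bernoulliCoupling_nonneg (hp : 0 ≤ p) (hq : 0 ≤ q) (hp1 : p ≤ 1) (hq1 : q ≤ 1)
    (b c : Bool) : 0 ≤ bernoulliCoupling p q b c := by
  cases b <;> cases c <;> simp only [bernoulliCoupling, sub_nonneg]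
  exacts [max_le hp1 hq1, min_le_right p q, min_le_left p q, le_min hp hq]

theorem bernoulliCoupling_comm (p q : ℝ) (b c : Bool) :
    bernoulliCoupling p q b c = bernoulliCoupling q p c b := by
  cases b <;> cases c <;> simp only [bernoulliCoupling, min_comm, max_comm]

theorem sum_bernoulliCoupling_right (p q : ℝ) (b : Bool) :
    ∑ c, bernoulliCoupling p q b c = bif b then p else 1 - p := by
  cases b <;> simp only [Fintype.sum_bool, bernoulliCoupling, cond_true, cond_false]
  · linarith [min_add_max p q]
  · ring

theorem sum_sum_bernoulliCoupling (p q : ℝ) : ∑ b, ∑ c, bernoulliCoupling p q b c = 1 := by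
  simp only [sum_bernoulliCoupling_right]
  simp only [Fintype.sum_bool, cond_true, cond_false]
  ring

theorem le_of_bernoulliCoupling_ne_zero (hpq : p ≤ q) {b c : Bool}
    (h : bernoulliCoupling p q b c ≠ 0) : b ≤ c := by
  cases b <;> cases c <;> simp_all [bernoulliCoupling]

end BernoulliCoupling

section CondProb

variable {E : Type*} [DecidableEq E] {μ ν : (E → Bool) → ℝ}

noncomputable def condProbTrue (μ : (E → Bool) → ℝ) (e : E) (ω : E → Bool) : ℝ :=
  μ (update ω e true) / (μ (update ω e true) + μ (update ω e false))

def CondProbDominated (μ ν : (E → Bool) → ℝ) : Prop :=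
  ∀ e ω τ, (∀ f, f ≠ e → ω f ≤ τ f) → condProbTrue μ e ω ≤ condProbTrue ν e τ

theorem condProbTrue_pos (hμ : ∀ ω, 0 < μ ω) (e : E) (ω : E → Bool) :
    0 < condProbTrue μ e ω :=
  div_pos (hμ _) (add_pos (hμ _) (hμ _))

theorem condProbTrue_lt_one (hμ : ∀ ω, 0 < μ ω) (e : E) (ω : E → Bool) :
    condProbTrue μ e ω < 1 :=
  (div_lt_one (add_pos (hμ _) (hμ _))).2 (lt_add_of_pos_right _ (hμ _))

theorem cond_condProbTrue (hμ : ∀ ω, 0 < μ ω) (e : E) (ω : E → Bool) (b : Bool) :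
    (bif b then condProbTrue μ e ω else 1 - condProbTrue μ e ω)
      = μ (update ω e b) / (μ (update ω e true) + μ (update ω e false)) := by
  have hZ := add_pos (hμ (update ω e true)) (hμ (update ω e false))
  cases b
  · simp only [cond_false, condProbTrue]
    field_simp
    ring
  · rfl

theorem bernoulliCoupling_condProbTrue_nonneg (hμ : ∀ ω, 0 < μ ω) (hν : ∀ ω, 0 < ν ω) (e : E)
    (ω τ : E → Bool) (b c : Bool) :
    0 ≤ bernoulliCoupling (condProbTrue μ e ω) (condProbTrue ν e τ) b c :=
  bernoulliCoupling_nonneg (condProbTrue_pos hμ e ω).le (condProbTrue_pos hν e τ).le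
    (condProbTrue_lt_one hμ e ω).le (condProbTrue_lt_one hν e τ).le b c

end CondProb

section HeatBath

variable {E : Type*} [Fintype E] [DecidableEq E] {μ ν : (E → Bool) → ℝ}

noncomputable def heatBath (μ : (E → Bool) → ℝ) (e : E) : Matrix (E → Bool) (E → Bool) ℝ :=
  fun ω ω' => ∑ b, if update ω e b = ω' then
    (bif b then condProbTrue μ e ω else 1 - condProbTrue μ e ω) else 0

theorem vecMul_heatBath (hμ : ∀ ω, 0 < μ ω) (e : E) : μ ᵥ* heatBath μ e = μ := by
  funext ω'
  let Z : (E → Bool) → ℝ := fun ω => μ (update ω e true) + μ (update ω e false)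
  have hZ : ∀ ω b, Z (update ω e b) = Z ω := fun ω b => by simp only [Z, update_idem]
  calc (μ ᵥ* heatBath μ e) ω'
      = ∑ ω, ∑ b, (fun x y => if y = ω' then μ x * μ y / Z x else 0) ω (update ω e b) := by
        simp only [Matrix.vecMul, dotProduct, heatBath, mul_sum, cond_condProbTrue hμ]
        refine sum_congr rfl fun ω _ => sum_congr rfl fun b _ => ?_
        split_ifs with h <;> simp [Z, h, mul_div_assoc]
    _ = ∑ b, μ (update ω' e b) * μ ω' / Z ω' := by
        rw [sum_sum_update_comm e (fun x y => if y = ω' then μ x * μ y / Z x else 0)]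
        simp [hZ]
    _ = μ ω' := by
        rw [← sum_div, ← sum_mul, Fintype.sum_bool]
        exact mul_div_cancel_left₀ _ (add_pos (hμ _) (hμ _)).ne'

noncomputable def coupledHeatBath (μ ν : (E → Bool) → ℝ) (e : E) :
    Matrix ((E → Bool) × (E → Bool)) ((E → Bool) × (E → Bool)) ℝ :=
  fun z z' => ∑ b, ∑ c, if (update z.1 e b, update z.2 e c) = z' then
    bernoulliCoupling (condProbTrue μ e z.1) (condProbTrue ν e z.2) b c else 0

theorem sum_coupledHeatBath (μ ν : (E → Bool) → ℝ) (e : E) (z : (E → Bool) × (E → Bool))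
    (S : Finset ((E → Bool) × (E → Bool))) :
    ∑ z' ∈ S, coupledHeatBath μ ν e z z' = ∑ b, ∑ c, if (update z.1 e b, update z.2 e c) ∈ S
      then bernoulliCoupling (condProbTrue μ e z.1) (condProbTrue ν e z.2) b c else 0 := by
  simp only [coupledHeatBath]
  rw [sum_comm]
  refine sum_congr rfl fun b _ => ?_
  rw [sum_comm]
  exact sum_congr rfl fun c _ => sum_ite_eq _ _ _

theorem coupledHeatBath_nonneg (hμ : ∀ ω, 0 < μ ω) (hν : ∀ ω, 0 < ν ω) (e : E)
    (z z' : (E → Bool) × (E → Bool)) : 0 ≤ coupledHeatBath μ ν e z z' :=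
  sum_nonneg fun b _ => sum_nonneg fun c _ =>
    ite_nonneg (bernoulliCoupling_condProbTrue_nonneg hμ hν e _ _ b c) le_rfl

theorem sum_snd_coupledHeatBath (μ ν : (E → Bool) → ℝ) (e : E) (z : (E → Bool) × (E → Bool))
    (ω' : E → Bool) : ∑ τ', coupledHeatBath μ ν e z (ω', τ') = heatBath μ e z.1 ω' := by
  simp only [coupledHeatBath, heatBath, Prod.mk.injEq, ite_and, ← sum_bernoulliCoupling_right
    (condProbTrue μ e z.1) (condProbTrue ν e z.2)]
  rw [sum_comm]
  refine sum_congr rfl fun b _ => ?_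
  rw [sum_comm]
  by_cases h : update z.1 e b = ω' <;> simp [h]

theorem coupledHeatBath_swap (μ ν : (E → Bool) → ℝ) (e : E) (z z' : (E → Bool) × (E → Bool)) :
    coupledHeatBath μ ν e z z' = coupledHeatBath ν μ e z.swap z'.swap := by
  simp only [coupledHeatBath, Prod.fst_swap, Prod.snd_swap, Prod.ext_iff, bernoulliCoupling_comm
    (condProbTrue μ e z.1)]
  rw [sum_comm]
  exact sum_congr rfl fun c _ => sum_congr rfl fun b _ => by simp only [and_comm]

theorem sum_fst_coupledHeatBath (μ ν : (E → Bool) → ℝ) (e : E) (z : (E → Bool) × (E → Bool))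
    (τ' : E → Bool) : ∑ ω', coupledHeatBath μ ν e z (ω', τ') = heatBath ν e z.2 τ' := by
  simp only [coupledHeatBath_swap μ ν e z, Prod.swap_prod_mk, sum_snd_coupledHeatBath,
    Prod.fst_swap]

noncomputable def orderedPairs : Finset ((E → Bool) × (E → Bool)) :=
  univ.filter fun z => z.1 ≤ z.2

/-- After a sweep over the sites of `l`, this set carries, besides the ordered mass, at least the
fraction `ε ^ l.length` of the non-ordered mass. -/
noncomputable def orderedOrTrueOn (l : List E) : Finset ((E → Bool) × (E → Bool)) :=
  univ.filter fun z => z.1 ≤ z.2 ∨ ∀ i ∈ l, z.1 i = true ∧ z.2 i = true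

@[simp]
theorem mem_orderedPairs {z : (E → Bool) × (E → Bool)} : z ∈ orderedPairs ↔ z.1 ≤ z.2 := by
  simp [orderedPairs]

@[simp]
theorem mem_orderedOrTrueOn {l : List E} {z : (E → Bool) × (E → Bool)} :
    z ∈ orderedOrTrueOn l ↔ z.1 ≤ z.2 ∨ ∀ i ∈ l, z.1 i = true ∧ z.2 i = true := by
  simp [orderedOrTrueOn]

theorem orderedOrTrueOn_nil : orderedOrTrueOn ([] : List E) = univ := by
  simp [orderedOrTrueOn]

theorem orderedOrTrueOn_univ : orderedOrTrueOn (univ : Finset E).toList = orderedPairs := by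
  ext z
  simp only [mem_orderedOrTrueOn, mem_orderedPairs, mem_toList, mem_univ, forall_const,
    or_iff_left_iff_imp]
  intro h i
  rw [(h i).1, (h i).2]

theorem sum_coupledHeatBath_eq_one (hdom : CondProbDominated μ ν) (e : E)
    {z : (E → Bool) × (E → Bool)} (hz : z.1 ≤ z.2) {S : Finset ((E → Bool) × (E → Bool))}
    (hS : ∀ z' : (E → Bool) × (E → Bool), z'.1 ≤ z'.2 → z' ∈ S) :
    ∑ z' ∈ S, coupledHeatBath μ ν e z z' = 1 := by
  have hpq := hdom e z.1 z.2 fun f _ => hz f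
  rw [sum_coupledHeatBath,
    ← sum_sum_bernoulliCoupling (condProbTrue μ e z.1) (condProbTrue ν e z.2)]
  refine sum_congr rfl fun b _ => sum_congr rfl fun c _ => ?_
  by_cases hbc : bernoulliCoupling (condProbTrue μ e z.1) (condProbTrue ν e z.2) b c = 0
  · simp [hbc]
  · exact if_pos (hS _ (update_le_update_iff.2
      ⟨le_of_bernoulliCoupling_ne_zero hpq hbc, fun f _ => hz f⟩))

theorem min_condProbTrue_le_sum_coupledHeatBath (hμ : ∀ ω, 0 < μ ω) (hν : ∀ ω, 0 < ν ω)
    (e : E) {l : List E} {z : (E → Bool) × (E → Bool)}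
    (hz : ∀ i ∈ l, z.1 i = true ∧ z.2 i = true) :
    min (condProbTrue μ e z.1) (condProbTrue ν e z.2)
      ≤ ∑ z' ∈ orderedOrTrueOn (e :: l), coupledHeatBath μ ν e z z' := by
  have hmem : (update z.1 e true, update z.2 e true) ∈ orderedOrTrueOn (e :: l) := by
    refine mem_orderedOrTrueOn.2 (Or.inr fun i hi => ?_)
    by_cases hie : i = e
    · simp [hie]
    · simpa [update_of_ne hie] using hz i ((List.mem_cons.1 hi).resolve_left hie)
  have hterm : ∀ b c, 0 ≤ if (update z.1 e b, update z.2 e c) ∈ orderedOrTrueOn (e :: l) then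
      bernoulliCoupling (condProbTrue μ e z.1) (condProbTrue ν e z.2) b c else 0 := fun b c =>
    ite_nonneg (bernoulliCoupling_condProbTrue_nonneg hμ hν e _ _ b c) le_rfl
  rw [sum_coupledHeatBath]
  calc min (condProbTrue μ e z.1) (condProbTrue ν e z.2)
      = if (update z.1 e true, update z.2 e true) ∈ orderedOrTrueOn (e :: l) then
          bernoulliCoupling (condProbTrue μ e z.1) (condProbTrue ν e z.2) true true else 0 :=
        (if_pos hmem).symm
    _ ≤ _ := single_le_sum (fun c _ => hterm true c) (mem_univ true)
    _ ≤ _ := single_le_sum (fun b _ => sum_nonneg fun c _ => hterm b c) (mem_univ true)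

theorem sum_orderedPairs_le_sum_vecMul (hμ : ∀ ω, 0 < μ ω) (hν : ∀ ω, 0 < ν ω)
    (hdom : CondProbDominated μ ν) (e : E) {P : (E → Bool) × (E → Bool) → ℝ}
    (hP : ∀ z, 0 ≤ P z) :
    ∑ z ∈ orderedPairs, P z ≤ ∑ z ∈ orderedPairs, (P ᵥ* coupledHeatBath μ ν e) z := by
  rw [← sum_mul_ite_mem]
  refine sum_mul_le_sum_vecMul hP fun z => ?_
  split_ifs with hz
  · exact (sum_coupledHeatBath_eq_one hdom e (mem_orderedPairs.1 hz)
      fun z' => mem_orderedPairs.2).ge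
  · exact sum_nonneg fun z' _ => coupledHeatBath_nonneg hμ hν e z z'

theorem sum_orderedOrTrueOn_cons_ge (hμ : ∀ ω, 0 < μ ω) (hν : ∀ ω, 0 < ν ω)
    (hdom : CondProbDominated μ ν) {ε : ℝ}
    (hε : ∀ e ω τ, ε ≤ min (condProbTrue μ e ω) (condProbTrue ν e τ)) (e : E) (l : List E)
    {P : (E → Bool) × (E → Bool) → ℝ} (hP : ∀ z, 0 ≤ P z) :
    (1 - ε) * ∑ z ∈ orderedPairs, P z + ε * ∑ z ∈ orderedOrTrueOn l, P z
      ≤ ∑ z ∈ orderedOrTrueOn (e :: l), (P ᵥ* coupledHeatBath μ ν e) z := by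
  calc (1 - ε) * ∑ z ∈ orderedPairs, P z + ε * ∑ z ∈ orderedOrTrueOn l, P z
      = ∑ z, P z * ((1 - ε) * (if z ∈ orderedPairs then 1 else 0)
          + ε * (if z ∈ orderedOrTrueOn l then 1 else 0)) := by
        rw [← sum_mul_ite_mem P orderedPairs, ← sum_mul_ite_mem P (orderedOrTrueOn l), mul_sum,
          mul_sum, ← sum_add_distrib]
        exact sum_congr rfl fun z _ => by ring
    _ ≤ _ := sum_mul_le_sum_vecMul hP fun z => ?_
  by_cases hz : z.1 ≤ z.2
  · rw [sum_coupledHeatBath_eq_one hdom e hz fun z' hz' => mem_orderedOrTrueOn.2 (Or.inl hz'),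
      if_pos (mem_orderedPairs.2 hz), if_pos (mem_orderedOrTrueOn.2 (Or.inl hz))]
    ring_nf
    exact le_rfl
  · rw [if_neg (mt mem_orderedPairs.1 hz), mul_zero, zero_add]
    split_ifs with hzl
    · rw [mul_one]
      exact (hε e z.1 z.2).trans (min_condProbTrue_le_sum_coupledHeatBath hμ hν e
        ((mem_orderedOrTrueOn.1 hzl).resolve_left hz))
    · rw [mul_zero]
      exact sum_nonneg fun z' _ => coupledHeatBath_nonneg hμ hν e z z'

end HeatBath

section Sweep

variable {E : Type*} [Fintype E] [DecidableEq E] {μ ν : (E → Bool) → ℝ}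

noncomputable def sweep (μ ν : (E → Bool) → ℝ) (l : List E) (P : (E → Bool) × (E → Bool) → ℝ) :
    (E → Bool) × (E → Bool) → ℝ :=
  l.foldr (fun e Q => Q ᵥ* coupledHeatBath μ ν e) P

theorem isCoupling_sweep (hμ : ∀ ω, 0 < μ ω) (hν : ∀ ω, 0 < ν ω)
    {P : (E → Bool) × (E → Bool) → ℝ} (hP : IsCoupling μ ν P) (l : List E) :
    IsCoupling μ ν (sweep μ ν l P) := by
  induction l with
  | nil => exact hP
  | cons e l ih =>
    exact ih.vecMul (coupledHeatBath_nonneg hμ hν e) (sum_snd_coupledHeatBath μ ν e)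
      (sum_fst_coupledHeatBath μ ν e) (vecMul_heatBath hμ e) (vecMul_heatBath hν e)

theorem sum_orderedPairs_le_sweep (hμ : ∀ ω, 0 < μ ω) (hν : ∀ ω, 0 < ν ω)
    (hdom : CondProbDominated μ ν) {P : (E → Bool) × (E → Bool) → ℝ} (hP : IsCoupling μ ν P)
    (l : List E) : ∑ z ∈ orderedPairs, P z ≤ ∑ z ∈ orderedPairs, sweep μ ν l P z := by
  induction l with
  | nil => exact le_rfl
  | cons e l ih =>
    exact ih.trans
      (sum_orderedPairs_le_sum_vecMul hμ hν hdom e (isCoupling_sweep hμ hν hP l).nonneg)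

theorem sum_orderedOrTrueOn_sweep_ge (hμ : ∀ ω, 0 < μ ω) (hν : ∀ ω, 0 < ν ω)
    (hdom : CondProbDominated μ ν) {ε : ℝ} (hε0 : 0 ≤ ε) (hε1 : ε ≤ 1)
    (hε : ∀ e ω τ, ε ≤ min (condProbTrue μ e ω) (condProbTrue ν e τ))
    {P : (E → Bool) × (E → Bool) → ℝ} (hP : IsCoupling μ ν P) (l : List E) :
    ∑ z ∈ orderedPairs, P z + ε ^ l.length * (∑ z, P z - ∑ z ∈ orderedPairs, P z)
      ≤ ∑ z ∈ orderedOrTrueOn l, sweep μ ν l P z := by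
  induction l with
  | nil =>
    simp only [List.length_nil, pow_zero, one_mul, orderedOrTrueOn_nil, sweep, List.foldr_nil]
    exact le_of_eq (by ring)
  | cons e l ih =>
    have hmono := sum_orderedPairs_le_sweep hμ hν hdom hP l
    have hstep := sum_orderedOrTrueOn_cons_ge hμ hν hdom hε e l
      (isCoupling_sweep hμ hν hP l).nonneg
    have h1 := mul_nonneg (sub_nonneg.2 hε1) (sub_nonneg.2 hmono)
    have h2 := mul_nonneg hε0 (sub_nonneg.2 ih)
    simp only [List.length_cons, pow_succ]
    refine le_trans ?_ hstep
    linarith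

theorem sum_compl_orderedPairs_sweep_le (hμ : ∀ ω, 0 < μ ω) (hν : ∀ ω, 0 < ν ω)
    (hdom : CondProbDominated μ ν) {ε : ℝ} (hε0 : 0 ≤ ε) (hε1 : ε ≤ 1)
    (hε : ∀ e ω τ, ε ≤ min (condProbTrue μ e ω) (condProbTrue ν e τ))
    {P : (E → Bool) × (E → Bool) → ℝ} (hP : IsCoupling μ ν P) :
    ∑ z ∈ orderedPairsᶜ, sweep μ ν (univ : Finset E).toList P z
      ≤ (1 - ε ^ Fintype.card E) * ∑ z ∈ orderedPairsᶜ, P z := by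
  have h := sum_orderedOrTrueOn_sweep_ge hμ hν hdom hε0 hε1 hε hP (univ : Finset E).toList
  rw [orderedOrTrueOn_univ, length_toList, card_univ] at h
  have hP' := sum_compl_add_sum orderedPairs P
  have hU := sum_compl_add_sum orderedPairs (sweep μ ν (univ : Finset E).toList P)
  rw [(isCoupling_sweep hμ hν hP _).sum_eq, ← hP.sum_eq] at hU
  have hbad : ∑ z, P z - ∑ z ∈ orderedPairs, P z = ∑ z ∈ orderedPairsᶜ, P z := by linarith
  rw [hbad] at h
  linarith

theorem exists_isCoupling_le (hμ : ∀ ω, 0 < μ ω) (hν : ∀ ω, 0 < ν ω)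
    (hμ1 : ∑ ω, μ ω = 1) (hν1 : ∑ ω, ν ω = 1) (hdom : CondProbDominated μ ν) :
    ∃ P, IsCoupling μ ν P ∧ ∀ z, P z ≠ 0 → z.1 ≤ z.2 := by
  obtain ⟨ε, hε0, hε1, hε⟩ := exists_pos_le_one_forall_le
    (f := fun i : E × (E → Bool) × (E → Bool) =>
      min (condProbTrue μ i.1 i.2.1) (condProbTrue ν i.1 i.2.2))
    fun i => lt_min (condProbTrue_pos hμ _ _) (condProbTrue_pos hν _ _)
  obtain ⟨P, hP, hbad⟩ := exists_mem_eq_zero_of_le_mul (isCompact_setOf_isCoupling μ ν)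
    ⟨_, isCoupling_mul (fun ω => (hμ ω).le) (fun ω => (hν ω).le) hμ1 hν1⟩
    (continuous_finsetSum _ fun z _ => continuous_apply z).continuousOn
    (fun P hP => sum_nonneg fun z _ => IsCoupling.nonneg hP z)
    (fun P hP => isCoupling_sweep hμ hν hP (univ : Finset E).toList)
    (sub_lt_self 1 (pow_pos hε0 (Fintype.card E)))
    (fun P hP => sum_compl_orderedPairs_sweep_le hμ hν hdom hε0.le hε1
      (fun e ω τ => hε (e, ω, τ)) hP)
  refine ⟨P, hP, fun z hz => ?_⟩
  by_contra hzle
  exact hz ((sum_eq_zero_iff_of_nonneg fun z _ => hP.nonneg z).1 hbad z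
    (mem_compl.2 (mt mem_orderedPairs.1 hzle)))

end Sweep

/-- Monotone-coupling criterion for stochastic domination (Holley-type lemma). -/
theorem holley_coupling {E : Type} [Fintype E] [DecidableEq E]
    (μ ν : (E → Bool) → ℝ)
    (hμpos : ∀ ω, 0 < μ ω) (hνpos : ∀ ω, 0 < ν ω)
    (hμ1 : ∑ ω : E → Bool, μ ω = 1) (hν1 : ∑ ω : E → Bool, ν ω = 1)
    (hcond : ∀ e : E, ∀ ω ω' : E → Bool, (∀ f : E, f ≠ e → ω f ≤ ω' f) →
      μ (Function.update ω e true) /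
          (μ (Function.update ω e true) + μ (Function.update ω e false))
        ≤ ν (Function.update ω' e true) /
            (ν (Function.update ω' e true) + ν (Function.update ω' e false))) :
    (∃ P : (E → Bool) → (E → Bool) → ℝ,
      (∀ ω τ, 0 ≤ P ω τ) ∧
      (∀ ω, (∑ τ : E → Bool, P ω τ) = μ ω) ∧
      (∀ τ, (∑ ω : E → Bool, P ω τ) = ν τ) ∧
      (∀ ω τ, P ω τ ≠ 0 → ∀ e : E, ω e ≤ τ e)) ∧
    (∀ A : Set (E → Bool),
      (∀ ω ω' : E → Bool, ω ∈ A → (∀ e : E, ω e ≤ ω' e) → ω' ∈ A) →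
      (∑ ω ∈ Finset.univ.filter (fun ω : E → Bool => ω ∈ A), μ ω)
        ≤ ∑ ω ∈ Finset.univ.filter (fun ω : E → Bool => ω ∈ A), ν ω) := by
  obtain ⟨P, hP, hle⟩ := exists_isCoupling_le hμpos hνpos hμ1 hν1 hcond
  exact ⟨⟨fun ω τ => P (ω, τ), fun ω τ => hP.nonneg (ω, τ), hP.sum_snd, hP.sum_fst,
    fun ω τ h => hle (ω, τ) h⟩,
    fun A hA => hP.sum_le_sum_of_isUpperSet hle fun ω ω' h hω => hA ω ω' hω h⟩

end Stmt6
end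

section
/- Positive association of the random-cluster model. Fix q ≥ 1, p ∈ [0,1], a finite graph G=(V,E) with distinguished boundary set ∂G ⊆ V, and boundary conditions ξ given by a partition of ∂G. Then: (CBC) for every increasing event A and every partition ξ' coarser than ξ, φ^{ξ'}_{G,p,q}[A] ≥ φ^ξ_{G,p,q}[A]; (MON) for every increasing event A and every p' ≥ p, φ^ξ_{G,p',q}[A] ≥ φ^ξ_{G,p,q}[A]; (FKG) for all increasing events A and B, φ^ξ_{G,p,q}[A ∩ B] ≥ φ^ξ_{G,p,q}[A] · φ^ξ_{G,p,q}[B]. -/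
/-!
All three inequalities follow from the four functions theorem (in the form of Holley's and of
the FKG inequality) once the random-cluster weights `w^ξ_p = rcW ξ p q` satisfy the lattice
condition
`w^ξ_p(a) w^ξ'_p'(b) ≤ w^ξ_p(a ⊓ b) w^ξ'_p'(a ⊔ b)` for `p ≤ p'` and `ξ'` coarser than `ξ`.
The edge factors satisfy it edge by edge, and since `q ≥ 1` the factor `q^k` reduces it to the
supermodularity `k^ξ(a) + k^ξ'(b) ≤ k^ξ'(a ⊔ b) + k^ξ(a ⊓ b)` of the number of clusters.
Opening an edge merges at most two clusters, and does so less often the more edges are open,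
which gives supermodularity for a single boundary condition. The coarser condition `ξ'` is then
realised as a configuration of extra open edges in the graph enlarged by all pairs of vertices.
-/

open scoped BigOperators Classical

namespace Stmt7

variable {V E : Type} [Fintype V] [DecidableEq V] [Fintype E] [DecidableEq E]

/-- Two vertices are adjacent in `ω` if some open edge joins them. -/
def adj (gfst gsnd : E → V) (ω : E → Bool) (x y : V) : Prop :=
  ∃ e : E, ω e = true ∧ ((gfst e = x ∧ gsnd e = y) ∨ (gfst e = y ∧ gsnd e = x))

/-- Two boundary vertices lie in the same block of the boundary partition `ξ`. -/
def sameBlock {bdry : Finset V} (ξ : Finpartition bdry) (x y : V) : Prop :=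
  ∃ P ∈ ξ.parts, x ∈ P ∧ y ∈ P

/-- Connectivity in `ω^ξ`: open paths, with each block of `ξ` identified to a point. -/
def connBC (gfst gsnd : E → V) {bdry : Finset V} (ξ : Finpartition bdry)
    (ω : E → Bool) : V → V → Prop :=
  Relation.ReflTransGen fun x y => adj gfst gsnd ω x y ∨ sameBlock ξ x y

/-- `k(ω^ξ)`: the number of connected components of `ω^ξ`. -/
noncomputable def numCompBC (gfst gsnd : E → V) {bdry : Finset V} (ξ : Finpartition bdry)
    (ω : E → Bool) : ℕ :=
  (Finset.univ.image fun x : V =>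
    Finset.univ.filter fun y : V => connBC gfst gsnd ξ ω x y).card

/-- Number of open edges. -/
noncomputable def openCount (ω : E → Bool) : ℕ :=
  (Finset.univ.filter fun e : E => ω e = true).card

/-- Number of closed edges. -/
noncomputable def closedCount (ω : E → Bool) : ℕ :=
  (Finset.univ.filter fun e : E => ω e = false).card

/-- Random-cluster weight `p^{o(ω)} (1-p)^{c(ω)} q^{k(ω^ξ)}`. -/
noncomputable def rcW (gfst gsnd : E → V) {bdry : Finset V} (ξ : Finpartition bdry)
    (p q : ℝ) (ω : E → Bool) : ℝ :=
  p ^ openCount ω * (1 - p) ^ closedCount ω * q ^ numCompBC gfst gsnd ξ ω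

/-- The probability of the event `Aev` under `φ^ξ_{G,p,q}`. -/
noncomputable def rcProb (gfst gsnd : E → V) {bdry : Finset V} (ξ : Finpartition bdry)
    (p q : ℝ) (Aev : (E → Bool) → Prop) : ℝ :=
  (∑ ω : E → Bool, if Aev ω then rcW gfst gsnd ξ p q ω else 0) /
    (∑ ω : E → Bool, rcW gfst gsnd ξ p q ω)

/-- An event is increasing if it is an up-set for the coordinatewise order. -/
def IncreasingEvent (Aev : (E → Bool) → Prop) : Prop :=
  ∀ ω ω' : E → Bool, (∀ e : E, ω e ≤ ω' e) → Aev ω → Aev ω'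

/-- `ξ'` is coarser than `ξ` if every block of `ξ` is contained in a block of `ξ'`. -/
def Coarser {bdry : Finset V} (ξ ξ' : Finpartition bdry) : Prop :=
  ∀ P ∈ ξ.parts, ∃ P' ∈ ξ'.parts, P ⊆ P'

set_option linter.unusedSectionVars false

section Classes

open Finset

variable {α : Type*} [Fintype α] [DecidableEq α] {r : α → α → Prop}

noncomputable def numClasses (r : α → α → Prop) : ℕ :=
  (univ.image fun x => univ.filter (r x)).card

lemma filter_eq_filter_iff_of_equivalence (hr : Equivalence r) {x y : α} :
    univ.filter (r x) = univ.filter (r y) ↔ r x y := by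
  refine ⟨fun h => ?_, fun hxy =>
    filter_congr fun z _ => ⟨hr.trans (hr.symm hxy), hr.trans hxy⟩⟩
  have : y ∈ univ.filter (r y) := by simp [hr.refl y]
  simpa [← h] using this

lemma filter_notMem_image_filter (hr : Equivalence r) {u v w : α} (hw : r w u ∨ r w v) :
    univ.filter (r w) ∉
      (univ.filter fun x => ¬ r x u ∧ ¬ r x v).image fun x => univ.filter (r x) := by
  simp only [mem_image, mem_filter, mem_univ, true_and, not_exists, not_and, and_imp]
  intro x hxu hxv hxw
  rw [filter_eq_filter_iff_of_equivalence hr] at hxw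
  rcases hw with hw | hw
  exacts [hxu (hr.trans hxw hw), hxv (hr.trans hxw hw)]

lemma image_filter_eq_insert_insert (hr : Equivalence r) (u v : α) :
    (univ.image fun x => univ.filter (r x)) =
      insert (univ.filter (r u)) (insert (univ.filter (r v))
        ((univ.filter fun x => ¬ r x u ∧ ¬ r x v).image fun x => univ.filter (r x))) := by
  ext s
  simp only [mem_image, mem_insert, mem_univ, true_and, mem_filter]
  constructor
  · rintro ⟨x, rfl⟩
    by_cases hxu : r x u
    · exact Or.inl ((filter_eq_filter_iff_of_equivalence hr).2 hxu)
    by_cases hxv : r x v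
    · exact Or.inr (Or.inl ((filter_eq_filter_iff_of_equivalence hr).2 hxv))
    exact Or.inr (Or.inr ⟨x, ⟨hxu, hxv⟩, rfl⟩)
  · rintro (rfl | rfl | ⟨x, -, rfl⟩) <;> exact ⟨_, rfl⟩

lemma numClasses_eq_of_join {r' : α → α → Prop} (hr : Equivalence r) (hr' : Equivalence r')
    {u v : α} (hjoin : ∀ x y, r' x y ↔ r x y ∨ (r x u ∧ r v y) ∨ (r x v ∧ r u y)) :
    numClasses r = numClasses r' + if r u v then 0 else 1 := by
  have hS : (univ.filter fun x => ¬ r' x u ∧ ¬ r' x v) =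
      univ.filter fun x => ¬ r x u ∧ ¬ r x v :=
    filter_congr fun x _ => by simp [hjoin, hr.refl u, hr.refl v]; tauto
  have hclass : ∀ x ∈ univ.filter (fun x => ¬ r x u ∧ ¬ r x v),
      univ.filter (r' x) = univ.filter (r x) := by
    intro x hx
    simp only [mem_filter] at hx
    exact filter_congr fun y _ => by simp [hjoin, hx.2.1, hx.2.2]
  have huv' : univ.filter (r' u) = univ.filter (r' v) :=
    (filter_eq_filter_iff_of_equivalence hr').2
      ((hjoin u v).2 (Or.inr (Or.inl ⟨hr.refl u, hr.refl v⟩)))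
  have hu' := filter_notMem_image_filter hr' (u := u) (v := v) (Or.inl (hr'.refl u))
  have hu := filter_notMem_image_filter hr (u := u) (v := v) (Or.inl (hr.refl u))
  have hv := filter_notMem_image_filter hr (u := u) (v := v) (Or.inr (hr.refl v))
  unfold numClasses
  rw [image_filter_eq_insert_insert hr u v, image_filter_eq_insert_insert hr' u v, ← huv',
    insert_idem, card_insert_of_notMem hu', hS, image_congr hclass]
  split_ifs with huv
  · rw [(filter_eq_filter_iff_of_equivalence hr).2 huv, insert_idem, card_insert_of_notMem hv]
  · rw [card_insert_of_notMem (by simp [filter_eq_filter_iff_of_equivalence hr, huv, hu]),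
      card_insert_of_notMem hv]

end Classes

section Connectivity

variable (gfst gsnd : E → V) {bdry : Finset V} (ξ : Finpartition bdry)

lemma connBC_equivalence (ω : E → Bool) : Equivalence (connBC gfst gsnd ξ ω) := by
  have hsymm : ∀ x y, (adj gfst gsnd ω x y ∨ sameBlock ξ x y) →
      adj gfst gsnd ω y x ∨ sameBlock ξ y x := by
    rintro x y (⟨e, he, h | h⟩ | ⟨P, hP, hx, hy⟩)
    exacts [Or.inl ⟨e, he, Or.inr h⟩, Or.inl ⟨e, he, Or.inl h⟩, Or.inr ⟨P, hP, hy, hx⟩]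
  refine ⟨fun _ => .refl, fun h => ?_, .trans⟩
  induction h with
  | refl => exact .refl
  | tail _ hbc ih => exact .head (hsymm _ _ hbc) ih

lemma numCompBC_eq_numClasses (ω : E → Bool) :
    numCompBC gfst gsnd ξ ω = numClasses (connBC gfst gsnd ξ ω) := rfl

variable {gfst gsnd ξ}

lemma connBC_mono {ω ω' : E → Bool} (h : ω ≤ ω') {x y : V}
    (hxy : connBC gfst gsnd ξ ω x y) : connBC gfst gsnd ξ ω' x y := by
  refine Relation.ReflTransGen.mono (fun _ _ => Or.imp_left ?_) _ _ hxy
  rintro ⟨e, he, hends⟩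
  exact ⟨e, Bool.le_iff_imp.1 (h e) he, hends⟩

lemma connBC_update_true_iff (ω : E → Bool) (e : E) (x y : V) :
    connBC gfst gsnd ξ (Function.update ω e true) x y ↔
      connBC gfst gsnd ξ ω x y ∨
        (connBC gfst gsnd ξ ω x (gfst e) ∧ connBC gfst gsnd ξ ω (gsnd e) y) ∨
        (connBC gfst gsnd ξ ω x (gsnd e) ∧ connBC gfst gsnd ξ ω (gfst e) y) := by
  have hr := connBC_equivalence gfst gsnd ξ ω
  constructor
  · intro h
    induction h with
    | refl => exact Or.inl .refl
    | @tail b c _ hbc ih =>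
      by_cases hstep : connBC gfst gsnd ξ ω b c
      · rcases ih with h | ⟨h1, h2⟩ | ⟨h1, h2⟩
        exacts [Or.inl (h.trans hstep), Or.inr (Or.inl ⟨h1, h2.trans hstep⟩),
          Or.inr (Or.inr ⟨h1, h2.trans hstep⟩)]
      obtain ⟨e', he', hends⟩ : adj gfst gsnd (Function.update ω e true) b c := by
        refine hbc.resolve_right fun hsb => hstep (.single (Or.inr hsb))
      obtain rfl : e' = e := by
        by_contra hne
        rw [Function.update_of_ne hne] at he'
        exact hstep (.single (Or.inl ⟨e', he', hends⟩))
      rcases hends with ⟨rfl, rfl⟩ | ⟨rfl, rfl⟩ <;>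
        rcases ih with h | ⟨h1, h2⟩ | ⟨h1, h2⟩
      · exact Or.inr (Or.inl ⟨h, hr.refl _⟩)
      · exact Or.inr (Or.inl ⟨h1, hr.refl _⟩)
      · exact Or.inl h1
      · exact Or.inr (Or.inr ⟨h, hr.refl _⟩)
      · exact Or.inl h1
      · exact Or.inr (Or.inr ⟨h1, hr.refl _⟩)
  · have hmono : ∀ {x y}, connBC gfst gsnd ξ ω x y →
        connBC gfst gsnd ξ (Function.update ω e true) x y :=
      connBC_mono (le_update_iff.2 ⟨le_top, fun _ _ => le_rfl⟩)
    have hr' := connBC_equivalence gfst gsnd ξ (Function.update ω e true)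
    have hedge : connBC gfst gsnd ξ (Function.update ω e true) (gfst e) (gsnd e) :=
      .single (Or.inl ⟨e, Function.update_self e true ω, Or.inl ⟨rfl, rfl⟩⟩)
    rintro (h | ⟨h1, h2⟩ | ⟨h1, h2⟩)
    · exact hmono h
    · exact ((hmono h1).trans hedge).trans (hmono h2)
    · exact ((hmono h1).trans (hr'.symm hedge)).trans (hmono h2)

lemma numCompBC_eq_update_true_add (ω : E → Bool) (e : E) :
    numCompBC gfst gsnd ξ ω = numCompBC gfst gsnd ξ (Function.update ω e true) +
      if connBC gfst gsnd ξ ω (gfst e) (gsnd e) then 0 else 1 :=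
  numClasses_eq_of_join (connBC_equivalence gfst gsnd ξ ω) (connBC_equivalence gfst gsnd ξ _)
    (connBC_update_true_iff ω e)

end Connectivity

section Supermodularity

variable {gfst gsnd : E → V} {bdry : Finset V} {ξ : Finpartition bdry}

theorem numCompBC_add_numCompBC_le (a b : E → Bool) :
    numCompBC gfst gsnd ξ a + numCompBC gfst gsnd ξ b ≤
      numCompBC gfst gsnd ξ (a ⊔ b) + numCompBC gfst gsnd ξ (a ⊓ b) := by
  by_cases hb : ∃ e, b e = true ∧ a e = false
  · obtain ⟨e, hbe, hae⟩ := hb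
    set b' := Function.update b e false
    have ih := numCompBC_add_numCompBC_le a b'
    have hb' : Function.update b' e true = b := by simp [b', ← hbe]
    have hsup : Function.update (a ⊔ b') e true = a ⊔ b := by
      ext e'
      by_cases he' : e' = e <;> simp [b', he', hbe]
    have hinf : a ⊓ b' = a ⊓ b := by
      ext e'
      by_cases he' : e' = e <;> simp [b', he', hae]
    have hb'k := numCompBC_eq_update_true_add (gfst := gfst) (gsnd := gsnd) (ξ := ξ) b' e
    have hsupk := numCompBC_eq_update_true_add (gfst := gfst) (gsnd := gsnd) (ξ := ξ) (a ⊔ b') e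
    have hdrop : (if connBC gfst gsnd ξ (a ⊔ b') (gfst e) (gsnd e) then 0 else 1) ≤
        if connBC gfst gsnd ξ b' (gfst e) (gsnd e) then 0 else 1 := by
      by_cases hconn : connBC gfst gsnd ξ b' (gfst e) (gsnd e)
      · simp [hconn, connBC_mono le_sup_right hconn]
      · simp [hconn, apply_ite (· ≤ 1)]
    rw [hb'] at hb'k
    rw [hsup] at hsupk
    rw [← hinf]
    omega
  · push Not at hb
    have hba : b ≤ a := fun e => Bool.le_iff_imp.2 fun h => by simpa using hb e h
    rw [sup_eq_left.2 hba, inf_eq_right.2 hba]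
termination_by (Finset.univ.filter fun e => b e = true ∧ a e = false).card
decreasing_by
  refine Finset.card_lt_card (Finset.ssubset_iff_of_subset ?_ |>.2 ⟨e, ?_, ?_⟩)
  · intro e'
    by_cases he' : e' = e <;> simp [he']
  · simp [hbe, hae]
  · simp

end Supermodularity

section BoundaryConditions

variable {gfst gsnd : E → V} {bdry : Finset V} {ξ ξ' : Finpartition bdry}

lemma sameBlock_of_coarser (hc : Coarser ξ ξ') {x y : V} (h : sameBlock ξ x y) :
    sameBlock ξ' x y := by
  obtain ⟨P, hP, hx, hy⟩ := h
  obtain ⟨P', hP', hPP'⟩ := hc P hP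
  exact ⟨P', hP', hPP' hx, hPP' hy⟩

noncomputable def blockEdges (ξ : Finpartition bdry) (xy : V × V) : Bool :=
  decide (sameBlock ξ xy.1 xy.2)

lemma connBC_sum_elim_false (ω : E → Bool) :
    connBC (Sum.elim gfst Prod.fst) (Sum.elim gsnd Prod.snd) ξ (Sum.elim ω fun _ => false) =
      connBC gfst gsnd ξ ω := by
  unfold connBC
  congr! 4 with x y
  refine ⟨fun ⟨f, hf, hends⟩ => ?_, fun ⟨e, he, hends⟩ => ⟨.inl e, he, hends⟩⟩
  rcases f with e | _
  exacts [⟨e, hf, hends⟩, absurd hf (by simp)]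

lemma connBC_sum_elim_blockEdges (hc : Coarser ξ ξ') (ω : E → Bool) :
    connBC (Sum.elim gfst Prod.fst) (Sum.elim gsnd Prod.snd) ξ
        (Sum.elim ω (blockEdges ξ')) =
      connBC gfst gsnd ξ' ω := by
  unfold connBC
  congr! 3 with x y
  constructor
  · rintro (⟨e | ⟨x', y'⟩, hf, hends⟩ | hxy)
    · exact Or.inl ⟨e, hf, hends⟩
    · have h : sameBlock ξ' x' y' := by simpa [blockEdges] using hf
      rcases hends with ⟨rfl, rfl⟩ | ⟨rfl, rfl⟩
      · exact Or.inr h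
      · obtain ⟨P, hP, hx, hy⟩ := h
        exact Or.inr ⟨P, hP, hy, hx⟩
    · exact Or.inr (sameBlock_of_coarser hc hxy)
  · rintro (⟨e, he, hends⟩ | hxy)
    · exact Or.inl ⟨.inl e, he, hends⟩
    · exact Or.inl ⟨.inr (x, y), by simpa [blockEdges] using hxy, Or.inl ⟨rfl, rfl⟩⟩

theorem numCompBC_add_numCompBC_le_of_coarser (hc : Coarser ξ ξ') (a b : E → Bool) :
    numCompBC gfst gsnd ξ a + numCompBC gfst gsnd ξ' b ≤
      numCompBC gfst gsnd ξ' (a ⊔ b) + numCompBC gfst gsnd ξ (a ⊓ b) := by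
  have key := numCompBC_add_numCompBC_le (gfst := Sum.elim gfst Prod.fst)
    (gsnd := Sum.elim gsnd Prod.snd) (ξ := ξ) (Sum.elim a fun _ : V × V => false)
    (Sum.elim b (blockEdges ξ'))
  have hsup : (Sum.elim a fun _ => false) ⊔ Sum.elim b (blockEdges ξ') =
      Sum.elim (a ⊔ b) (blockEdges ξ') := by
    ext (e | _) <;> simp
  have hinf : (Sum.elim a fun _ => false) ⊓ Sum.elim b (blockEdges ξ') =
      Sum.elim (a ⊓ b) fun _ => false := by
    ext (e | _) <;> simp
  simpa only [hsup, hinf, numCompBC_eq_numClasses, connBC_sum_elim_false,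
    connBC_sum_elim_blockEdges hc] using key

end BoundaryConditions

section Weights

variable {gfst gsnd : E → V} {bdry : Finset V} {ξ ξ' : Finpartition bdry} {p p' q : ℝ}

def edgeWeight (p : ℝ) (b : Bool) : ℝ := if b then p else 1 - p

lemma edgeWeight_nonneg (hp : p ∈ Set.Icc (0 : ℝ) 1) (b : Bool) : 0 ≤ edgeWeight p b := by
  cases b <;> simp [edgeWeight, hp.1, hp.2]

lemma edgeWeight_mul_edgeWeight_le (hpp' : p ≤ p') (x y : Bool) :
    edgeWeight p x * edgeWeight p' y ≤ edgeWeight p (x ⊓ y) * edgeWeight p' (x ⊔ y) := by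
  cases x <;> cases y <;> simp only [edgeWeight] <;> simp
  nlinarith

lemma sum_prod_edgeWeight (p : ℝ) : ∑ ω : E → Bool, ∏ e, edgeWeight p (ω e) = 1 := by
  rw [← Fintype.prod_sum (fun (_ : E) b => edgeWeight p b)]
  simp [edgeWeight]

lemma rcW_eq_prod_mul (p q : ℝ) (ω : E → Bool) :
    rcW gfst gsnd ξ p q ω = (∏ e, edgeWeight p (ω e)) * q ^ numCompBC gfst gsnd ξ ω := by
  simp only [rcW, edgeWeight, Finset.prod_ite, Finset.prod_const, openCount, closedCount,
    Bool.not_eq_true]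

lemma prod_edgeWeight_le_rcW (hq : 1 ≤ q) (hp : p ∈ Set.Icc (0 : ℝ) 1) (ω : E → Bool) :
    ∏ e, edgeWeight p (ω e) ≤ rcW gfst gsnd ξ p q ω := by
  rw [rcW_eq_prod_mul]
  exact le_mul_of_one_le_right (Finset.prod_nonneg fun _ _ => edgeWeight_nonneg hp _)
    (one_le_pow₀ hq)

lemma rcW_nonneg (hq : 1 ≤ q) (hp : p ∈ Set.Icc (0 : ℝ) 1) (ω : E → Bool) :
    0 ≤ rcW gfst gsnd ξ p q ω :=
  (Finset.prod_nonneg fun _ _ => edgeWeight_nonneg hp _).trans (prod_edgeWeight_le_rcW hq hp ω)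

lemma sum_rcW_pos (hq : 1 ≤ q) (hp : p ∈ Set.Icc (0 : ℝ) 1) :
    0 < ∑ ω, rcW gfst gsnd ξ p q ω :=
  calc (0 : ℝ) < 1 := one_pos
    _ = ∑ ω : E → Bool, ∏ e, edgeWeight p (ω e) := (sum_prod_edgeWeight p).symm
    _ ≤ ∑ ω, rcW gfst gsnd ξ p q ω :=
      Finset.sum_le_sum fun ω _ => prod_edgeWeight_le_rcW hq hp ω

theorem rcW_mul_rcW_le (hq : 1 ≤ q) (hp : p ∈ Set.Icc (0 : ℝ) 1)
    (hp' : p' ∈ Set.Icc (0 : ℝ) 1) (hpp' : p ≤ p') (hc : Coarser ξ ξ') (a b : E → Bool) :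
    rcW gfst gsnd ξ p q a * rcW gfst gsnd ξ' p' q b ≤
      rcW gfst gsnd ξ p q (a ⊓ b) * rcW gfst gsnd ξ' p' q (a ⊔ b) := by
  have hprod : (∏ e, edgeWeight p (a e)) * ∏ e, edgeWeight p' (b e) ≤
      (∏ e, edgeWeight p ((a ⊓ b) e)) * ∏ e, edgeWeight p' ((a ⊔ b) e) := by
    simp only [← Finset.prod_mul_distrib]
    exact Finset.prod_le_prod
      (fun e _ => mul_nonneg (edgeWeight_nonneg hp _) (edgeWeight_nonneg hp' _))
      (fun e _ => edgeWeight_mul_edgeWeight_le hpp' (a e) (b e))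
  have hpow : q ^ (numCompBC gfst gsnd ξ a + numCompBC gfst gsnd ξ' b) ≤
      q ^ (numCompBC gfst gsnd ξ (a ⊓ b) + numCompBC gfst gsnd ξ' (a ⊔ b)) :=
    pow_le_pow_right₀ hq (by
      linarith [numCompBC_add_numCompBC_le_of_coarser (gfst := gfst) (gsnd := gsnd) hc a b])
  simp only [rcW_eq_prod_mul, mul_mul_mul_comm _ (q ^ _), ← pow_add]
  exact mul_le_mul hprod hpow (pow_nonneg (zero_le_one.trans hq) _)
    (mul_nonneg (Finset.prod_nonneg fun _ _ => edgeWeight_nonneg hp _)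
      (Finset.prod_nonneg fun _ _ => edgeWeight_nonneg hp' _))

end Weights

section Correlation

variable {α : Type*} [Fintype α] [DistribLattice α]

noncomputable def weightedProb (w : α → ℝ) (A : α → Prop) : ℝ :=
  (∑ a, if A a then w a else 0) / ∑ a, w a

lemma weightedProb_le_of_holley {w₁ w₂ : α → ℝ} (h₁ : 0 ≤ w₁) (h₂ : 0 ≤ w₂)
    (hZ₁ : 0 < ∑ a, w₁ a) (hZ₂ : 0 < ∑ a, w₂ a)
    (h : ∀ a b, w₁ a * w₂ b ≤ w₁ (a ⊓ b) * w₂ (a ⊔ b)) {A : α → Prop} (hA : Monotone A) :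
    weightedProb w₁ A ≤ weightedProb w₂ A := by
  rw [weightedProb, weightedProb, div_le_div_iff₀ hZ₁ hZ₂, mul_comm _ (∑ a, w₁ a)]
  refine four_functions_theorem_univ _ w₂ w₁ _ (fun a => ite_nonneg (h₁ a) le_rfl) h₂ h₁
    (fun a => ite_nonneg (h₂ a) le_rfl) fun a b => ?_
  by_cases ha : A a
  · simpa [ha, hA le_sup_left ha] using h a b
  · simpa [ha] using mul_nonneg (h₁ _) (ite_nonneg (h₂ _) le_rfl)

lemma weightedProb_mul_le_of_fkg {w : α → ℝ} (hw : 0 ≤ w) (hZ : 0 < ∑ a, w a)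
    (h : ∀ a b, w a * w b ≤ w (a ⊓ b) * w (a ⊔ b)) {A B : α → Prop} (hA : Monotone A)
    (hB : Monotone B) :
    weightedProb w A * weightedProb w B ≤ weightedProb w fun a => A a ∧ B a := by
  generalize hC : (fun a => A a ∧ B a) = C
  have key : ((∑ a, if A a then w a else 0) * ∑ a, if B a then w a else 0) ≤
      (∑ a, w a) * ∑ a, if C a then w a else 0 := by
    refine four_functions_theorem_univ _ _ w _ (fun a => ite_nonneg (hw a) le_rfl)
      (fun a => ite_nonneg (hw a) le_rfl) hw (fun a => ite_nonneg (hw a) le_rfl) fun a b => ?_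
    by_cases hab : A a ∧ B b
    · have hCab : C (a ⊔ b) := hC ▸ ⟨hA le_sup_left hab.1, hB le_sup_right hab.2⟩
      simpa [hab, hCab] using h a b
    · have hzero : (if A a then w a else 0) * (if B b then w b else 0) = 0 := by
        rcases not_and_or.1 hab with h | h <;> simp [h]
      simpa [hzero] using mul_nonneg (hw _) (ite_nonneg (hw _) le_rfl)
  rw [weightedProb, weightedProb, weightedProb, div_mul_div_comm,
    div_le_div_iff₀ (by positivity) hZ]
  linarith [mul_le_mul_of_nonneg_right key hZ.le]

end Correlation

lemma IncreasingEvent.monotone {A : (E → Bool) → Prop} (hA : IncreasingEvent A) : Monotone A :=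
  fun ω ω' => hA ω ω'

/-- Positive association of the random-cluster model with `q ≥ 1`:
comparison between boundary conditions (CBC), monotonicity in `p` (MON) and the
FKG inequality. -/
theorem positive_association (gfst gsnd : E → V) (bdry : Finset V)
    (q : ℝ) (hq : 1 ≤ q) (p : ℝ) (hp : p ∈ Set.Icc (0 : ℝ) 1) (ξ : Finpartition bdry) :
    (∀ Aev : (E → Bool) → Prop, IncreasingEvent Aev →
      ∀ ξ' : Finpartition bdry, Coarser ξ ξ' →
        rcProb gfst gsnd ξ p q Aev ≤ rcProb gfst gsnd ξ' p q Aev) ∧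
    (∀ Aev : (E → Bool) → Prop, IncreasingEvent Aev →
      ∀ p' ∈ Set.Icc (0 : ℝ) 1, p ≤ p' →
        rcProb gfst gsnd ξ p q Aev ≤ rcProb gfst gsnd ξ p' q Aev) ∧
    (∀ Aev Bev : (E → Bool) → Prop, IncreasingEvent Aev → IncreasingEvent Bev →
      rcProb gfst gsnd ξ p q Aev * rcProb gfst gsnd ξ p q Bev
        ≤ rcProb gfst gsnd ξ p q fun ω => Aev ω ∧ Bev ω) := by
  have hrefl : Coarser ξ ξ := fun P hP => ⟨P, hP, subset_rfl⟩
  refine ⟨fun A hA ξ' hc => ?_, fun A hA p' hp' hpp' => ?_, fun A B hA hB => ?_⟩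
  · exact weightedProb_le_of_holley (rcW_nonneg hq hp) (rcW_nonneg hq hp) (sum_rcW_pos hq hp)
      (sum_rcW_pos hq hp) (rcW_mul_rcW_le hq hp hp le_rfl hc) hA.monotone
  · exact weightedProb_le_of_holley (rcW_nonneg hq hp) (rcW_nonneg hq hp') (sum_rcW_pos hq hp)
      (sum_rcW_pos hq hp') (rcW_mul_rcW_le hq hp hp' hpp' hrefl) hA.monotone
  · exact weightedProb_mul_le_of_fkg (rcW_nonneg hq hp) (sum_rcW_pos hq hp)
      (rcW_mul_rcW_le hq hp hp le_rfl hrefl) hA.monotone hB.monotone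

end Stmt7
end

section
/- Exponential-decay induction via φ_p(S). Fix d ≥ 1, p ∈ [0,1], L ≥ 1 and a finite set S ⊆ Z^d with 0 ∈ S ⊆ Λ_{L−1}. Then for every k ≥ 1, ℙ_p[0 ↔ ∂Λ_{kL}] ≤ φ_p(S)^k. In particular, if φ_p(S) < 1 then ℙ_p[0 ↔ ∂Λ_n] decays exponentially in n. -/
/-!
Let `C` be the cluster of `0` in `S`. A path from `0` to `∂Λ_{(k+1)L}` has a last edge `{x, y}`
leaving `C`: then `x ∈ C`, `y ∉ S`, the edge is open, and the rest of the path avoids `C` and,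
since `S ⊆ Λ_{L-1}`, reaches `y + ∂Λ_{kL}`. For a fixed value of `C` the three events
"the cluster is `C`", "`{x, y}` is open" and "an arm from `y` avoids `C`" depend on disjoint
finite sets of edges, hence are independent, and the last has probability at most
`ℙ[0 ↔ ∂Λ_{kL}]` by translation invariance. Summing over `C` and over the boundary edges of `S`
gives `ℙ[0 ↔ ∂Λ_{(k+1)L}] ≤ φ_p(S) ℙ[0 ↔ ∂Λ_{kL}]`, and induction gives `φ_p(S)^k`.
Independence and translation invariance come from identifying `ℙ` with the infinite product of
Bernoulli measures.

For the decay, `n ↦ ℙ[0 ↔ ∂Λ_n]` is antitone, and `ℙ[0 ↔ ∂Λ_1] < 1` because `φ_p(S) < 1`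
forces `p < 1` (at `p = 1` a straight open segment gives `ℙ[0 ↔ ∂Λ_L] = 1`), after which the
`2d` edges at the origin are all closed with positive probability.
-/

open scoped BigOperators Classical ENNReal
open MeasureTheory

namespace Stmt13

/-- The `i`-th unit vector of `ℤ^d`. -/
def unit (d : ℕ) (i : Fin d) : Fin d → ℤ := fun j => if j = i then 1 else 0

/-- Adjacency by an open edge; the edge `(x, i)` joins `x` and `x + unit i`. -/
def adj (d : ℕ) (ω : ((Fin d → ℤ) × Fin d) → Bool) (x y : Fin d → ℤ) : Prop :=
  ∃ i : Fin d, (ω (x, i) = true ∧ y = x + unit d i) ∨ (ω (y, i) = true ∧ x = y + unit d i)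

/-- Connectivity by open paths. -/
def conn (d : ℕ) (ω : ((Fin d → ℤ) × Fin d) → Bool) : (Fin d → ℤ) → (Fin d → ℤ) → Prop :=
  Relation.ReflTransGen (adj d ω)

/-- Connectivity by open paths using only edges with both endpoints in `S`. -/
def connIn (d : ℕ) (S : Set (Fin d → ℤ)) (ω : ((Fin d → ℤ) × Fin d) → Bool) :
    (Fin d → ℤ) → (Fin d → ℤ) → Prop :=
  Relation.ReflTransGen fun a b => adj d ω a b ∧ a ∈ S ∧ b ∈ S

/-- Membership in the box `Λ_n = [-n,n]^d`. -/
def inBox (d : ℕ) (n : ℕ) (x : Fin d → ℤ) : Prop := ∀ i : Fin d, |x i| ≤ (n : ℤ)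

/-- Nearest-neighbor adjacency of the lattice `ℤ^d`. -/
def latAdj (d : ℕ) (x y : Fin d → ℤ) : Prop :=
  ∃ i : Fin d, y = x + unit d i ∨ x = y + unit d i

/-- The inner vertex boundary `∂Λ_n` of the box. -/
def sphere (d : ℕ) (n : ℕ) : Set (Fin d → ℤ) :=
  {x | inBox d n x ∧ ∃ y, latAdj d x y ∧ ¬inBox d n y}

/-- The one-arm event `{0 ↔ ∂Λ_n}`. -/
def oneArm (d : ℕ) (n : ℕ) : Set (((Fin d → ℤ) × Fin d) → Bool) :=
  {ω | ∃ y ∈ sphere d n, conn d ω 0 y}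

/-- `φ_p(S) = p ∑_{xy ∈ ΔS} ℙ_p[0 ↔^S x]`: for each edge of the edge-boundary of `S`,
the probability that `0` is connected inside `S` to its endpoint lying in `S`. -/
noncomputable def phiS (d : ℕ) (P : Measure (((Fin d → ℤ) × Fin d) → Bool)) (p : ℝ)
    (S : Finset (Fin d → ℤ)) : ℝ :=
  p * ∑ x ∈ S, ∑ i : Fin d,
    ((if x + unit d i ∉ S then (P {ω | connIn d (↑S) ω 0 x}).toReal else 0) +
      (if x - unit d i ∉ S then (P {ω | connIn d (↑S) ω 0 x}).toReal else 0))

end Stmt13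

theorem Relation.setOf_reflTransGen_eq_of_forall_iff {α : Type*} {r r' : α → α → Prop} {a : α}
    {C : Set α} (hC : {b | Relation.ReflTransGen r a b} = C)
    (h : ∀ u ∈ C, ∀ v, r u v ↔ r' u v) : {b | Relation.ReflTransGen r' a b} = C := by
  have mem_C {b} (hb : Relation.ReflTransGen r a b) : b ∈ C := hC ▸ hb
  ext b
  constructor
  · intro hb
    induction hb with
    | refl => exact mem_C .refl
    | @tail u v _ huv ih =>
      rw [← hC] at ih
      exact mem_C (ih.tail ((h u (mem_C ih) v).2 huv))
  · intro hb
    rw [← hC] at hb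
    induction hb with
    | refl => exact .refl
    | @tail u v hu huv ih => exact ih.tail ((h u (mem_C hu) v).1 huv)

theorem Relation.ReflTransGen.exists_last_exit {α : Type*} {r : α → α → Prop} {C : Set α}
    {a b : α} (h : Relation.ReflTransGen r a b) (ha : a ∈ C) (hb : b ∉ C) :
    ∃ v ∈ C, ∃ w ∉ C, r v w ∧
      Relation.ReflTransGen (fun u u' => r u u' ∧ u ∉ C ∧ u' ∉ C) w b := by
  induction h with
  | refl => exact absurd ha hb
  | @tail u b _ hub ih =>
    by_cases hu : u ∈ C
    · exact ⟨u, hu, b, hb, hub, .refl⟩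
    · obtain ⟨v, hv, w, hw, hvw, hwu⟩ := ih hu
      exact ⟨v, hv, w, hw, hvw, hwu.tail ⟨hub, hu, hb⟩⟩

lemma Bool.set_eq_singleton_decide {t : Set Bool} (h₀ : t.Nonempty) (h₁ : t ≠ Set.univ) :
    t = {decide (true ∈ t)} := by
  have hboth : ¬(true ∈ t ∧ false ∈ t) := fun ⟨ht, hf⟩ =>
    h₁ (Set.eq_univ_of_forall (Bool.forall_bool.2 ⟨hf, ht⟩))
  obtain ⟨b, hb⟩ := h₀
  ext c
  cases b <;> cases c <;> by_cases ht : true ∈ t <;> simp_all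

section DependsOn

variable {E : Type*}

lemma dependsOn_mem_of_forall {T : Set E} {A : Set (E → Bool)}
    (h : ∀ ω ω' : E → Bool, (∀ e ∈ T, ω e = ω' e) → ω ∈ A → ω' ∈ A) : DependsOn (· ∈ A) T :=
  fun ω ω' hωω' => propext ⟨h ω ω' hωω', h ω' ω fun e he => (hωω' e he).symm⟩

lemma DependsOn.mem_inter {T U : Set E} {A B : Set (E → Bool)} (hA : DependsOn (· ∈ A) T)
    (hB : DependsOn (· ∈ B) U) : DependsOn (· ∈ A ∩ B) (T ∪ U) := fun ω ω' h => by
  simp only [Set.mem_inter_iff, hA.mono Set.subset_union_left h, hB.mono Set.subset_union_right h]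

lemma DependsOn.exists_eq_preimage_restrict {T : Finset E} {A : Set (E → Bool)}
    (hA : DependsOn (· ∈ A) T) : ∃ A' : Set (T → Bool), A = T.restrict ⁻¹' A' := by
  refine ⟨T.restrict '' A, (Set.subset_preimage_image _ _).antisymm ?_⟩
  rintro ω ⟨ω', hω', heq⟩
  exact (hA fun e he => congrFun heq ⟨e, he⟩).mp hω'

lemma DependsOn.measurableSet {T : Set E} (hT : T.Finite) {A : Set (E → Bool)}
    (hA : DependsOn (· ∈ A) T) : MeasurableSet A := by
  lift T to Finset E using hT
  obtain ⟨A', rfl⟩ := DependsOn.exists_eq_preimage_restrict hA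
  exact Finset.measurable_restrict _ (Set.toFinite _).measurableSet

end DependsOn

namespace Stmt13

open ProbabilityTheory

section Bernoulli

variable {E : Type*} {P : Measure (E → Bool)} {p : ℝ}

def IsBernoulli (P : Measure (E → Bool)) (p : ℝ) : Prop :=
  ∀ (T : Finset E) (η : E → Bool),
    P {ω | ∀ e ∈ T, ω e = η e} = ∏ e ∈ T, if η e then ENNReal.ofReal p else ENNReal.ofReal (1 - p)

noncomputable def bernoulliBool (p : ℝ) : Measure Bool :=
  ENNReal.ofReal p • Measure.dirac true + ENNReal.ofReal (1 - p) • Measure.dirac false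

lemma bernoulliBool_singleton (p : ℝ) (b : Bool) :
    bernoulliBool p {b} = if b then ENNReal.ofReal p else ENNReal.ofReal (1 - p) := by
  cases b <;> simp [bernoulliBool]

lemma isProbabilityMeasure_bernoulliBool (hp : p ∈ Set.Icc 0 1) :
    IsProbabilityMeasure (bernoulliBool p) := by
  constructor
  rw [bernoulliBool, Measure.add_apply, Measure.smul_apply, Measure.smul_apply, measure_univ,
    measure_univ, smul_eq_mul, smul_eq_mul, mul_one, mul_one,
    ← ENNReal.ofReal_add hp.1 (by linarith [hp.2])]
  simp

lemma IsBernoulli.measure_forall_eq (hP : IsBernoulli P p) (T : Finset E) (b : Bool) :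
    P {ω | ∀ e ∈ T, ω e = b} = bernoulliBool p {b} ^ T.card := by
  rw [hP, bernoulliBool_singleton, Finset.prod_const]

lemma IsBernoulli.measure_apply_eq_true (hP : IsBernoulli P p) (e : E) :
    P {ω | ω e = true} = ENNReal.ofReal p := by
  simpa [bernoulliBool_singleton] using hP.measure_forall_eq {e} true

-- This instance argument is how `p ∈ [0, 1]` enters the lemmas below.
variable [IsProbabilityMeasure (bernoulliBool p)]

lemma IsBernoulli.measure_pi (hP : IsBernoulli P p) (s : Finset E) (t : E → Set Bool) :
    P (Set.pi s t) = ∏ e ∈ s, bernoulliBool p (t e) := by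
  by_cases hempty : ∃ e ∈ s, t e = ∅
  · obtain ⟨e, he, hte⟩ := hempty
    rw [Set.pi_eq_empty he hte, measure_empty, eq_comm]
    exact Finset.prod_eq_zero he (by rw [hte, measure_empty])
  push Not at hempty
  -- Factors with `t e = univ` equal `1`; the other `t e` are singletons, so `Set.pi s t` is a
  -- cylinder on the remaining coordinates.
  set s' := s.filter fun e => t e ≠ Set.univ
  have hpi : Set.pi s t = {ω | ∀ e ∈ s', ω e = decide (true ∈ t e)} := by
    ext ω
    simp only [Set.mem_pi, Finset.mem_coe, Set.mem_ofPred_eq, s', Finset.mem_filter]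
    refine ⟨fun h e ⟨he, hne⟩ => ?_, fun h e he => ?_⟩
    · have := h e he
      rwa [Bool.set_eq_singleton_decide (hempty e he) hne] at this
    · by_cases hne : t e = Set.univ
      · simp [hne]
      · rw [Bool.set_eq_singleton_decide (hempty e he) hne, h e ⟨he, hne⟩]
        rfl
  rw [hpi, hP, ← Finset.prod_filter_of_ne (s := s) (p := fun e => t e ≠ Set.univ)]
  · refine Finset.prod_congr rfl fun e he => ?_
    obtain ⟨he, hne⟩ := Finset.mem_filter.1 he
    rw [← bernoulliBool_singleton, ← Bool.set_eq_singleton_decide (hempty e he) hne]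
  · intro e _ h hte
    exact h (by rw [hte, measure_univ])

lemma IsBernoulli.eq_infinitePi (hP : IsBernoulli P p) :
    P = Measure.infinitePi fun _ : E => bernoulliBool p :=
  Measure.eq_infinitePi _ fun s t _ => hP.measure_pi s t

lemma IsBernoulli.iIndepFun (hP : IsBernoulli P p) :
    iIndepFun (fun e (ω : E → Bool) => ω e) P := by
  rw [hP.eq_infinitePi]
  exact iIndepFun_infinitePi (X := fun _ => id) fun _ => measurable_id

lemma IsBernoulli.measure_inter_eq_mul (hP : IsBernoulli P p) {T U : Set E} (hT : T.Finite)
    (hU : U.Finite) (hTU : Disjoint T U) {A B : Set (E → Bool)} (hA : DependsOn (· ∈ A) T)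
    (hB : DependsOn (· ∈ B) U) : P (A ∩ B) = P A * P B := by
  lift T to Finset E using hT
  lift U to Finset E using hU
  obtain ⟨A', rfl⟩ := DependsOn.exists_eq_preimage_restrict hA
  obtain ⟨B', rfl⟩ := DependsOn.exists_eq_preimage_restrict hB
  exact (hP.iIndepFun.indepFun_finset T U (Finset.disjoint_coe.1 hTU) measurable_pi_apply
    ).measure_inter_preimage_eq_mul _ _ (Set.toFinite _).measurableSet
      (Set.toFinite _).measurableSet

lemma IsBernoulli.map_comp_eq (hP : IsBernoulli P p) {g : E → E} (hg : Function.Injective g) :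
    P.map (fun ω => ω ∘ g) = P := by
  refine (Measure.eq_infinitePi _ fun s t ht => ?_).trans hP.eq_infinitePi.symm
  have hpre : (fun ω : E → Bool => ω ∘ g) ⁻¹' Set.pi s t
      = Set.pi (s.map ⟨g, hg⟩) (Function.extend g t fun _ => Set.univ) := by
    ext ω
    simp [hg.extend_apply]
  rw [Measure.map_apply (by fun_prop) (.pi s.countable_toSet fun e _ => ht e), hpre,
    hP.measure_pi, Finset.prod_map]
  simp [hg.extend_apply]

lemma IsBernoulli.measure_preimage_comp (hP : IsBernoulli P p) {g : E → E}
    (hg : Function.Injective g) {A : Set (E → Bool)} (hA : MeasurableSet A) :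
    P ((fun ω => ω ∘ g) ⁻¹' A) = P A := by
  rw [← Measure.map_apply (by fun_prop) hA, hP.map_comp_eq hg]

end Bernoulli

abbrev Vertex (d : ℕ) := Fin d → ℤ

abbrev Edge (d : ℕ) := Vertex d × Fin d

abbrev Config (d : ℕ) := Edge d → Bool

section Paths

variable {d : ℕ}

def edgesIn (A : Set (Vertex d)) : Set (Edge d) :=
  {e | e.1 ∈ A ∧ e.1 + unit d e.2 ∈ A}

def box (d : ℕ) (y : Vertex d) (n : ℕ) : Set (Vertex d) := {x | inBox d n (x - y)}

noncomputable def closeOutside (F : Set (Edge d)) (ω : Config d) : Config d :=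
  fun e => decide (e ∈ F) && ω e

lemma finite_box (y : Vertex d) (n : ℕ) : (box d y n).Finite :=
  (Set.finite_Icc (y - fun _ => (n : ℤ)) (y + fun _ => (n : ℤ))).subset fun x hx =>
    ⟨fun i => by have := abs_le.1 (hx i); simp at this ⊢; omega,
     fun i => by have := abs_le.1 (hx i); simp at this ⊢; omega⟩

lemma self_mem_box (y : Vertex d) (n : ℕ) : y ∈ box d y n := fun i => by simp

lemma finite_edgesIn {A : Set (Vertex d)} (hA : A.Finite) : (edgesIn A).Finite :=
  (hA.prod Set.finite_univ).subset fun _ he => ⟨he.1, trivial⟩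

lemma closeOutside_apply_eq_true {F : Set (Edge d)} {ω : Config d} {e : Edge d} :
    closeOutside F ω e = true ↔ e ∈ F ∧ ω e = true := by
  simp [closeOutside]

lemma closeOutside_univ (ω : Config d) : closeOutside Set.univ ω = ω := by
  funext e
  simp [closeOutside]

lemma closeOutside_closeOutside (F G : Set (Edge d)) (ω : Config d) :
    closeOutside G (closeOutside F ω) = closeOutside (F ∩ G) ω := by
  funext e
  simp only [closeOutside, Set.mem_inter_iff, Bool.decide_and, Bool.and_assoc, Bool.and_left_comm]

lemma closeOutside_congr {F : Set (Edge d)} {ω ω' : Config d} (h : ∀ e ∈ F, ω e = ω' e) :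
    closeOutside F ω = closeOutside F ω' := by
  funext e
  by_cases he : e ∈ F <;> simp [closeOutside, he, h]

lemma adj_mono {ω ω' : Config d} (h : ∀ e, ω e = true → ω' e = true) {u v : Vertex d} :
    adj d ω u v → adj d ω' u v := by
  rintro ⟨i, ⟨hω, hv⟩ | ⟨hω, hu⟩⟩
  exacts [⟨i, Or.inl ⟨h _ hω, hv⟩⟩, ⟨i, Or.inr ⟨h _ hω, hu⟩⟩]

lemma conn_mono {ω ω' : Config d} (h : ∀ e, ω e = true → ω' e = true) {u v : Vertex d} :
    conn d ω u v → conn d ω' u v :=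
  Relation.ReflTransGen.mono (fun _ _ => adj_mono h) u v

lemma conn_closeOutside_mono {F G : Set (Edge d)} (hFG : F ⊆ G) {ω : Config d}
    {u v : Vertex d} : conn d (closeOutside F ω) u v → conn d (closeOutside G ω) u v :=
  conn_mono fun _ he => by
    rw [closeOutside_apply_eq_true] at he ⊢
    exact ⟨hFG he.1, he.2⟩

lemma conn_of_connIn {A : Set (Vertex d)} {ω : Config d} {u v : Vertex d} :
    connIn d A ω u v → conn d ω u v :=
  Relation.ReflTransGen.mono (fun _ _ h => h.1) u v

lemma adj_closeOutside_edgesIn {A : Set (Vertex d)} {ω : Config d} {u v : Vertex d} :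
    adj d (closeOutside (edgesIn A) ω) u v ↔ adj d ω u v ∧ u ∈ A ∧ v ∈ A := by
  simp only [adj, closeOutside_apply_eq_true, edgesIn, Set.mem_ofPred_eq]
  constructor
  · rintro ⟨i, ⟨⟨⟨hu, hv⟩, hω⟩, rfl⟩ | ⟨⟨⟨hv, hu⟩, hω⟩, rfl⟩⟩
    exacts [⟨⟨i, Or.inl ⟨hω, rfl⟩⟩, hu, hv⟩, ⟨⟨i, Or.inr ⟨hω, rfl⟩⟩, hu, hv⟩]
  · rintro ⟨⟨i, ⟨hω, rfl⟩ | ⟨hω, rfl⟩⟩, hu, hv⟩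
    exacts [⟨i, Or.inl ⟨⟨⟨hu, hv⟩, hω⟩, rfl⟩⟩, ⟨i, Or.inr ⟨⟨⟨hv, hu⟩, hω⟩, rfl⟩⟩]

lemma connIn_eq_conn_closeOutside (A : Set (Vertex d)) (ω : Config d) :
    connIn d A ω = conn d (closeOutside (edgesIn A) ω) := by
  unfold connIn conn
  congr
  funext u v
  exact propext adj_closeOutside_edgesIn.symm

lemma latAdj_of_adj {ω : Config d} {u v : Vertex d} : adj d ω u v → latAdj d u v := by
  rintro ⟨i, ⟨-, hv⟩ | ⟨-, hu⟩⟩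
  exacts [⟨i, Or.inl hv⟩, ⟨i, Or.inr hu⟩]

lemma latAdj.sub_right {u v : Vertex d} (h : latAdj d u v) (y : Vertex d) :
    latAdj d (u - y) (v - y) := by
  obtain ⟨i, rfl | rfl⟩ := h
  exacts [⟨i, Or.inl (add_sub_right_comm _ _ _)⟩, ⟨i, Or.inr (add_sub_right_comm _ _ _)⟩]

lemma latAdj.abs_sub_le_one {u v : Vertex d} (h : latAdj d u v) (j : Fin d) :
    |v j - u j| ≤ 1 := by
  obtain ⟨i, rfl | rfl⟩ := h <;> by_cases hj : j = i <;> simp [unit, hj]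

lemma mem_sphere_iff {n : ℕ} {z : Vertex d} :
    z ∈ sphere d n ↔ inBox d n z ∧ ∃ j, |z j| = n := by
  refine ⟨fun ⟨hz, y, hzy, hy⟩ => ⟨hz, ?_⟩, fun ⟨hz, j, hj⟩ => ⟨hz, ?_⟩⟩
  · obtain ⟨j, hj⟩ := not_forall.1 hy
    have := hzy.abs_sub_le_one j
    exact ⟨j, le_antisymm (hz j) (by have := abs_sub_abs_le_abs_sub (y j) (z j); omega)⟩
  · rcases le_or_gt 0 (z j) with hpos | hneg
    · refine ⟨z + unit d j, ⟨j, Or.inl rfl⟩, fun h => ?_⟩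
      have := abs_le.1 (h j)
      simp only [Pi.add_apply, unit, if_pos] at this
      rw [abs_of_nonneg hpos] at hj
      omega
    · refine ⟨z - unit d j, ⟨j, Or.inr (sub_add_cancel _ _).symm⟩, fun h => ?_⟩
      have := abs_le.1 (h j)
      simp only [Pi.sub_apply, unit, if_pos] at this
      rw [abs_of_neg hneg] at hj
      omega

lemma mem_box_of_latAdj {y a c : Vertex d} {n : ℕ} (ha : a ∈ box d y n)
    (hs : a - y ∉ sphere d n) (hac : latAdj d a c) : c ∈ box d y n :=
  by_contra fun hc => hs ⟨ha, c - y, hac.sub_right y, hc⟩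

theorem exists_connIn_box_of_conn {ω : Config d} {y a b : Vertex d} {n : ℕ}
    (h : conn d ω a b) (ha : a ∈ box d y n) (hb : ∃ j, (n : ℤ) ≤ |b j - y j|) :
    ∃ z, z - y ∈ sphere d n ∧ connIn d (box d y n) ω a z := by
  induction h using Relation.ReflTransGen.head_induction_on with
  | refl =>
    obtain ⟨j, hj⟩ := hb
    exact ⟨b, mem_sphere_iff.2 ⟨ha, j, le_antisymm (ha j) hj⟩, .refl⟩
  | @head a c hac _ ih =>
    by_cases hs : a - y ∈ sphere d n
    · exact ⟨a, hs, .refl⟩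
    have hc := mem_box_of_latAdj ha hs (latAdj_of_adj hac)
    obtain ⟨z, hz, hcz⟩ := ih hc
    exact ⟨z, hz, hcz.head ⟨hac, ha, hc⟩⟩

lemma oneArm_antitone : Antitone (oneArm d) := by
  rintro m n hmn ω ⟨z, hz, hconn⟩
  obtain ⟨-, j, hj⟩ := mem_sphere_iff.1 hz
  obtain ⟨z', hz', hconn'⟩ :=
    exists_connIn_box_of_conn hconn (self_mem_box 0 m) ⟨j, by simp [hj, hmn]⟩
  exact ⟨z', by simpa using hz', conn_of_connIn hconn'⟩

end Paths

section Arm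

variable {d : ℕ}

def arm (d : ℕ) (F : Set (Edge d)) (y : Vertex d) (n : ℕ) : Set (Config d) :=
  {ω | ∃ z, z - y ∈ sphere d n ∧ conn d (closeOutside F ω) y z}

lemma oneArm_eq_arm (n : ℕ) : oneArm d n = arm d Set.univ 0 n := by
  ext ω
  simp [oneArm, arm, closeOutside_univ]

lemma arm_mono {F G : Set (Edge d)} (hFG : F ⊆ G) (y : Vertex d) (n : ℕ) :
    arm d F y n ⊆ arm d G y n :=
  fun _ ⟨z, hz, h⟩ => ⟨z, hz, conn_closeOutside_mono hFG h⟩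

lemma arm_eq_arm_inter_edgesIn_box (F : Set (Edge d)) (y : Vertex d) (n : ℕ) :
    arm d F y n = arm d (F ∩ edgesIn (box d y n)) y n := by
  refine subset_antisymm (fun ω ⟨z, hz, h⟩ => ?_) (arm_mono Set.inter_subset_left y n)
  obtain ⟨-, j, hj⟩ := mem_sphere_iff.1 hz
  obtain ⟨z', hz', h'⟩ := exists_connIn_box_of_conn h (self_mem_box y n) ⟨j, by simp_all⟩
  rw [connIn_eq_conn_closeOutside, closeOutside_closeOutside] at h'
  exact ⟨z', hz', h'⟩

lemma dependsOn_arm (F : Set (Edge d)) (y : Vertex d) (n : ℕ) :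
    DependsOn (· ∈ arm d F y n) (F ∩ edgesIn (box d y n)) := by
  rw [arm_eq_arm_inter_edgesIn_box]
  exact fun ω ω' h => by simp only [arm, Set.mem_ofPred_eq, closeOutside_congr h]

lemma finite_inter_edgesIn_box (F : Set (Edge d)) (y : Vertex d) (n : ℕ) :
    (F ∩ edgesIn (box d y n)).Finite :=
  (finite_edgesIn (finite_box y n)).subset Set.inter_subset_right

lemma measurableSet_arm (F : Set (Edge d)) (y : Vertex d) (n : ℕ) :
    MeasurableSet (arm d F y n) :=
  DependsOn.measurableSet (finite_inter_edgesIn_box F y n) (dependsOn_arm F y n)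

def translate (y : Vertex d) (e : Edge d) : Edge d := (e.1 + y, e.2)

lemma translate_injective (y : Vertex d) : Function.Injective (translate y) :=
  fun a b h => by
    simp only [translate, Prod.mk.injEq, add_left_inj] at h
    exact Prod.ext h.1 h.2

lemma adj_comp_translate {ω : Config d} {u v : Vertex d} (y : Vertex d) (h : adj d ω u v) :
    adj d (ω ∘ translate y) (u - y) (v - y) := by
  obtain ⟨i, ⟨hω, rfl⟩ | ⟨hω, rfl⟩⟩ := h
  · exact ⟨i, Or.inl ⟨by simpa [translate] using hω, add_sub_right_comm _ _ _⟩⟩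
  · exact ⟨i, Or.inr ⟨by simpa [translate] using hω, add_sub_right_comm _ _ _⟩⟩

lemma arm_subset_preimage_oneArm (F : Set (Edge d)) (y : Vertex d) (n : ℕ) :
    arm d F y n ⊆ (· ∘ translate y) ⁻¹' oneArm d n := by
  rintro ω ⟨z, hz, h⟩
  refine ⟨z - y, hz, ?_⟩
  have := Relation.ReflTransGen.lift (p := adj d (ω ∘ translate y)) (· - y)
    (fun _ _ => adj_comp_translate y) _ _
    (conn_mono (fun _ he => (closeOutside_apply_eq_true.1 he).2) h)
  simpa [Function.onFun, conn] using this

lemma IsBernoulli.measure_arm_le {P : Measure (Config d)} {p : ℝ}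
    [IsProbabilityMeasure (bernoulliBool p)] (hP : IsBernoulli P p) (F : Set (Edge d))
    (y : Vertex d) (n : ℕ) : P (arm d F y n) ≤ P (oneArm d n) :=
  calc P (arm d F y n) ≤ P ((· ∘ translate y) ⁻¹' oneArm d n) :=
        measure_mono (arm_subset_preimage_oneArm F y n)
    _ = P (oneArm d n) := by
        rw [hP.measure_preimage_comp (translate_injective y)]
        rw [oneArm_eq_arm]
        exact measurableSet_arm _ _ _

end Arm

section Cluster

variable {d : ℕ}

noncomputable def cluster (S : Finset (Vertex d)) (ω : Config d) : Finset (Vertex d) :=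
  S.filter (connIn d ↑S ω 0)

variable {S : Finset (Vertex d)} {ω : Config d}

lemma mem_cluster {x : Vertex d} : x ∈ cluster S ω ↔ x ∈ S ∧ connIn d S ω 0 x :=
  Finset.mem_filter

lemma mem_of_connIn {A : Set (Vertex d)} {a b : Vertex d} (h : connIn d A ω a b) (ha : a ∈ A) :
    b ∈ A := by
  induction h with
  | refl => exact ha
  | tail _ huv => exact huv.2.2

lemma coe_cluster (h0 : (0 : Vertex d) ∈ S) :
    (cluster S ω : Set (Vertex d)) = {x | connIn d S ω 0 x} := by
  ext x
  simp only [Finset.mem_coe, mem_cluster, Set.mem_ofPred_eq, and_iff_right_iff_imp]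
  exact fun h => mem_of_connIn h h0

lemma adj_of_eq_on_edgesIn_diff {S C : Set (Vertex d)} {ω' : Config d}
    (h : ∀ e ∈ edgesIn S \ edgesIn Cᶜ, ω e = ω' e) {u v : Vertex d} (hu : u ∈ C) :
    adj d ω u v ∧ u ∈ S ∧ v ∈ S → adj d ω' u v ∧ u ∈ S ∧ v ∈ S := by
  rintro ⟨⟨i, ⟨hω, rfl⟩ | ⟨hω, rfl⟩⟩, huS, hvS⟩
  · refine ⟨⟨i, Or.inl ⟨?_, rfl⟩⟩, huS, hvS⟩
    rw [← h _ ⟨⟨huS, hvS⟩, fun he => he.1 hu⟩, hω]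
  · refine ⟨⟨i, Or.inr ⟨?_, rfl⟩⟩, huS, hvS⟩
    rw [← h _ ⟨⟨hvS, huS⟩, fun he => he.2 hu⟩, hω]

lemma dependsOn_cluster_eq (h0 : (0 : Vertex d) ∈ S) (C : Finset (Vertex d)) :
    DependsOn (· ∈ {ω | cluster S ω = C}) (edgesIn ↑S \ edgesIn (↑C)ᶜ) :=
  dependsOn_mem_of_forall fun ω ω' h hω => by
    have : (cluster S ω' : Set (Vertex d)) = C := by
      rw [coe_cluster h0]
      refine Relation.setOf_reflTransGen_eq_of_forall_iff
        (by rw [← show cluster S ω = C from hω, coe_cluster h0]; rfl) fun u hu v =>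
        ⟨adj_of_eq_on_edgesIn_diff h hu, adj_of_eq_on_edgesIn_diff (fun e he => (h e he).symm) hu⟩
    exact_mod_cast this

lemma measurableSet_cluster_eq (h0 : (0 : Vertex d) ∈ S) (C : Finset (Vertex d)) :
    MeasurableSet {ω | cluster S ω = C} :=
  DependsOn.measurableSet ((finite_edgesIn S.finite_toSet).subset Set.sdiff_subset)
    (dependsOn_cluster_eq h0 C)

lemma sum_measure_cluster_eq (P : Measure (Config d)) (h0 : (0 : Vertex d) ∈ S) (x : Vertex d) :
    ∑ C ∈ S.powerset.filter (x ∈ ·), P {ω | cluster S ω = C} = P {ω | x ∈ cluster S ω} := by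
  change ∑ C ∈ _, P (cluster S ⁻¹' {C}) = _
  rw [sum_measure_preimage_singleton _ fun C _ => measurableSet_cluster_eq h0 C]
  congr 1
  ext ω
  simp [Finset.filter_subset, cluster]

end Cluster

section Exit

variable {d : ℕ} {S : Finset (Vertex d)}

theorem exists_exit_of_mem_oneArm {L : ℕ} (h0 : (0 : Vertex d) ∈ S)
    (hS : ∀ x ∈ S, ∀ i : Fin d, |x i| ≤ (L : ℤ) - 1) {k : ℕ} {ω : Config d}
    (hω : ω ∈ oneArm d ((k + 1) * L)) :
    ∃ x ∈ cluster S ω, ∃ y ∉ S, adj d ω x y ∧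
      ω ∈ arm d (edgesIn (↑(cluster S ω))ᶜ) y (k * L) := by
  obtain ⟨z, hz, hconn⟩ := hω
  obtain ⟨-, j, hj⟩ := mem_sphere_iff.1 hz
  rw [Nat.succ_mul, Nat.cast_add] at hj
  set C := cluster S ω
  have hzC : z ∉ (C : Set (Vertex d)) := fun hzC => by
    have := hS z (mem_cluster.1 hzC).1 j
    omega
  obtain ⟨v, hvC, w, hwC, hvw, hwz⟩ :=
    hconn.exists_last_exit (C := (C : Set (Vertex d))) (mem_cluster.2 ⟨h0, .refl⟩) hzC
  obtain ⟨hvS, h0v⟩ := mem_cluster.1 hvC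
  have hwS : w ∉ S := fun hwS => hwC (mem_cluster.2 ⟨hwS, h0v.tail ⟨hvw, hvS, hwS⟩⟩)
  have hw : |w j| ≤ L := by
    have := (latAdj_of_adj hvw).abs_sub_le_one j
    have := hS v hvS j
    have := abs_sub_abs_le_abs_sub (w j) (v j)
    omega
  have hwz' : conn d (closeOutside (edgesIn (↑C)ᶜ) ω) w z := by
    rw [← connIn_eq_conn_closeOutside]
    exact hwz
  obtain ⟨z', hz', hwz''⟩ := exists_connIn_box_of_conn hwz' (self_mem_box w (k * L))
    ⟨j, by have := abs_sub_abs_le_abs_sub (z j) (w j); omega⟩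
  exact ⟨v, hvC, w, hwS, hvw, z', hz', conn_of_connIn hwz''⟩

def exitEvent (S : Finset (Vertex d)) (x : Vertex d) (e : Edge d) (y : Vertex d) (n : ℕ) :
    Set (Config d) :=
  {ω | x ∈ cluster S ω ∧ ω e = true ∧ ω ∈ arm d (edgesIn (↑(cluster S ω))ᶜ) y n}

lemma oneArm_succ_mul_subset {L : ℕ} (h0 : (0 : Vertex d) ∈ S)
    (hS : ∀ x ∈ S, ∀ i : Fin d, |x i| ≤ (L : ℤ) - 1) (k : ℕ) :
    oneArm d ((k + 1) * L) ⊆ ⋃ x ∈ S, ⋃ i : Fin d,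
      ((if x + unit d i ∉ S then exitEvent S x (x, i) (x + unit d i) (k * L) else ∅) ∪
        (if x - unit d i ∉ S then exitEvent S x (x - unit d i, i) (x - unit d i) (k * L)
          else ∅)) := by
  intro ω hω
  obtain ⟨x, hxC, y, hyS, ⟨i, ⟨hω, rfl⟩ | ⟨hω, hx⟩⟩, harm⟩ := exists_exit_of_mem_oneArm h0 hS hω
  · simp only [Set.mem_iUnion]
    exact ⟨x, (mem_cluster.1 hxC).1, i, Or.inl (by simpa [hyS] using ⟨hxC, hω, harm⟩)⟩
  · obtain rfl : y = x - unit d i := eq_sub_of_add_eq hx.symm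
    simp only [Set.mem_iUnion]
    exact ⟨x, (mem_cluster.1 hxC).1, i, Or.inr (by simpa [hyS] using ⟨hxC, hω, harm⟩)⟩

variable {P : Measure (Config d)} {p : ℝ} [IsProbabilityMeasure (bernoulliBool p)]

lemma IsBernoulli.measure_cluster_eq_inter_le (hP : IsBernoulli P p) (h0 : (0 : Vertex d) ∈ S)
    {C : Finset (Vertex d)} {x y : Vertex d} {e : Edge d} (hxC : x ∈ C)
    (hxy : e.1 = x ∧ e.1 + unit d e.2 = y ∨ e.1 = y ∧ e.1 + unit d e.2 = x) (hy : y ∉ S)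
    (n : ℕ) :
    P ({ω | cluster S ω = C} ∩ {ω | ω e = true} ∩ arm d (edgesIn (↑C)ᶜ) y n)
      ≤ P {ω | cluster S ω = C} * (ENNReal.ofReal p * P (oneArm d n)) := by
  have heS : e ∉ edgesIn (S : Set (Vertex d)) := by
    rintro ⟨h1, h2⟩
    rcases hxy with ⟨-, rfl⟩ | ⟨rfl, -⟩ <;> contradiction
  have heC : e ∉ edgesIn (C : Set (Vertex d))ᶜ := by
    rintro ⟨h1, h2⟩
    rcases hxy with ⟨rfl, -⟩ | ⟨-, rfl⟩ <;> contradiction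
  have hfin : (edgesIn (S : Set (Vertex d)) \ edgesIn (↑C)ᶜ).Finite :=
    (finite_edgesIn S.finite_toSet).subset Set.sdiff_subset
  have hedge : DependsOn (· ∈ {ω : Config d | ω e = true}) {e} :=
    fun ω ω' h => by simp [h e rfl]
  rw [hP.measure_inter_eq_mul (hfin.union (Set.finite_singleton e))
      (finite_inter_edgesIn_box _ y n) ?disj ((dependsOn_cluster_eq h0 C).mem_inter hedge)
      (dependsOn_arm _ y n),
    hP.measure_inter_eq_mul hfin (Set.finite_singleton e)
      (Set.disjoint_singleton_right.2 fun he => heS he.1) (dependsOn_cluster_eq h0 C) hedge,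
    hP.measure_apply_eq_true, mul_assoc]
  · gcongr _ * (_ * ?_)
    exact hP.measure_arm_le _ y n
  case disj =>
    refine Set.disjoint_union_left.2 ⟨?_, Set.disjoint_singleton_left.2 fun he => heC he.1⟩
    exact Set.disjoint_left.2 fun e' he' he'' => he'.2 he''.1

lemma IsBernoulli.measure_exitEvent_le (hP : IsBernoulli P p) (h0 : (0 : Vertex d) ∈ S)
    {x y : Vertex d} {e : Edge d}
    (hxy : e.1 = x ∧ e.1 + unit d e.2 = y ∨ e.1 = y ∧ e.1 + unit d e.2 = x) (n : ℕ) :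
    P (if y ∉ S then exitEvent S x e y n else ∅)
      ≤ (if y ∉ S then P {ω | connIn d S ω 0 x} else 0) * (ENNReal.ofReal p * P (oneArm d n)) := by
  by_cases hy : y ∈ S
  · simp [hy]
  rw [if_pos hy, if_pos hy]
  calc P (exitEvent S x e y n)
      ≤ P (⋃ C ∈ S.powerset.filter (x ∈ ·),
          {ω | cluster S ω = C} ∩ {ω | ω e = true} ∩ arm d (edgesIn (↑C)ᶜ) y n) := by
        refine measure_mono fun ω ⟨hx, he, harm⟩ => ?_
        simp only [Set.mem_iUnion]
        exact ⟨cluster S ω, Finset.mem_filter.2 ⟨Finset.mem_powerset.2 (Finset.filter_subset _ _),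
          hx⟩, ⟨rfl, he⟩, harm⟩
    _ ≤ ∑ C ∈ S.powerset.filter (x ∈ ·),
          P {ω | cluster S ω = C} * (ENNReal.ofReal p * P (oneArm d n)) :=
        (measure_biUnion_finset_le _ _).trans <| Finset.sum_le_sum fun C hC =>
          hP.measure_cluster_eq_inter_le h0 (Finset.mem_filter.1 hC).2 hxy hy n
    _ ≤ P {ω | connIn d S ω 0 x} * (ENNReal.ofReal p * P (oneArm d n)) := by
        rw [← Finset.sum_mul, sum_measure_cluster_eq P h0]
        gcongr
        exact fun hω => (mem_cluster.1 hω).2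

end Exit

section Iteration

variable {d : ℕ} {S : Finset (Vertex d)} {P : Measure (Config d)} {p : ℝ}

lemma ofReal_phiS [IsFiniteMeasure P] (hp0 : 0 ≤ p) :
    ENNReal.ofReal (phiS d P p S) = ENNReal.ofReal p * ∑ x ∈ S, ∑ i : Fin d,
      ((if x + unit d i ∉ S then P {ω | connIn d (↑S) ω 0 x} else 0) +
        (if x - unit d i ∉ S then P {ω | connIn d (↑S) ω 0 x} else 0)) := by
  have hnonneg (c : Prop) [Decidable c] (a : ℝ≥0∞) : 0 ≤ if c then a.toReal else 0 := by
    split_ifs <;> simp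
  rw [phiS, ENNReal.ofReal_mul hp0, ENNReal.ofReal_sum_of_nonneg fun _ _ =>
    Finset.sum_nonneg fun _ _ => add_nonneg (hnonneg _ _) (hnonneg _ _)]
  congr 1
  refine Finset.sum_congr rfl fun x _ => ?_
  rw [ENNReal.ofReal_sum_of_nonneg fun _ _ => add_nonneg (hnonneg _ _) (hnonneg _ _)]
  refine Finset.sum_congr rfl fun i _ => ?_
  rw [ENNReal.ofReal_add (hnonneg _ _) (hnonneg _ _)]
  simp only [apply_ite ENNReal.ofReal, ENNReal.ofReal_toReal (measure_ne_top _ _),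
    ENNReal.ofReal_zero]

lemma phiS_nonneg (hp0 : 0 ≤ p) : 0 ≤ phiS d P p S :=
  mul_nonneg hp0 <| Finset.sum_nonneg fun _ _ => Finset.sum_nonneg fun _ _ =>
    add_nonneg (by split_ifs <;> simp) (by split_ifs <;> simp)

variable [IsProbabilityMeasure P] [IsProbabilityMeasure (bernoulliBool p)] {L : ℕ}

theorem IsBernoulli.measure_oneArm_succ_mul_le (hP : IsBernoulli P p) (hp0 : 0 ≤ p)
    (h0 : (0 : Vertex d) ∈ S) (hS : ∀ x ∈ S, ∀ i : Fin d, |x i| ≤ (L : ℤ) - 1) (k : ℕ) :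
    P (oneArm d ((k + 1) * L)) ≤ ENNReal.ofReal (phiS d P p S) * P (oneArm d (k * L)) := by
  calc P (oneArm d ((k + 1) * L))
      ≤ ∑ x ∈ S, ∑ i : Fin d,
          (P (if x + unit d i ∉ S then exitEvent S x (x, i) (x + unit d i) (k * L) else ∅) +
            P (if x - unit d i ∉ S then
              exitEvent S x (x - unit d i, i) (x - unit d i) (k * L) else ∅)) :=
        (measure_mono (oneArm_succ_mul_subset h0 hS k)).trans <|
          (measure_biUnion_finset_le _ _).trans <| Finset.sum_le_sum fun x _ =>
            (measure_iUnion_fintype_le _ _).trans <| Finset.sum_le_sum fun i _ =>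
              measure_union_le _ _
    _ ≤ ∑ x ∈ S, ∑ i : Fin d,
          ((if x + unit d i ∉ S then P {ω | connIn d (↑S) ω 0 x} else 0) +
            (if x - unit d i ∉ S then P {ω | connIn d (↑S) ω 0 x} else 0)) *
          (ENNReal.ofReal p * P (oneArm d (k * L))) := by
        refine Finset.sum_le_sum fun x _ => Finset.sum_le_sum fun i _ => ?_
        rw [add_mul]
        exact add_le_add (hP.measure_exitEvent_le (e := (x, i)) h0 (Or.inl ⟨rfl, rfl⟩) _)
          (hP.measure_exitEvent_le (e := (x - unit d i, i)) h0
            (Or.inr ⟨rfl, sub_add_cancel x _⟩) _)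
    _ = ENNReal.ofReal (phiS d P p S) * P (oneArm d (k * L)) := by
        simp only [← Finset.sum_mul, ofReal_phiS hp0]
        ring

theorem IsBernoulli.measure_oneArm_mul_le_pow (hP : IsBernoulli P p) (hp0 : 0 ≤ p)
    (h0 : (0 : Vertex d) ∈ S) (hS : ∀ x ∈ S, ∀ i : Fin d, |x i| ≤ (L : ℤ) - 1) (k : ℕ) :
    P (oneArm d (k * L)) ≤ ENNReal.ofReal (phiS d P p S ^ k) := by
  induction k with
  | zero => simpa using prob_le_one
  | succ k ih =>
    calc P (oneArm d ((k + 1) * L)) ≤ ENNReal.ofReal (phiS d P p S) * P (oneArm d (k * L)) :=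
          hP.measure_oneArm_succ_mul_le hp0 h0 hS k
      _ ≤ ENNReal.ofReal (phiS d P p S) * ENNReal.ofReal (phiS d P p S ^ k) := by gcongr
      _ = ENNReal.ofReal (phiS d P p S ^ (k + 1)) := by
          rw [← ENNReal.ofReal_mul (phiS_nonneg hp0), pow_succ']

end Iteration

section SmallRadius

variable {d : ℕ} {P : Measure (Config d)} [IsProbabilityMeasure P] {p : ℝ}

def edgesAtZero (d : ℕ) : Finset (Edge d) :=
  Finset.univ.image (fun i => ((0 : Vertex d), i)) ∪ Finset.univ.image fun i => (-unit d i, i)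

lemma oneArm_subset_exists_open_edge_at_zero {n : ℕ} (hn : 1 ≤ n) :
    oneArm d n ⊆ {ω | ∃ e ∈ edgesAtZero d, ω e = true} := by
  rintro ω ⟨z, hz, hconn⟩
  obtain ⟨-, j, hj⟩ := mem_sphere_iff.1 hz
  rcases hconn.cases_head with rfl | ⟨c, ⟨i, ⟨hω, -⟩ | ⟨hω, hc⟩⟩, -⟩
  · simp at hj
    omega
  · exact ⟨(0, i), by simp [edgesAtZero], hω⟩
  · obtain rfl : c = -unit d i := eq_neg_of_add_eq_zero_left hc.symm
    exact ⟨(-unit d i, i), by simp [edgesAtZero], hω⟩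

lemma IsBernoulli.measure_oneArm_lt_one [IsProbabilityMeasure (bernoulliBool p)]
    (hP : IsBernoulli P p) (hp1 : p < 1) {n : ℕ} (hn : 1 ≤ n) : P (oneArm d n) < 1 := by
  set closed : Set (Config d) := Set.pi ↑(edgesAtZero d) fun _ => {false}
  have hclosed : P closed ≠ 0 := by
    rw [hP.measure_pi, Finset.prod_ne_zero_iff]
    intro e _
    simpa [bernoulliBool_singleton] using hp1
  calc P (oneArm d n) ≤ P closedᶜ := measure_mono fun ω hω hω' => by
        obtain ⟨e, he, hωe⟩ := oneArm_subset_exists_open_edge_at_zero hn hω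
        have hfalse : ω e = false := (Set.mem_pi.1 hω') e he
        simp [hfalse] at hωe
    _ = 1 - P closed :=
        prob_compl_eq_one_sub (.pi (edgesAtZero d).countable_toSet fun _ _ =>
          measurableSet_singleton _)
    _ < 1 := ENNReal.sub_lt_self ENNReal.one_ne_top one_ne_zero hclosed

lemma IsBernoulli.measure_oneArm_eq_one (hP : IsBernoulli P 1) (hd : 1 ≤ d) (n : ℕ) :
    P (oneArm d n) = 1 := by
  set i₀ : Fin d := ⟨0, hd⟩
  set line : ℕ → Vertex d := fun j => (j : ℤ) • unit d i₀
  set T := (Finset.range n).image fun j => (line j, i₀)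
  have hline_succ (j : ℕ) : line (j + 1) = line j + unit d i₀ := by
    simp [line, add_mul]
  have hsub : {ω | ∀ e ∈ T, ω e = true} ⊆ oneArm d n := by
    intro ω hω
    have hconn (j : ℕ) (hj : j ≤ n) : conn d ω 0 (line j) := by
      induction j with
      | zero =>
        rw [show line 0 = 0 by simp [line]]
        exact .refl
      | succ j ih =>
        refine (ih (by omega)).tail ⟨i₀, Or.inl ⟨hω _ ?_, hline_succ j⟩⟩
        exact Finset.mem_image_of_mem _ (Finset.mem_range.2 (by omega))
    refine ⟨line n, mem_sphere_iff.2 ⟨fun t => ?_, i₀, by simp [line, unit]⟩, hconn n le_rfl⟩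
    by_cases ht : t = i₀ <;> simp [line, unit, ht]
  refine le_antisymm prob_le_one ?_
  calc 1 = P {ω | ∀ e ∈ T, ω e = true} := by
        rw [hP.measure_forall_eq, bernoulliBool_singleton]
        simp
    _ ≤ P (oneArm d n) := measure_mono hsub

end SmallRadius

lemma exists_exp_decay_of_pow_bound {a : ℕ → ℝ≥0∞} (ha : Antitone a) {L : ℕ} (hL : 1 ≤ L)
    {r : ℝ} (hr0 : 0 < r) (hr1 : r < 1) (h1 : a 1 ≤ ENNReal.ofReal r)
    (hk : ∀ k, 1 ≤ k → a (k * L) ≤ ENNReal.ofReal (r ^ k)) :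
    ∃ c > (0 : ℝ), ∀ n : ℕ, 1 ≤ n → a n ≤ ENNReal.ofReal (Real.exp (-c * n)) := by
  have hlog : Real.log r < 0 := Real.log_neg hr0 hr1
  refine ⟨-Real.log r / (2 * L), div_pos (neg_pos.2 hlog) (by positivity), fun n hn => ?_⟩
  set m := max 1 (n / L)
  have ham : a n ≤ ENNReal.ofReal (r ^ m) := by
    rcases Nat.lt_or_ge n L with hnL | hnL
    · simpa [m, Nat.div_eq_of_lt hnL] using (ha hn).trans h1
    · have hk1 : 1 ≤ n / L := (Nat.one_le_div_iff hL).2 hnL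
      simpa [m, hk1] using (ha (Nat.div_mul_le_self n L)).trans (hk _ hk1)
  have hnm : (n : ℝ) ≤ 2 * L * m := by
    have := Nat.lt_mul_div_succ n (show 0 < L by omega)
    have : n / L + 1 ≤ 2 * m := by omega
    exact_mod_cast (show n ≤ 2 * L * m by nlinarith)
  refine ham.trans (ENNReal.ofReal_le_ofReal ?_)
  rw [← Real.exp_log (pow_pos hr0 m), Real.exp_le_exp, Real.log_pow]
  have := mul_le_mul_of_nonpos_right hnm hlog.le
  rw [show -(-Real.log r / (2 * L)) * n = Real.log r * n / (2 * L) by ring,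
    le_div_iff₀ (by positivity)]
  linarith

/-- Exponential-decay induction via `φ_p(S)`: if `0 ∈ S ⊆ Λ_{L-1}` then
`ℙ_p[0 ↔ ∂Λ_{kL}] ≤ φ_p(S)^k`; in particular `φ_p(S) < 1` forces exponential decay. -/
theorem exponential_decay_induction (d : ℕ) (hd : 1 ≤ d) (p : ℝ)
    (hp : p ∈ Set.Icc (0 : ℝ) 1)
    (P : Measure (((Fin d → ℤ) × Fin d) → Bool)) [IsProbabilityMeasure P]
    (hBer : ∀ (T : Finset ((Fin d → ℤ) × Fin d)) (η : ((Fin d → ℤ) × Fin d) → Bool),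
      P {ω | ∀ e ∈ T, ω e = η e}
        = ∏ e ∈ T, if η e then ENNReal.ofReal p else ENNReal.ofReal (1 - p))
    (L : ℕ) (hL : 1 ≤ L) (S : Finset (Fin d → ℤ)) (h0 : (0 : Fin d → ℤ) ∈ S)
    (hS : ∀ x ∈ S, ∀ i : Fin d, |x i| ≤ (L : ℤ) - 1) :
    (∀ k : ℕ, 1 ≤ k → P (oneArm d (k * L)) ≤ ENNReal.ofReal (phiS d P p S ^ k)) ∧
    (phiS d P p S < 1 → ∃ c > (0 : ℝ), ∀ n : ℕ, 1 ≤ n →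
      P (oneArm d n) ≤ ENNReal.ofReal (Real.exp (-c * n))) := by
  have : IsProbabilityMeasure (bernoulliBool p) := isProbabilityMeasure_bernoulliBool hp
  have hP : IsBernoulli P p := hBer
  have hpow := hP.measure_oneArm_mul_le_pow hp.1 h0 hS
  refine ⟨fun k _ => hpow k, fun hφ => ?_⟩
  have hp1 : p < 1 := by
    refine hp.2.lt_of_ne fun hp1 => ?_
    subst hp1
    have := (hP.measure_oneArm_eq_one hd L).symm.trans_le (by simpa using hpow 1)
    exact (this.trans_lt (ENNReal.ofReal_lt_one.2 hφ)).false
  have harm1 := hP.measure_oneArm_lt_one hp1 le_rfl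
  -- The `1 / 2` only keeps `r` positive.
  set r := max (max (phiS d P p S) (P (oneArm d 1)).toReal) (1 / 2)
  refine exists_exp_decay_of_pow_bound (fun m n h => measure_mono (oneArm_antitone h)) hL
    (r := r) (by positivity)
    (max_lt (max_lt hφ (ENNReal.toReal_lt_of_lt_ofReal (by simpa using harm1))) (by norm_num)) ?_
    fun k _ => (hpow k).trans (ENNReal.ofReal_le_ofReal (pow_le_pow_left₀ (phiS_nonneg hp.1)
      ((le_max_left _ _).trans (le_max_left _ _)) k))
  rw [ENNReal.le_ofReal_iff_toReal_le (measure_ne_top _ _) (by positivity)]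
  exact (le_max_right _ _).trans (le_max_left _ _)

end Stmt13
end
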